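/- arXiv:2001.02737 — 16 statements merged into one kernel-verified Lean document; each statement's English description precedes it below -/
import Mathlib

section
/- Every 1-Lipschitz map f : ℤ_p → ℤ_p has the (positive) shadowing property: for every ε > 0 there exists δ > 0 (in fact δ = ε works) such that every δ-pseudotrajectory (x_n) of f is ε-shadowed by the true orbit of x_0, i.e. ‖x_n − f^n(x_0)‖_p ≤ ε for all n ≥ 0. -/
/-- Every 1-Lipschitz map on the p-adic integers has the (positive) shadowing
property; in fact for every `ε > 0`, `δ = ε` works and the true orbit of `x 0`
`ε`-shadows every `ε`-pseudotrajectory. -/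
theorem one_lipschitz_shadowing (p : ℕ) [Fact p.Prime] (f : ℤ_[p] → ℤ_[p])
    (hf : ∀ x y : ℤ_[p], ‖f x - f y‖ ≤ ‖x - y‖) :
    ∀ ε : ℝ, 0 < ε → ∀ x : ℕ → ℤ_[p],
      (∀ n : ℕ, ‖f (x n) - x (n + 1)‖ ≤ ε) →
      ∀ n : ℕ, ‖x n - f^[n] (x 0)‖ ≤ ε := by
  intro ε hε x hx n
  induction n with
  | zero => simpa using hε.le
  | succ n ih =>
    have key : x (n + 1) - f^[n + 1] (x 0)
        = (x (n + 1) - f (x n)) + (f (x n) - f (f^[n] (x 0))) := by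
      rw [Function.iterate_succ_apply']; ring
    rw [key]
    refine le_trans (PadicInt.nonarchimedean _ _) (max_le ?_ ?_)
    · simpa [norm_sub_rev] using hx n
    · exact le_trans (hf _ _) ih
end

section
/- Any (p^{-k}, p^m) locally scaling map f : ℤ_p → ℤ_p with 1 ≤ m ≤ k is expansive with expansivity constant p^{-k}: for any distinct x, y ∈ ℤ_p there exists n ≥ 0 with ‖f^n(x) − f^n(y)‖_p > p^{-k}. -/
/-- Any `(p^{-k}, p^m)` locally scaling map on `ℤ_p` with `1 ≤ m ≤ k` is expansive
with expansivity constant `p^{-k}`. -/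
theorem locallyScaling_expansive (p k m : ℕ) [Fact p.Prime]
    (hm : 1 ≤ m) (hmk : m ≤ k) (f : ℤ_[p] → ℤ_[p])
    (hf : ∀ x y : ℤ_[p], ‖x - y‖ ≤ (p : ℝ) ^ (-(k : ℤ)) →
      ‖f x - f y‖ = (p : ℝ) ^ m * ‖x - y‖) :
    ∀ x y : ℤ_[p], x ≠ y → ∃ n : ℕ, (p : ℝ) ^ (-(k : ℤ)) < ‖f^[n] x - f^[n] y‖ := by
  intro x y hxy
  by_contra hcon
  push_neg at hcon
  have hp1 : (1 : ℝ) < (p : ℝ) := by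
    exact_mod_cast (Fact.out : p.Prime).one_lt
  have hpm1 : (1 : ℝ) < (p : ℝ) ^ m := one_lt_pow₀ hp1 (by omega)
  have hd : (0 : ℝ) < ‖x - y‖ := by
    simpa [sub_eq_zero] using hxy
  have key : ∀ n : ℕ, ‖f^[n] x - f^[n] y‖ = ((p : ℝ) ^ m) ^ n * ‖x - y‖ := by
    intro n
    induction n with
    | zero => simp
    | succ n ih =>
      rw [Function.iterate_succ_apply', Function.iterate_succ_apply',
        hf _ _ (hcon n), ih, pow_succ]
      ring
  have hle1 : (p : ℝ) ^ (-(k : ℤ)) ≤ 1 := by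
    apply zpow_le_one_of_nonpos₀ (le_of_lt hp1)
    omega
  obtain ⟨n, hn⟩ := pow_unbounded_of_one_lt (1 / ‖x - y‖) hpm1
  have h1 : (1 : ℝ) < ((p : ℝ) ^ m) ^ n * ‖x - y‖ := by
    rw [div_lt_iff₀ hd] at hn
    linarith
  have := (hcon n).trans hle1
  rw [key n] at this
  linarith
end

section
/- If f : ℤ_p → ℤ_p is a (p^{-k}, p^m) locally scaling map with 1 ≤ m ≤ k integers, then f has the shadowing property. More precisely, for ε = p^{-k-s} (s ≥ 0 an integer), every δ-pseudotrajectory with δ = p^{-(k-m)-s} (when m < k) or δ = p^{-k-s} (when m = k) is ε-shadowed by a real orbit of f. -/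
open Filter

section Aux

variable {p k m : ℕ} [hp : Fact p.Prime] {f : ℤ_[p] → ℤ_[p]}

private lemma aux_one_lt_p : (1:ℝ) < p := by exact_mod_cast (Fact.out (p := p.Prime)).one_lt

private lemma aux_tri (x y z : ℤ_[p]) {r : ℝ} (h1 : ‖x - y‖ ≤ r) (h2 : ‖y - z‖ ≤ r) :
    ‖x - z‖ ≤ r := by
  have h := PadicInt.nonarchimedean (x - y) (y - z)
  rw [sub_add_sub_cancel] at h
  exact h.trans (max_le h1 h2)

private lemma aux_dvd_iff (x : ℤ_[p]) (n : ℕ) :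
    ‖x‖ ≤ (p:ℝ) ^ (-n : ℤ) ↔ (p:ℤ_[p])^n ∣ x := by
  rw [PadicInt.norm_le_pow_iff_mem_span_pow, Ideal.mem_span_singleton]

/-- Continuity of a locally scaling map. -/
private lemma aux_cont
    (hf : ∀ x y : ℤ_[p], ‖x - y‖ ≤ (p : ℝ) ^ (-(k : ℤ)) →
      ‖f x - f y‖ = (p : ℝ) ^ m * ‖x - y‖) : Continuous f := by
  have hp1 : (1:ℝ) < p := aux_one_lt_p
  rw [Metric.continuous_iff]
  intro x ε hε
  have hpm : (0:ℝ) < (p:ℝ) ^ m := pow_pos (by linarith) m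
  have hpk : (0:ℝ) < (p:ℝ) ^ (-(k:ℤ)) := zpow_pos (by linarith) _
  refine ⟨min ((p:ℝ) ^ (-(k:ℤ))) (ε / (p:ℝ)^m), lt_min hpk (div_pos hε hpm), fun y hy => ?_⟩
  have h1 : dist y x ≤ (p:ℝ) ^ (-(k:ℤ)) := le_of_lt (lt_of_lt_of_le hy (min_le_left _ _))
  have h2 : dist y x < ε / (p:ℝ)^m := lt_of_lt_of_le hy (min_le_right _ _)
  rw [dist_eq_norm] at h1 h2 ⊢
  rw [hf y x h1]
  calc (p:ℝ)^m * ‖y - x‖ < (p:ℝ)^m * (ε / (p:ℝ)^m) := by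
        exact mul_lt_mul_of_pos_left h2 hpm
    _ = ε := by field_simp

/-- Generic recursion with an invariant. -/
private lemma aux_seq {α : Type*} (Inv : ℕ → α → Prop) (R : ℕ → α → α → Prop) (a0 : α)
    (h0 : Inv 0 a0)
    (hstep : ∀ j c, Inv j c → ∃ c', Inv (j+1) c' ∧ R j c c') :
    ∃ u : ℕ → α, u 0 = a0 ∧ (∀ j, Inv j (u j)) ∧ ∀ j, R j (u j) (u (j+1)) := by
  choose g hg1 hg2 using hstep
  let v : ∀ j : ℕ, {c : α // Inv j c} := fun j =>
    Nat.rec ⟨a0, h0⟩ (fun j ih => ⟨g j ih.1 ih.2, hg1 j ih.1 ih.2⟩) j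
  exact ⟨fun j => (v j).1, rfl, fun j => (v j).2, fun j => hg2 j (v j).1 (v j).2⟩

/-- One pigeonhole refinement step towards a preimage. -/
private lemma aux_step (hmk : m ≤ k)
    (hf : ∀ x y : ℤ_[p], ‖x - y‖ ≤ (p : ℝ) ^ (-(k : ℤ)) →
      ‖f x - f y‖ = (p : ℝ) ^ m * ‖x - y‖)
    (b : ℤ_[p]) (j : ℕ) (c : ℤ_[p]) (hc : ‖f c - b‖ ≤ (p:ℝ) ^ ((m:ℤ) - k - j)) :
    ∃ c', ‖c' - c‖ ≤ (p:ℝ) ^ (-((k:ℤ) + j)) ∧ ‖f c' - b‖ ≤ (p:ℝ) ^ ((m:ℤ) - k - (j+1)) := by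
  have hp1 : (1:ℝ) < p := aux_one_lt_p
  have hp0 : (0:ℝ) < p := by linarith
  have hpne : (p:ℝ) ≠ 0 := ne_of_gt hp0
  obtain ⟨t, ht⟩ : ∃ t : ℕ, t = k + j - m := ⟨_, rfl⟩
  have htz : (t:ℤ) = (k:ℤ) + j - m := by omega
  -- candidates
  set C : ZMod p → ℤ_[p] := fun i => c + (i.val : ℤ_[p]) * (p:ℤ_[p])^(k+j) with hC
  have hCc : ∀ i, ‖C i - c‖ ≤ (p:ℝ) ^ (-((k:ℤ) + j)) := by
    intro i
    have : C i - c = (i.val : ℤ_[p]) * (p:ℤ_[p])^(k+j) := by ring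
    rw [this, norm_mul, PadicInt.norm_p_pow]
    calc ‖(i.val : ℤ_[p])‖ * (p:ℝ) ^ (-((k+j:ℕ):ℤ)) ≤ 1 * (p:ℝ) ^ (-((k+j:ℕ):ℤ)) := by
          apply mul_le_mul_of_nonneg_right (PadicInt.norm_le_one _) (le_of_lt (zpow_pos hp0 _))
      _ = (p:ℝ) ^ (-((k:ℤ) + j)) := by rw [one_mul]; norm_cast
  have hCk : ∀ i, ‖C i - c‖ ≤ (p:ℝ) ^ (-(k:ℤ)) := fun i =>
    (hCc i).trans (zpow_le_zpow_right₀ (le_of_lt hp1) (by omega))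
  -- distance between distinct candidates
  have hCC : ∀ i i', i ≠ i' → ‖C i - C i'‖ = (p:ℝ) ^ (-((k:ℤ) + j)) := by
    intro i i' hne
    have heq : C i - C i' = (((i.val : ℤ) - (i'.val : ℤ) : ℤ) : ℤ_[p]) * (p:ℤ_[p])^(k+j) := by
      push_cast; ring
    have hnorm1 : ‖(((i.val : ℤ) - (i'.val : ℤ) : ℤ) : ℤ_[p])‖ = 1 := by
      refine le_antisymm (PadicInt.norm_le_one _) ?_
      by_contra hlt
      push_neg at hlt
      have := (PadicInt.norm_int_lt_one_iff_dvd _).1 hlt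
      have h0 := (ZMod.intCast_zmod_eq_zero_iff_dvd _ p).2 this
      push_cast at h0
      apply hne
      have h1 := sub_eq_zero.1 h0
      simpa [ZMod.natCast_val, ZMod.cast_id] using h1
    rw [heq, norm_mul, hnorm1, one_mul, PadicInt.norm_p_pow]
    norm_cast
  -- all candidates map within p^(m-k-j) of b
  have hd : ∀ i, ‖f (C i) - b‖ ≤ (p:ℝ) ^ ((m:ℤ) - k - j) := by
    intro i
    apply aux_tri (f (C i)) (f c) b
    · rw [hf _ _ (hCk i)]
      calc (p:ℝ)^m * ‖C i - c‖ ≤ (p:ℝ)^m * (p:ℝ) ^ (-((k:ℤ) + j)) :=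
            mul_le_mul_of_nonneg_left (hCc i) (le_of_lt (pow_pos hp0 m))
        _ = (p:ℝ) ^ ((m:ℤ) - k - j) := by
            rw [← zpow_natCast (p:ℝ) m, ← zpow_add₀ hpne]; ring_nf
    · exact hc
  have hexp : ((m:ℤ) - k - j) = -(t:ℤ) := by omega
  have hdvd : ∀ i, (p:ℤ_[p])^t ∣ (f (C i) - b) := by
    intro i
    rw [← aux_dvd_iff]
    rw [← hexp]; exact hd i
  choose v hv using hdvd
  -- pigeonhole
  have hinj : Function.Injective (fun i => PadicInt.toZMod (v i)) := by
    intro i i' hii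
    by_contra hne
    have hdvd2 : (p:ℤ_[p]) ∣ (v i - v i') := by
      have : PadicInt.toZMod (v i - v i') = 0 := by
        rw [map_sub]; simpa using sub_eq_zero.2 hii
      have hker : v i - v i' ∈ RingHom.ker (PadicInt.toZMod : ℤ_[p] →+* ZMod p) := this
      rwa [PadicInt.ker_toZMod, PadicInt.maximalIdeal_eq_span_p,
        Ideal.mem_span_singleton] at hker
    obtain ⟨w, hw⟩ := hdvd2
    have heq2 : f (C i) - f (C i') = (p:ℤ_[p])^(t+1) * w := by
      have : f (C i) - f (C i') = (f (C i) - b) - (f (C i') - b) := by ring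
      rw [this, hv i, hv i', ← mul_sub, hw]; ring
    have hle : ‖f (C i) - f (C i')‖ ≤ (p:ℝ) ^ (-((t:ℤ)+1)) := by
      have h4 : (p:ℤ_[p])^(t+1) ∣ (f (C i) - f (C i')) := ⟨w, heq2⟩
      calc ‖f (C i) - f (C i')‖ ≤ (p:ℝ) ^ (-((t+1:ℕ):ℤ)) := (aux_dvd_iff _ (t+1)).2 h4
        _ = (p:ℝ) ^ (-((t:ℤ)+1)) := by congr 1 <;> omega
    have heq3 : ‖f (C i) - f (C i')‖ = (p:ℝ) ^ (-(t:ℤ)) := by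
      rw [hf _ _ (by rw [hCC i i' hne]; exact zpow_le_zpow_right₀ (le_of_lt hp1) (by omega)),
        hCC i i' hne, ← zpow_natCast (p:ℝ) m, ← zpow_add₀ hpne]
      congr 1 <;> omega
    rw [heq3] at hle
    have hcontra : (-(t:ℤ)) ≤ -((t:ℤ)+1) := by
      rw [← zpow_le_zpow_iff_right₀ hp1]
      exact hle
    omega
  have hsurj : Function.Surjective (fun i => PadicInt.toZMod (v i)) :=
    Finite.surjective_of_injective hinj
  obtain ⟨i, hi⟩ := hsurj 0
  have hpv : (p:ℤ_[p]) ∣ v i := by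
    have hker : v i ∈ RingHom.ker (PadicInt.toZMod : ℤ_[p] →+* ZMod p) := hi
    rwa [PadicInt.ker_toZMod, PadicInt.maximalIdeal_eq_span_p,
      Ideal.mem_span_singleton] at hker
  obtain ⟨w, hw⟩ := hpv
  refine ⟨C i, hCc i, ?_⟩
  have : (p:ℤ_[p])^(t+1) ∣ (f (C i) - b) := ⟨w, by rw [hv i, hw]; ring⟩
  have hle := (aux_dvd_iff (f (C i) - b) (t+1)).2 this
  calc ‖f (C i) - b‖ ≤ (p:ℝ) ^ (-((t+1:ℕ):ℤ)) := hle
    _ = (p:ℝ) ^ ((m:ℤ) - k - (j+1)) := by congr 1; omega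

/-- Local surjectivity: preimages exist. -/
private lemma aux_preimage (hmk : m ≤ k)
    (hf : ∀ x y : ℤ_[p], ‖x - y‖ ≤ (p : ℝ) ^ (-(k : ℤ)) →
      ‖f x - f y‖ = (p : ℝ) ^ m * ‖x - y‖)
    (a b : ℤ_[p]) (hb : ‖b - f a‖ ≤ (p:ℝ) ^ ((m:ℤ) - k)) :
    ∃ c, f c = b ∧ ‖c - a‖ ≤ (p:ℝ) ^ (-(k:ℤ)) := by
  have hp1 : (1:ℝ) < p := aux_one_lt_p
  have hp0 : (0:ℝ) < p := by linarith
  have hpne : (p:ℝ) ≠ 0 := ne_of_gt hp0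
  have hstep := aux_step hmk hf b
  obtain ⟨u, hu0, huI, huR⟩ := aux_seq
    (Inv := fun j c => ‖c - a‖ ≤ (p:ℝ) ^ (-(k:ℤ)) ∧ ‖f c - b‖ ≤ (p:ℝ) ^ ((m:ℤ) - k - j))
    (R := fun j c c' => dist c c' ≤ (p:ℝ) ^ (-(k:ℤ)) * ((p:ℝ)⁻¹) ^ j)
    a (by constructor
          · simp [zpow_pos hp0 (-(k:ℤ)) |>.le]
          · rw [norm_sub_rev] at hb; simpa using hb)
    (by intro j c hc
        obtain ⟨c', h1, h2⟩ := hstep j c hc.2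
        refine ⟨c', ⟨aux_tri c' c a (h1.trans (zpow_le_zpow_right₀ (le_of_lt hp1) (by omega))) hc.1, h2⟩, ?_⟩
        show dist c c' ≤ (p:ℝ) ^ (-(k:ℤ)) * ((p:ℝ)⁻¹) ^ j
        rw [dist_eq_norm]
        calc ‖c - c'‖ = ‖c' - c‖ := norm_sub_rev _ _
          _ ≤ (p:ℝ) ^ (-((k:ℤ) + j)) := h1
          _ = (p:ℝ) ^ (-(k:ℤ)) * ((p:ℝ)⁻¹) ^ j := by
              rw [inv_pow, ← zpow_natCast (p:ℝ) j, ← zpow_neg, ← zpow_add₀ hpne]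
              congr 1 <;> omega)
  have hcauchy : CauchySeq u :=
    cauchySeq_of_le_geometric _ _ (inv_lt_one_of_one_lt₀ hp1) huR
  obtain ⟨c, hc⟩ := cauchySeq_tendsto_of_complete hcauchy
  have hcont : Continuous f := aux_cont hf
  refine ⟨c, ?_, ?_⟩
  · -- f c = b
    have h1 : Tendsto (fun j => f (u j)) atTop (nhds (f c)) :=
      (hcont.tendsto c).comp hc
    have h2 : Tendsto (fun j => f (u j)) atTop (nhds b) := by
      rw [tendsto_iff_dist_tendsto_zero]
      apply squeeze_zero (fun j => dist_nonneg)
        (g := fun j => (p:ℝ) ^ ((m:ℤ) - k) * ((p:ℝ)⁻¹) ^ j)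
      · intro j
        rw [dist_eq_norm]
        calc ‖f (u j) - b‖ ≤ (p:ℝ) ^ ((m:ℤ) - k - j) := (huI j).2
          _ = (p:ℝ) ^ ((m:ℤ) - k) * ((p:ℝ)⁻¹) ^ j := by
              rw [inv_pow, ← zpow_natCast (p:ℝ) j, ← zpow_neg, ← zpow_add₀ hpne]
              congr 1 <;> omega
      · rw [show (0:ℝ) = (p:ℝ) ^ ((m:ℤ) - k) * 0 by ring]
        exact tendsto_const_nhds.mul
          (tendsto_pow_atTop_nhds_zero_of_lt_one (by positivity) (inv_lt_one_of_one_lt₀ hp1))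
    exact tendsto_nhds_unique h1 h2
  · -- ‖c - a‖ ≤ p^(-k)
    have h3 : Tendsto (fun j => ‖u j - a‖) atTop (nhds ‖c - a‖) :=
      ((hc.sub tendsto_const_nhds).norm)
    exact le_of_tendsto h3 (Eventually.of_forall fun j => (huI j).1)

/-- Iterated expansion. -/
private lemma aux_expand
    (hf : ∀ x y : ℤ_[p], ‖x - y‖ ≤ (p : ℝ) ^ (-(k : ℤ)) →
      ‖f x - f y‖ = (p : ℝ) ^ m * ‖x - y‖)
    (j : ℕ) (u v : ℤ_[p]) (h : ∀ n < j, ‖f^[n] u - f^[n] v‖ ≤ (p:ℝ) ^ (-(k:ℤ))) :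
    ‖f^[j] u - f^[j] v‖ = (p:ℝ) ^ (m*j) * ‖u - v‖ := by
  induction j with
  | zero => simp
  | succ j ih =>
    rw [Function.iterate_succ_apply', Function.iterate_succ_apply',
      hf _ _ (h j (by omega)), ih (fun n hn => h n (by omega)), ← mul_assoc, ← pow_add]
    congr 2
    ring

end Aux

/-- A `(p^{-k}, p^m)` locally scaling map (`1 ≤ m ≤ k`) has the shadowing property:
for `ε = p^{-k-s}`, every `δ`-pseudotrajectory with `δ = p^{-(k-m)-s}` (when `m < k`)
or `δ = p^{-k-s}` (when `m = k`) is `ε`-shadowed by a real orbit. -/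
theorem locallyScaling_shadowing (p k m : ℕ) [Fact p.Prime]
    (hm : 1 ≤ m) (hmk : m ≤ k) (f : ℤ_[p] → ℤ_[p])
    (hf : ∀ x y : ℤ_[p], ‖x - y‖ ≤ (p : ℝ) ^ (-(k : ℤ)) →
      ‖f x - f y‖ = (p : ℝ) ^ m * ‖x - y‖) :
    ∀ s : ℕ, ∀ x : ℕ → ℤ_[p],
      (∀ n : ℕ, ‖f (x n) - x (n + 1)‖ ≤
        (if m = k then (p : ℝ) ^ (-((k : ℤ) + s)) else (p : ℝ) ^ (-(((k : ℤ) - m) + s)))) →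
      ∃ y : ℤ_[p], ∀ n : ℕ, ‖x n - f^[n] y‖ ≤ (p : ℝ) ^ (-((k : ℤ) + s)) := by
  intro s x hx
  have hp1 : (1:ℝ) < p := aux_one_lt_p
  have hp0 : (0:ℝ) < p := by linarith
  have hpne : (p:ℝ) ≠ 0 := ne_of_gt hp0
  set ε : ℝ := (p:ℝ) ^ (-((k:ℤ) + s)) with hε
  -- uniform pseudo-orbit bound
  have hδ : ∀ n, ‖f (x n) - x (n+1)‖ ≤ (p:ℝ) ^ ((m:ℤ) - k - s) := by
    intro n
    refine (hx n).trans ?_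
    split_ifs with h
    · exact zpow_le_zpow_right₀ (le_of_lt hp1) (by omega)
    · exact zpow_le_zpow_right₀ (le_of_lt hp1) (by omega)
  -- finite shadowing
  have hfin : ∀ N : ℕ, ∃ y : ℤ_[p], ∀ i ≤ N, ‖f^[i] y - x i‖ ≤ ε := by
    intro N
    obtain ⟨u, hu0, huI, _⟩ := aux_seq
      (Inv := fun j z => j ≤ N → ∀ i ≤ j, ‖f^[i] z - x (N - j + i)‖ ≤ ε)
      (R := fun _ _ _ => True) (x N)
      (by intro _ i hi
          interval_cases i
          simp [hε, zpow_pos hp0 _ |>.le])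
      (by intro j z hz
          by_cases h : j + 1 ≤ N
          · have hz0 : ‖z - x (N - j)‖ ≤ ε := by
              have := hz (by omega) 0 (by omega)
              simpa using this
            have hfa : ‖f (x (N - (j+1))) - x (N - j)‖ ≤ (p:ℝ) ^ ((m:ℤ) - k - s) := by
              have := hδ (N - (j+1))
              rwa [show N - (j+1) + 1 = N - j by omega] at this
            have hb : ‖z - f (x (N - (j+1)))‖ ≤ (p:ℝ) ^ ((m:ℤ) - k) := by
              apply aux_tri z (x (N - j)) _
              · exact hz0.trans (zpow_le_zpow_right₀ (le_of_lt hp1) (by omega))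
              · rw [norm_sub_rev]
                exact hfa.trans (zpow_le_zpow_right₀ (le_of_lt hp1) (by omega))
            obtain ⟨c, hfc, hca⟩ := aux_preimage hmk hf (x (N - (j+1))) z hb
            have hceq : (p:ℝ)^m * ‖c - x (N - (j+1))‖ = ‖z - f (x (N - (j+1)))‖ := by
              rw [← hf _ _ hca, hfc]
            have hcε : ‖c - x (N - (j+1))‖ ≤ ε := by
              have h2 : (p:ℝ)^m * ‖c - x (N - (j+1))‖ ≤ (p:ℝ)^m * ε := by
                rw [hceq]
                have hzb : ‖z - f (x (N - (j+1)))‖ ≤ (p:ℝ) ^ ((m:ℤ) - k - s) := by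
                  refine aux_tri z (x (N - j)) _ (hz0.trans ?_) ?_
                  · exact zpow_le_zpow_right₀ (le_of_lt hp1) (by omega)
                  · rw [norm_sub_rev]; exact hfa
                refine hzb.trans ?_
                rw [hε, ← zpow_natCast (p:ℝ) m, ← zpow_add₀ hpne]
                exact zpow_le_zpow_right₀ (le_of_lt hp1) (by omega)
              exact le_of_mul_le_mul_left h2 (pow_pos hp0 m)
            refine ⟨c, ?_, trivial⟩
            intro _ i hi
            match i with
            | 0 => simpa using hcε
            | (i'+1) =>
              rw [Function.iterate_succ_apply, hfc,
                show N - (j+1) + (i'+1) = N - j + i' by omega]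
              exact hz (by omega) i' (by omega)
          · exact ⟨z, fun hN => absurd hN h, trivial⟩)
    refine ⟨u N, fun i hi => ?_⟩
    have := huI N (le_refl N) i hi
    rwa [Nat.sub_self, Nat.zero_add] at this
  choose Y hY using hfin
  -- Cauchy
  have hcauchy : CauchySeq Y := by
    apply cauchySeq_of_le_tendsto_0 (b := fun T => ((p:ℝ)⁻¹) ^ T)
    · intro n m' T hn hm'
      have hclose : ∀ q < T, ‖f^[q] (Y n) - f^[q] (Y m')‖ ≤ (p:ℝ) ^ (-(k:ℤ)) := by
        intro q hq
        apply aux_tri _ (x q) _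
        · exact (hY n q (by omega)).trans (zpow_le_zpow_right₀ (le_of_lt hp1) (by omega))
        · rw [norm_sub_rev]
          exact (hY m' q (by omega)).trans (zpow_le_zpow_right₀ (le_of_lt hp1) (by omega))
      have hexp := aux_expand hf T (Y n) (Y m') hclose
      have hε1 : ε ≤ 1 := by
        calc ε ≤ (p:ℝ) ^ (0:ℤ) := zpow_le_zpow_right₀ (le_of_lt hp1) (by omega)
          _ = 1 := zpow_zero _
      have hbound : (p:ℝ) ^ (m*T) * ‖Y n - Y m'‖ ≤ 1 := by
        rw [← hexp]
        apply aux_tri _ (x T) _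
        · exact (hY n T hn).trans hε1
        · rw [norm_sub_rev]
          exact (hY m' T hm').trans hε1
      rw [dist_eq_norm]
      have hA : (0:ℝ) < (p:ℝ) ^ (m*T) := by positivity
      have h1 : ‖Y n - Y m'‖ ≤ ((p:ℝ) ^ (m*T))⁻¹ := by
        rw [← one_div, le_div_iff₀ hA, mul_comm]
        exact hbound
      refine h1.trans ?_
      rw [← inv_pow]
      refine pow_le_pow_of_le_one (by positivity) ?_ (Nat.le_mul_of_pos_left T (by omega))
      rw [inv_le_one_iff₀]
      right; linarith
    · exact tendsto_pow_atTop_nhds_zero_of_lt_one (by positivity) (inv_lt_one_of_one_lt₀ hp1)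
  obtain ⟨y, hy⟩ := cauchySeq_tendsto_of_complete hcauchy
  refine ⟨y, fun n => ?_⟩
  have hcont : Continuous f := aux_cont hf
  have hit : Tendsto (fun N => f^[n] (Y N)) atTop (nhds (f^[n] y)) :=
    ((hcont.iterate n).tendsto y).comp hy
  have hnorm : Tendsto (fun N => ‖x n - f^[n] (Y N)‖) atTop (nhds ‖x n - f^[n] y‖) :=
    ((tendsto_const_nhds.sub hit).norm)
  apply le_of_tendsto hnorm
  filter_upwards [eventually_ge_atTop n] with N hN
  rw [norm_sub_rev]
  exact hY N n hN
end

section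
/- Let 0 < l < k be integers. A map f : ℤ_p → ℤ_p is (p^{-k}, p^{k-l}) locally scaling if and only if there exist functions f_i : A^k → A for 0 ≤ i ≤ l−1 and functions f_i : A^{k−l+i+1} → A for i ≥ l that are bijective in their last variable, such that for all x = Σ_{i≥0} x_i p^i ∈ ℤ_p, f(x) = Σ_{i=0}^{l−1} f_i(x_0,…,x_{k−1}) p^i + Σ_{i≥l} f_i(x_0,…,x_{k−l+i}) p^i. -/
/-- The `i`-th digit (in `{0, …, p-1}`) of the `p`-adic expansion of `x ∈ ℤ_p`. -/
noncomputable def padicDigit (p : ℕ) [hp : Fact p.Prime] (x : ℤ_[p]) (i : ℕ) : Fin p :=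
  ⟨x.appr (i + 1) / p ^ i % p, Nat.mod_lt _ hp.out.pos⟩

open Finset

set_option linter.unusedSectionVars false

namespace PadicDigitAux

variable {p : ℕ} [hp : Fact p.Prime]

lemma appr_dvd (x : ℤ_[p]) (n : ℕ) : (p : ℤ_[p]) ^ n ∣ x - (x.appr n : ℤ_[p]) := by
  have := PadicInt.appr_spec n x
  rwa [Ideal.mem_span_singleton] at this

lemma appr_unique (x : ℤ_[p]) (n : ℕ) (c : ℕ) (hc : c < p ^ n)
    (hdvd : (p : ℤ_[p]) ^ n ∣ x - (c : ℤ_[p])) : x.appr n = c := by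
  have h1 := appr_dvd x n
  have h2 : (p : ℤ_[p]) ^ n ∣ ((x.appr n : ℤ) - (c : ℤ) : ℤ) := by
    have := dvd_sub hdvd h1
    have he : x - (c : ℤ_[p]) - (x - ((x.appr n : ℕ) : ℤ_[p]))
        = (((x.appr n : ℤ) - (c : ℤ) : ℤ) : ℤ_[p]) := by push_cast; ring
    rwa [he] at this
  rw [PadicInt.pow_p_dvd_int_iff] at h2
  have h3 : ((x.appr n : ℤ) - c) = 0 := by
    refine Int.eq_zero_of_abs_lt_dvd h2 ?_
    have h4 := PadicInt.appr_lt x n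
    have h5 : ((p : ℤ)) ^ n = ((p ^ n : ℕ) : ℤ) := by push_cast; ring
    rw [h5, abs_sub_lt_iff]
    omega
  omega

lemma norm_sub_le_iff_appr_eq (x y : ℤ_[p]) (n : ℕ) :
    ‖x - y‖ ≤ (p : ℝ) ^ (-(n : ℤ)) ↔ x.appr n = y.appr n := by
  rw [PadicInt.norm_le_pow_iff_mem_span_pow, Ideal.mem_span_singleton]
  constructor
  · intro h
    refine appr_unique x n (y.appr n) (PadicInt.appr_lt y n) ?_
    have := dvd_add h (appr_dvd y n)
    rwa [sub_add_sub_cancel] at this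
  · intro h
    have := dvd_sub (appr_dvd x n) (appr_dvd y n)
    rw [h] at this
    rwa [sub_sub_sub_cancel_right] at this

lemma appr_eq_mod (x : ℤ_[p]) {m n : ℕ} (h : m ≤ n) : x.appr m = x.appr n % p ^ m := by
  obtain ⟨t, ht⟩ := PadicInt.dvd_appr_sub_appr x m n h
  have hmono := PadicInt.appr_mono x h
  have h2 : x.appr n = x.appr m + p ^ m * t := by omega
  rw [h2, Nat.add_mul_mod_self_left, Nat.mod_eq_of_lt (PadicInt.appr_lt x m)]

lemma digit_eq (x : ℤ_[p]) {i n : ℕ} (h : i < n) :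
    (padicDigit p x i : ℕ) = x.appr n / p ^ i % p := by
  show x.appr (i + 1) / p ^ i % p = _
  rw [appr_eq_mod x (show i + 1 ≤ n by omega), pow_succ, Nat.mod_mul_right_div_self,
    Nat.mod_mod_of_dvd _ dvd_rfl]

lemma nat_eq_of_digits (hp1 : 1 < p) :
    ∀ n, ∀ a b : ℕ, a < p ^ n → b < p ^ n → (∀ i < n, a / p ^ i % p = b / p ^ i % p) → a = b := by
  intro n
  induction n with
  | zero => intro a b ha hb _; simp at ha hb; omega
  | succ n ih =>
    intro a b ha hb hdig
    have h0 : a % p = b % p := by simpa using hdig 0 (Nat.succ_pos n)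
    have hd : a / p = b / p := by
      refine ih (a / p) (b / p) ?_ ?_ ?_
      · rw [Nat.div_lt_iff_lt_mul (by omega)]; rw [pow_succ] at ha; exact ha
      · rw [Nat.div_lt_iff_lt_mul (by omega)]; rw [pow_succ] at hb; exact hb
      · intro i hi
        have := hdig (i + 1) (by omega)
        rw [Nat.div_div_eq_div_mul, Nat.div_div_eq_div_mul]
        rwa [pow_succ'] at this
    rw [← Nat.div_add_mod a p, ← Nat.div_add_mod b p, hd, h0]

lemma appr_eq_iff_digits (x y : ℤ_[p]) (n : ℕ) :
    x.appr n = y.appr n ↔ ∀ i < n, padicDigit p x i = padicDigit p y i := by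
  constructor
  · intro h i hi
    ext
    rw [digit_eq x hi, digit_eq y hi, h]
  · intro h
    refine nat_eq_of_digits hp.out.one_lt n _ _ (PadicInt.appr_lt x n) (PadicInt.appr_lt y n) ?_
    intro i hi
    rw [← digit_eq x hi, ← digit_eq y hi, h i hi]

lemma norm_sub_le_iff_digits (x y : ℤ_[p]) (n : ℕ) :
    ‖x - y‖ ≤ (p : ℝ) ^ (-(n : ℤ)) ↔ ∀ i < n, padicDigit p x i = padicDigit p y i := by
  rw [norm_sub_le_iff_appr_eq, appr_eq_iff_digits]

end PadicDigitAux

namespace Test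
variable {p : ℕ} [hp : Fact p.Prime]

lemma pinv (i : ℕ) : (p : ℝ) ^ (-(i : ℤ)) = ((p : ℝ)⁻¹) ^ i := by
  rw [zpow_neg, ← inv_zpow, zpow_natCast]

noncomputable def sumA (a : ℕ → Fin p) : ℤ_[p] :=
  ∑' i : ℕ, ((a i : ℕ) : ℤ_[p]) * (p : ℤ_[p]) ^ i

lemma summable_A (a : ℕ → Fin p) :
    Summable (fun i : ℕ => ((a i : ℕ) : ℤ_[p]) * (p : ℤ_[p]) ^ i) := by
  refine Summable.of_norm_bounded (g := fun i => ((p : ℝ)⁻¹) ^ i) ?_ ?_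
  · exact summable_geometric_of_lt_one (by positivity)
      (inv_lt_one_of_one_lt₀ (by exact_mod_cast hp.out.one_lt))
  · intro i
    calc ‖((a i : ℕ) : ℤ_[p]) * (p : ℤ_[p]) ^ i‖
        ≤ 1 * ‖(p : ℤ_[p]) ^ i‖ := by
          rw [norm_mul]
          exact mul_le_mul_of_nonneg_right (PadicInt.norm_le_one _) (norm_nonneg _)
      _ = ((p : ℝ)⁻¹) ^ i := by rw [one_mul, PadicInt.norm_p_pow, pinv]

lemma sum_fin_lt (a : ℕ → Fin p) (n : ℕ) : ∑ i ∈ range n, (a i : ℕ) * p ^ i < p ^ n := by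
  induction n with
  | zero => simp
  | succ n ih =>
    rw [sum_range_succ, pow_succ, mul_comm (p ^ n) p]
    have h1 : (a n : ℕ) ≤ p - 1 := by have := (a n).2; omega
    have h2 : (a n : ℕ) * p ^ n ≤ (p - 1) * p ^ n := Nat.mul_le_mul_right _ h1
    have h7 : p ^ n ≤ p * p ^ n := Nat.le_mul_of_pos_left _ hp.out.pos
    have h6 : (p - 1) * p ^ n + p ^ n = p * p ^ n := by rw [Nat.sub_one_mul]; omega
    omega

lemma appr_sumA (a : ℕ → Fin p) (n : ℕ) :
    (sumA a).appr n = ∑ i ∈ range n, (a i : ℕ) * p ^ i := by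
  refine PadicDigitAux.appr_unique _ n _ (sum_fin_lt a n) ?_
  refine ⟨∑' i : ℕ, ((a (i + n) : ℕ) : ℤ_[p]) * (p : ℤ_[p]) ^ i, ?_⟩
  have hs := summable_A a
  have h1 : sumA a = (∑ i ∈ range n, ((a i : ℕ) : ℤ_[p]) * (p : ℤ_[p]) ^ i)
      + ∑' i : ℕ, ((a (i + n) : ℕ) : ℤ_[p]) * (p : ℤ_[p]) ^ (i + n) :=
    (Summable.sum_add_tsum_nat_add n hs).symm
  have h2 : ((∑ i ∈ range n, (a i : ℕ) * p ^ i : ℕ) : ℤ_[p])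
      = ∑ i ∈ range n, ((a i : ℕ) : ℤ_[p]) * (p : ℤ_[p]) ^ i := by push_cast; ring
  have h3 : ∑' i : ℕ, ((a (i + n) : ℕ) : ℤ_[p]) * (p : ℤ_[p]) ^ (i + n)
      = (p : ℤ_[p]) ^ n * ∑' i : ℕ, ((a (i + n) : ℕ) : ℤ_[p]) * (p : ℤ_[p]) ^ i := by
    calc ∑' i : ℕ, ((a (i + n) : ℕ) : ℤ_[p]) * (p : ℤ_[p]) ^ (i + n)
        = ∑' i : ℕ, (p : ℤ_[p]) ^ n * (((a (i + n) : ℕ) : ℤ_[p]) * (p : ℤ_[p]) ^ i) := by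
          congr 1; funext i; rw [pow_add]; ring
      _ = _ := (summable_A (fun i => a (i + n))).tsum_mul_left _
  rw [h1, h2, h3]; ring

lemma digit_sumA (a : ℕ → Fin p) (j : ℕ) : padicDigit p (sumA a) j = a j := by
  ext
  show (sumA a).appr (j + 1) / p ^ j % p = (a j : ℕ)
  rw [appr_sumA, sum_range_succ]
  have hlt := sum_fin_lt a j
  rw [Nat.add_mul_div_right _ _ (Nat.pow_pos hp.out.pos),
    Nat.div_eq_of_lt hlt, zero_add, Nat.mod_eq_of_lt (a j).2]

lemma sumA_digits (x : ℤ_[p]) : sumA (padicDigit p x) = x := by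
  have key : ∀ n : ℕ, ‖sumA (padicDigit p x) - x‖ ≤ ((p : ℝ)⁻¹) ^ n := by
    intro n
    have h := (PadicDigitAux.norm_sub_le_iff_digits (sumA (padicDigit p x)) x n).2
      (fun i _ => digit_sumA _ i)
    calc ‖sumA (padicDigit p x) - x‖ ≤ (p : ℝ) ^ (-(n : ℤ)) := h
      _ = ((p : ℝ)⁻¹) ^ n := pinv n
  have h0 : ‖sumA (padicDigit p x) - x‖ ≤ 0 := by
    have ht := tendsto_pow_atTop_nhds_zero_of_lt_one
      (by positivity : (0:ℝ) ≤ (p:ℝ)⁻¹)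
      (inv_lt_one_of_one_lt₀ (by exact_mod_cast hp.out.one_lt))
    exact ge_of_tendsto ht (Filter.Eventually.of_forall key)
  have h1 : ‖sumA (padicDigit p x) - x‖ = 0 := le_antisymm h0 (norm_nonneg _)
  exact sub_eq_zero.mp (norm_eq_zero.mp h1)

end Test


open PadicDigitAux Test

/-- Let `0 < l < k`. A map `f : ℤ_p → ℤ_p` is `(p^{-k}, p^{k-l})` locally scaling iff
there exist digit functions `F i` — depending only on the digits `x_0, …, x_{k-1}` for
`i < l`, and on `x_0, …, x_{k-l+i}` and bijective in the last variable `x_{k-l+i}` for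
`i ≥ l` — such that `f x = Σ_i F i (digits of x) p^i`. -/
theorem locallyScaling_iff_digit_representation (p : ℕ) [Fact p.Prime]
    (l k : ℕ) (hl : 0 < l) (hlk : l < k) (f : ℤ_[p] → ℤ_[p]) :
    (∀ x y : ℤ_[p], ‖x - y‖ ≤ (p : ℝ) ^ (-(k : ℤ)) →
      ‖f x - f y‖ = (p : ℝ) ^ (k - l) * ‖x - y‖)
    ↔ ∃ F : ℕ → ((ℕ → Fin p) → Fin p),
        (∀ i, i < l → ∀ a b : ℕ → Fin p, (∀ j, j < k → a j = b j) → F i a = F i b) ∧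
        (∀ i, l ≤ i →
          (∀ a b : ℕ → Fin p, (∀ j, j < k - l + i + 1 → a j = b j) → F i a = F i b) ∧
          ∀ a : ℕ → Fin p,
            Function.Bijective (fun c : Fin p => F i (Function.update a (k - l + i) c))) ∧
        ∀ x : ℤ_[p],
          f x = ∑' i : ℕ, ((F i (padicDigit p x) : ℕ) : ℤ_[p]) * (p : ℤ_[p]) ^ i := by
  have hp := (Fact.out : p.Prime)
  have hp1 : (1 : ℝ) < p := by exact_mod_cast hp.one_lt
  have hp0 : (0 : ℝ) < p := by positivity
  have exp_helper : ∀ {m : ℕ}, k ≤ m →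
      (p : ℝ) ^ (k - l) * (p : ℝ) ^ (-(m : ℤ)) = (p : ℝ) ^ (-((m - k + l : ℕ) : ℤ)) := by
    intro m hm
    rw [← zpow_natCast (p : ℝ) (k - l), ← zpow_add₀ (ne_of_gt hp0)]
    congr 1
    omega
  constructor
  · intro H
    -- key: if digits of x, y agree below m (with m ≥ k), digits of f x, f y agree below m-k+l
    have key : ∀ m, k ≤ m → ∀ x y : ℤ_[p],
        (∀ j, j < m → padicDigit p x j = padicDigit p y j) →
        ∀ i, i < m - k + l → padicDigit p (f x) i = padicDigit p (f y) i := by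
      intro m hm x y hxy i hi
      have h1 : ‖x - y‖ ≤ (p : ℝ) ^ (-(m : ℤ)) :=
        (norm_sub_le_iff_digits x y m).2 hxy
      have h2 : ‖x - y‖ ≤ (p : ℝ) ^ (-(k : ℤ)) :=
        h1.trans ((zpow_le_zpow_iff_right₀ hp1).2 (by omega))
      have h3 := H x y h2
      have h4 : ‖f x - f y‖ ≤ (p : ℝ) ^ (-((m - k + l : ℕ) : ℤ)) := by
        rw [h3, ← exp_helper hm]
        exact mul_le_mul_of_nonneg_left h1 (by positivity)
      exact (norm_sub_le_iff_digits (f x) (f y) _).1 h4 i hi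
    refine ⟨fun i a => padicDigit p (f (sumA a)) i, ?_, ?_, ?_⟩
    · intro i hi a b hab
      refine key k le_rfl (sumA a) (sumA b) ?_ i (by omega)
      intro j hj
      rw [digit_sumA, digit_sumA, hab j hj]
    · intro i hi
      constructor
      · intro a b hab
        refine key (k - l + i + 1) (by omega) (sumA a) (sumA b) ?_ i (by omega)
        intro j hj
        rw [digit_sumA, digit_sumA, hab j hj]
      · intro a
        rw [← Finite.injective_iff_bijective]
        intro c c' hcc
        set m := k - l + i with hmdef
        set x := sumA (Function.update a m c) with hxdef
        set y := sumA (Function.update a m c') with hydef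
        have hdig_agree : ∀ j, j < m → padicDigit p x j = padicDigit p y j := by
          intro j hj
          rw [hxdef, hydef, digit_sumA, digit_sumA,
            Function.update_of_ne (by omega) , Function.update_of_ne (by omega)]
        have hfd : ∀ j, j < i + 1 → padicDigit p (f x) j = padicDigit p (f y) j := by
          intro j hj
          rcases Nat.lt_or_ge j i with hji | hji
          · exact key m (by omega) x y hdig_agree j (by omega)
          · have : j = i := by omega
            subst this
            exact hcc
        have h5 : ‖f x - f y‖ ≤ (p : ℝ) ^ (-((i + 1 : ℕ) : ℤ)) :=
          (norm_sub_le_iff_digits (f x) (f y) (i + 1)).2 hfd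
        have h6 : ‖x - y‖ ≤ (p : ℝ) ^ (-(k : ℤ)) :=
          ((norm_sub_le_iff_digits x y m).2 hdig_agree).trans
            ((zpow_le_zpow_iff_right₀ hp1).2 (by omega))
        have h7 := H x y h6
        have h8 : ‖x - y‖ ≤ (p : ℝ) ^ (-((m + 1 : ℕ) : ℤ)) := by
          have hpkl : (0 : ℝ) < (p : ℝ) ^ (k - l) := by positivity
          rw [← mul_le_mul_iff_right₀ hpkl, exp_helper (show k ≤ m + 1 by omega), ← h7]
          have : (m + 1 - k + l : ℕ) = i + 1 := by omega
          rw [this]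
          exact h5
        have h9 := (norm_sub_le_iff_digits x y (m + 1)).1 h8 m (by omega)
        rw [hxdef, hydef, digit_sumA, digit_sumA, Function.update_self,
          Function.update_self] at h9
        exact h9
    · intro x
      have hx : sumA (padicDigit p x) = x := sumA_digits x
      show f x = ∑' i : ℕ,
        ((padicDigit p (f (sumA (padicDigit p x))) i : ℕ) : ℤ_[p]) * (p : ℤ_[p]) ^ i
      rw [hx]
      exact (sumA_digits (f x)).symm
  · rintro ⟨F, hFl, hFge, hFx⟩ x y hxy
    have hdig : ∀ z j, padicDigit p (f z) j = F j (padicDigit p z) := by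
      intro z j
      rw [show f z = sumA (fun i => F i (padicDigit p z)) from hFx z, digit_sumA]
    rcases eq_or_ne x y with rfl | hne
    · simp
    · have hv := PadicInt.norm_eq_zpow_neg_valuation (sub_ne_zero.2 hne)
      generalize hm : (x - y).valuation = m at hv
      have hkm : k ≤ m := by
        rw [hv] at hxy
        have := (zpow_le_zpow_iff_right₀ hp1).1 hxy
        omega
      have hclose : ∀ j, j < m → padicDigit p x j = padicDigit p y j :=
        (norm_sub_le_iff_digits x y m).1 (le_of_eq hv)
      have hdiff : padicDigit p x m ≠ padicDigit p y m := by
        intro hcon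
        have hall : ∀ j, j < m + 1 → padicDigit p x j = padicDigit p y j := by
          intro j hj
          rcases Nat.lt_or_ge j m with h | h
          · exact hclose j h
          · have : j = m := by omega
            subst this; exact hcon
        have := (norm_sub_le_iff_digits x y (m + 1)).2 hall
        rw [hv] at this
        have := (zpow_le_zpow_iff_right₀ hp1).1 this
        omega
      set i₀ := m - k + l with hi₀def
      have hFeq : ∀ j, j < i₀ → F j (padicDigit p x) = F j (padicDigit p y) := by
        intro j hj
        rcases Nat.lt_or_ge j l with hjl | hjl
        · exact hFl j hjl _ _ (fun t ht => hclose t (by omega))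
        · exact (hFge j hjl).1 _ _ (fun t ht => hclose t (by omega))
      have hFne : F i₀ (padicDigit p x) ≠ F i₀ (padicDigit p y) := by
        intro hcon
        have hb := (hFge i₀ (by omega)).2 (padicDigit p x)
        have hm2 : k - l + i₀ = m := by omega
        rw [hm2] at hb
        have h1 : F i₀ (Function.update (padicDigit p x) m (padicDigit p x m))
            = F i₀ (Function.update (padicDigit p x) m (padicDigit p y m)) := by
          rw [Function.update_eq_self, hcon]
          refine (hFge i₀ (by omega)).1 _ _ ?_
          intro t ht
          have ht2 : t < m + 1 := by omega
          rcases Nat.lt_or_ge t m with h | h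
          · rw [Function.update_of_ne (by omega), hclose t h]
          · have : t = m := by omega
            subst this
            rw [Function.update_self]
        exact hdiff (hb.injective h1)
      have hfdig : ∀ j, j < i₀ → padicDigit p (f x) j = padicDigit p (f y) j := by
        intro j hj
        rw [hdig, hdig, hFeq j hj]
      have hle : ‖f x - f y‖ ≤ (p : ℝ) ^ (-(i₀ : ℤ)) :=
        (norm_sub_le_iff_digits (f x) (f y) i₀).2 hfdig
      have hne2 : ¬ (‖f x - f y‖ ≤ (p : ℝ) ^ (-((i₀ + 1 : ℕ) : ℤ))) := by
        intro hcon
        have := (norm_sub_le_iff_digits (f x) (f y) (i₀ + 1)).1 hcon i₀ (by omega)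
        rw [hdig, hdig] at this
        exact hFne this
      have hfne : f x ≠ f y := by
        intro hcon
        apply hne2
        rw [hcon, sub_self, norm_zero]
        positivity
      have hv2 := PadicInt.norm_eq_zpow_neg_valuation (sub_ne_zero.2 hfne)
      generalize hv' : (f x - f y).valuation = v at hv2
      have hvge : i₀ ≤ v := by
        rw [hv2] at hle
        have := (zpow_le_zpow_iff_right₀ hp1).1 hle
        omega
      have hvlt : v < i₀ + 1 := by
        by_contra hcon
        apply hne2
        rw [hv2]
        exact (zpow_le_zpow_iff_right₀ hp1).2 (by omega)
      have hveq : v = i₀ := by omega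
      rw [hv2, hv, hveq, exp_helper hkm]
end

section
/- A map f : ℤ_p → ℤ_p is (p^{-k}, p^k) locally scaling if and only if there exist functions f_i : A^{k+i+1} → A (for i ≥ 0), each bijective in its last variable, such that f(x) = Σ_{i≥0} f_i(x_0, x_1, …, x_{k+i}) p^i for all x = Σ_{i≥0} x_i p^i ∈ ℤ_p. -/
namespace LS
open Finset

variable {p : ℕ} [hp : Fact p.Prime]

lemma one_lt_p : (1:ℝ) < p := by exact_mod_cast hp.out.one_lt

lemma nat_cast_eq_of_norm_le {a b : ℕ} {n : ℕ} (ha : a < p ^ n) (hb : b < p ^ n)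
    (h : ‖((a:ℤ_[p]) - b)‖ ≤ (p:ℝ) ^ (-(n:ℤ))) : a = b := by
  have h2 : ((a:ℤ_[p]) - b) = (((a:ℤ) - (b:ℤ) : ℤ) : ℤ_[p]) := by push_cast; ring
  rw [h2, PadicInt.norm_int_le_pow_iff_dvd] at h
  have ha' : (a:ℤ) < (p:ℤ) ^ n := by exact_mod_cast ha
  have hb' : (b:ℤ) < (p:ℤ) ^ n := by exact_mod_cast hb
  have hpn : (0:ℤ) ≤ (p:ℤ) ^ n := by positivity
  have hlt : |(a:ℤ) - b| < (p:ℤ) ^ n := by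
    rw [abs_lt]; constructor <;> omega
  have := Int.eq_zero_of_abs_lt_dvd h hlt
  omega

/-- partial digit sum as a natural number -/
def sumD (a : ℕ → Fin p) (n : ℕ) : ℕ := ∑ i ∈ range n, (a i : ℕ) * p ^ i

lemma sumD_lt (a : ℕ → Fin p) (n : ℕ) : sumD a n < p ^ n := by
  induction n with
  | zero => simp [sumD]
  | succ n ih =>
    have h1 : (a n : ℕ) ≤ p - 1 := by have := (a n).isLt; omega
    have h2 : (a n : ℕ) * p ^ n ≤ (p - 1) * p ^ n := Nat.mul_le_mul_right _ h1
    have h3 : (p - 1) * p ^ n = p * p ^ n - p ^ n := Nat.sub_one_mul p (p ^ n)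
    have h4 : p ^ (n + 1) = p * p ^ n := by rw [pow_succ, Nat.mul_comm]
    have h5 : p ^ n ≤ p * p ^ n := Nat.le_mul_of_pos_left _ hp.out.pos
    rw [sumD, Finset.sum_range_succ, ← sumD]
    omega

lemma appr_eq_sumD (x : ℤ_[p]) (n : ℕ) : x.appr n = sumD (padicDigit p x) n := by
  induction n with
  | zero => simp [sumD, PadicInt.appr]
  | succ n ih =>
    have hmono := x.appr_mono (Nat.le_succ n)
    have hdvd := x.dvd_appr_sub_appr n (n+1) (Nat.le_succ n)
    have hlt := x.appr_lt (n+1)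
    have hltn := x.appr_lt n
    set A := x.appr n with hA
    set B := x.appr (n+1) with hB
    have hmod : B % p ^ n = A := by
      obtain ⟨c, hc⟩ := hdvd
      have hBA : B = A + p ^ n * c := by omega
      rw [hBA, Nat.add_mul_mod_self_left, Nat.mod_eq_of_lt hltn]
    have hq : B / p ^ n < p := by
      rw [Nat.div_lt_iff_lt_mul (pow_pos hp.out.pos n)]
      calc B < p ^ (n+1) := hlt
        _ = p * p ^ n := by rw [pow_succ, Nat.mul_comm]
    have hBdecomp : B = p ^ n * (B / p ^ n) + A := by
      conv_lhs => rw [← Nat.div_add_mod B (p ^ n)]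
      rw [hmod]
    have hdig : (padicDigit p x n : ℕ) = B / p ^ n := by
      show B / p ^ n % p = B / p ^ n
      exact Nat.mod_eq_of_lt hq
    rw [sumD, Finset.sum_range_succ, ← sumD, ← ih, hdig]
    have hc : p ^ n * (B / p ^ n) = B / p ^ n * p ^ n := Nat.mul_comm _ _
    omega

lemma norm_sub_appr_le (x : ℤ_[p]) (n : ℕ) : ‖x - x.appr n‖ ≤ (p:ℝ) ^ (-(n:ℤ)) := by
  rw [PadicInt.norm_le_pow_iff_mem_span_pow]
  exact x.appr_spec n

lemma appr_unique (x : ℤ_[p]) (n : ℕ) (m : ℕ) (hm : m < p ^ n)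
    (h : ‖x - m‖ ≤ (p:ℝ) ^ (-(n:ℤ))) : x.appr n = m := by
  apply nat_cast_eq_of_norm_le (x.appr_lt n) hm
  have : ((x.appr n : ℤ_[p]) - m) = -(x - x.appr n) + (x - m) := by ring
  rw [this]
  refine le_trans (PadicInt.nonarchimedean _ _) (max_le ?_ h)
  rw [norm_neg]; exact norm_sub_appr_le x n

lemma appr_eq_of_norm_le {x y : ℤ_[p]} {n : ℕ} (h : ‖x - y‖ ≤ (p:ℝ) ^ (-(n:ℤ))) :
    x.appr n = y.appr n := by
  apply appr_unique x n _ (y.appr_lt n)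
  have : x - (y.appr n : ℤ_[p]) = (x - y) + (y - y.appr n) := by ring
  rw [this]
  exact le_trans (PadicInt.nonarchimedean _ _) (max_le h (norm_sub_appr_le y n))

lemma norm_le_iff_digits (x y : ℤ_[p]) (n : ℕ) :
    ‖x - y‖ ≤ (p:ℝ) ^ (-(n:ℤ)) ↔ ∀ i < n, padicDigit p x i = padicDigit p y i := by
  constructor
  · intro h i hi
    have hle : ‖x - y‖ ≤ (p:ℝ) ^ (-((i+1:ℕ):ℤ)) := by
      refine le_trans h (zpow_le_zpow_right₀ (le_of_lt one_lt_p) ?_)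
      omega
    have := appr_eq_of_norm_le (x := x) (y := y) hle
    have key : x.appr (i+1) = y.appr (i+1) := this
    unfold padicDigit
    ext
    simp [key]
  · intro h
    have happr : x.appr n = y.appr n := by
      rw [appr_eq_sumD, appr_eq_sumD]
      unfold sumD
      exact Finset.sum_congr rfl fun i hi => by
        rw [h i (Finset.mem_range.mp hi)]
    have : x - y = (x - x.appr n) + -(y - y.appr n) := by
      rw [happr]; ring
    rw [this]
    refine le_trans (PadicInt.nonarchimedean _ _) (max_le (norm_sub_appr_le x n) ?_)
    rw [norm_neg]; exact norm_sub_appr_le y n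



lemma summable_digits (a : ℕ → Fin p) :
    Summable fun i : ℕ => ((a i : ℕ) : ℤ_[p]) * (p : ℤ_[p]) ^ i := by
  apply Summable.of_norm_bounded (g := fun i => ((p:ℝ)⁻¹) ^ i)
  · exact summable_geometric_of_lt_one (by positivity)
      (inv_lt_one_of_one_lt₀ one_lt_p)
  · intro i
    rw [norm_mul, PadicInt.norm_p_pow]
    calc ‖((a i : ℕ) : ℤ_[p])‖ * (p:ℝ) ^ (-(i:ℤ))
        ≤ 1 * (p:ℝ) ^ (-(i:ℤ)) := by
          apply mul_le_mul_of_nonneg_right (PadicInt.norm_le_one _) (by positivity)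
      _ = ((p:ℝ)⁻¹) ^ i := by rw [one_mul, inv_pow, ← zpow_natCast, ← zpow_neg]

/-- the p-adic integer with the given digit sequence -/
noncomputable def ofD (a : ℕ → Fin p) : ℤ_[p] := ∑' i : ℕ, ((a i : ℕ) : ℤ_[p]) * (p : ℤ_[p]) ^ i

lemma partial_sum_eq (a : ℕ → Fin p) (n : ℕ) :
    (∑ i ∈ range n, ((a i : ℕ) : ℤ_[p]) * (p : ℤ_[p]) ^ i) = ((sumD a n : ℕ) : ℤ_[p]) := by
  rw [sumD]
  push_cast
  rfl

lemma norm_ofD_sub_sumD (a : ℕ → Fin p) (n : ℕ) :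
    ‖ofD a - ((sumD a n : ℕ) : ℤ_[p])‖ ≤ (p:ℝ) ^ (-(n:ℤ)) := by
  have hs := summable_digits a
  have hsplit := Summable.sum_add_tsum_nat_add n hs
  have : ofD a - ((sumD a n : ℕ) : ℤ_[p]) = ∑' i : ℕ, ((a (i + n) : ℕ) : ℤ_[p]) * (p : ℤ_[p]) ^ (i + n) := by
    rw [ofD, ← hsplit, partial_sum_eq]; ring
  rw [this]
  have h2 : (∑' i : ℕ, ((a (i + n) : ℕ) : ℤ_[p]) * (p : ℤ_[p]) ^ (i + n))
      = (p : ℤ_[p]) ^ n * ∑' i : ℕ, ((a (i + n) : ℕ) : ℤ_[p]) * (p : ℤ_[p]) ^ i := by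
    rw [← (summable_digits (fun i => a (i + n))).tsum_mul_left ((p:ℤ_[p])^n)]
    exact tsum_congr fun i => by rw [pow_add]; ring
  rw [h2, norm_mul, PadicInt.norm_p_pow]
  calc (p:ℝ) ^ (-(n:ℤ)) * ‖∑' i : ℕ, ((a (i + n) : ℕ) : ℤ_[p]) * (p : ℤ_[p]) ^ i‖
      ≤ (p:ℝ) ^ (-(n:ℤ)) * 1 := by
        apply mul_le_mul_of_nonneg_left (PadicInt.norm_le_one _) (by positivity)
    _ = (p:ℝ) ^ (-(n:ℤ)) := mul_one _

lemma appr_ofD (a : ℕ → Fin p) (n : ℕ) : (ofD a).appr n = sumD a n :=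
  appr_unique _ _ _ (sumD_lt a n) (norm_ofD_sub_sumD a n)

lemma digit_ofD (a : ℕ → Fin p) (i : ℕ) : padicDigit p (ofD a) i = a i := by
  ext
  show (ofD a).appr (i + 1) / p ^ i % p = (a i : ℕ)
  rw [appr_ofD, sumD, Finset.sum_range_succ, ← sumD]
  have h1 : sumD a i < p ^ i := sumD_lt a i
  rw [Nat.add_mul_div_right _ _ (pow_pos hp.out.pos i), Nat.div_eq_of_lt h1, Nat.zero_add,
    Nat.mod_eq_of_lt (a i).isLt]

lemma eq_of_all_digits_norm (x y : ℤ_[p]) (h : ∀ n : ℕ, ‖x - y‖ ≤ (p:ℝ) ^ (-(n:ℤ))) : x = y := by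
  by_contra hne
  have hxy : x - y ≠ 0 := sub_ne_zero_of_ne hne
  have hval : ∀ n : ℕ, (n:ℤ) ≤ (x - y).valuation := fun n =>
    by exact_mod_cast (PadicInt.norm_le_pow_iff_le_valuation _ hxy n).mp (h n)
  have := hval ((x - y).valuation + 1)
  omega

lemma ofD_digits (x : ℤ_[p]) : ofD (padicDigit p x) = x := by
  apply eq_of_all_digits_norm
  intro n
  have h1 := norm_ofD_sub_sumD (padicDigit p x) n
  have h2 : ((sumD (padicDigit p x) n : ℕ) : ℤ_[p]) = (x.appr n : ℤ_[p]) := by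
    rw [appr_eq_sumD]
  have : ofD (padicDigit p x) - x
      = (ofD (padicDigit p x) - ((sumD (padicDigit p x) n : ℕ) : ℤ_[p])) + -(x - x.appr n) := by
    rw [h2]; ring
  rw [this]
  refine le_trans (PadicInt.nonarchimedean _ _) (max_le h1 ?_)
  rw [norm_neg]; exact norm_sub_appr_le x n

lemma norm_sub_eq_of_digits (x y : ℤ_[p]) (r : ℕ)
    (h1 : ∀ i < r, padicDigit p x i = padicDigit p y i)
    (h2 : padicDigit p x r ≠ padicDigit p y r) : ‖x - y‖ = (p:ℝ) ^ (-(r:ℤ)) := by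
  have hne : x ≠ y := fun h => h2 (by rw [h])
  have hxy : x - y ≠ 0 := sub_ne_zero_of_ne hne
  have hle : ‖x - y‖ ≤ (p:ℝ) ^ (-(r:ℤ)) := (norm_le_iff_digits x y r).mpr h1
  have hnle : ¬ ‖x - y‖ ≤ (p:ℝ) ^ (-((r+1:ℕ):ℤ)) := by
    intro h
    exact h2 ((norm_le_iff_digits x y (r+1)).mp h r (Nat.lt_succ_self r))
  have hv1 : (r:ℤ) ≤ (x - y).valuation :=
    by exact_mod_cast (PadicInt.norm_le_pow_iff_le_valuation _ hxy r).mp hle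
  have hv2 : ¬ ((r+1:ℕ):ℤ) ≤ (x - y).valuation := fun h =>
    hnle ((PadicInt.norm_le_pow_iff_le_valuation _ hxy (r+1)).mpr (by exact_mod_cast h))
  have hv : (x - y).valuation = (r:ℤ) := by omega
  rw [PadicInt.norm_eq_zpow_neg_valuation hxy, hv]

end LS
/-- A map `f : ℤ_p → ℤ_p` is `(p^{-k}, p^k)` locally scaling iff there exist digit
functions `F i`, each depending only on the digits `x_0, …, x_{k+i}` and bijective in
the last variable `x_{k+i}`, with `f x = Σ_i F i (digits of x) p^i`. -/
theorem locallyScaling_pk_iff_digit_representation (p : ℕ) [Fact p.Prime]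
    (k : ℕ) (hk : 1 ≤ k) (f : ℤ_[p] → ℤ_[p]) :
    (∀ x y : ℤ_[p], ‖x - y‖ ≤ (p : ℝ) ^ (-(k : ℤ)) →
      ‖f x - f y‖ = (p : ℝ) ^ k * ‖x - y‖)
    ↔ ∃ F : ℕ → ((ℕ → Fin p) → Fin p),
        (∀ i : ℕ,
          (∀ a b : ℕ → Fin p, (∀ j, j < k + i + 1 → a j = b j) → F i a = F i b) ∧
          ∀ a : ℕ → Fin p,
            Function.Bijective (fun c : Fin p => F i (Function.update a (k + i) c))) ∧
        ∀ x : ℤ_[p],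
          f x = ∑' i : ℕ, ((F i (padicDigit p x) : ℕ) : ℤ_[p]) * (p : ℤ_[p]) ^ i := by
  have hp1 : (1:ℝ) < p := LS.one_lt_p
  have hpne : ((p:ℝ)) ≠ 0 := by positivity
  have hnpow : ∀ n : ℕ, ((p:ℝ) ^ n : ℝ) = (p:ℝ) ^ (n:ℤ) := fun n => (zpow_natCast _ n).symm
  constructor
  · intro H
    refine ⟨fun i a => padicDigit p (f (LS.ofD a)) i, fun i => ⟨?_, ?_⟩, ?_⟩
    · -- dependence on first k+i+1 digits
      intro a b hab
      have hnorm : ‖LS.ofD a - LS.ofD b‖ ≤ (p:ℝ) ^ (-((k+i+1:ℕ):ℤ)) := by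
        rw [LS.norm_le_iff_digits]
        intro j hj
        rw [LS.digit_ofD, LS.digit_ofD]
        exact hab j hj
      have hk' : ‖LS.ofD a - LS.ofD b‖ ≤ (p:ℝ) ^ (-(k:ℤ)) :=
        le_trans hnorm (zpow_le_zpow_right₀ hp1.le (by push_cast; omega))
      have heq := H _ _ hk'
      have hfn : ‖f (LS.ofD a) - f (LS.ofD b)‖ ≤ (p:ℝ) ^ (-((i+1:ℕ):ℤ)) := by
        rw [heq]
        calc (p:ℝ) ^ k * ‖LS.ofD a - LS.ofD b‖
            ≤ (p:ℝ) ^ k * (p:ℝ) ^ (-((k+i+1:ℕ):ℤ)) :=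
              mul_le_mul_of_nonneg_left hnorm (by positivity)
          _ = (p:ℝ) ^ (-((i+1:ℕ):ℤ)) := by
              rw [hnpow, ← zpow_add₀ hpne]; congr 1; push_cast; ring
      exact (LS.norm_le_iff_digits _ _ (i+1)).mp hfn i (Nat.lt_succ_self i)
    · -- bijectivity in the last variable
      intro a
      rw [← Finite.injective_iff_bijective]
      intro c c' hcc'
      by_contra hne
      set xa := LS.ofD (Function.update a (k+i) c) with hxa
      set xb := LS.ofD (Function.update a (k+i) c') with hxb
      have hd1 : ∀ j < k + i, padicDigit p xa j = padicDigit p xb j := by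
        intro j hj
        rw [hxa, hxb, LS.digit_ofD, LS.digit_ofD,
          Function.update_of_ne (by omega), Function.update_of_ne (by omega)]
      have hdiffd : padicDigit p xa (k+i) ≠ padicDigit p xb (k+i) := by
        rw [hxa, hxb, LS.digit_ofD, LS.digit_ofD,
          Function.update_self, Function.update_self]
        exact hne
      have hnorm : ‖xa - xb‖ = (p:ℝ) ^ (-((k+i:ℕ):ℤ)) :=
        LS.norm_sub_eq_of_digits _ _ _ hd1 hdiffd
      have hle : ‖xa - xb‖ ≤ (p:ℝ) ^ (-(k:ℤ)) := by
        rw [hnorm]; exact zpow_le_zpow_right₀ hp1.le (by push_cast; omega)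
      have heq := H _ _ hle
      have hfd : ∀ j < i + 1, padicDigit p (f xa) j = padicDigit p (f xb) j := by
        intro j hj
        rcases Nat.lt_succ_iff_lt_or_eq.mp hj with hj' | rfl
        · have hni : ‖f xa - f xb‖ ≤ (p:ℝ) ^ (-(i:ℤ)) := by
            rw [heq, hnorm, hnpow, ← zpow_add₀ hpne]
            apply le_of_eq; congr 1; push_cast; ring
          have := (LS.norm_le_iff_digits (f xa) (f xb) i).mp ?_ j hj'
          · exact this
          · convert hni using 2
        · exact hcc'
      have hfle : ‖f xa - f xb‖ ≤ (p:ℝ) ^ (-((i+1:ℕ):ℤ)) :=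
        (LS.norm_le_iff_digits _ _ (i+1)).mpr hfd
      rw [heq, hnorm, hnpow, ← zpow_add₀ hpne] at hfle
      have hlt : (p:ℝ) ^ (-((i+1:ℕ):ℤ)) < (p:ℝ) ^ ((k:ℤ) + -((k+i:ℕ):ℤ)) := by
        apply zpow_lt_zpow_right₀ hp1; push_cast; omega
      linarith
    · -- the sum formula
      intro x
      beta_reduce
      rw [LS.ofD_digits x]
      exact (LS.ofD_digits (f x)).symm
  · rintro ⟨F, hF, hfx⟩ x y hxy
    have hdig : ∀ (z : ℤ_[p]) (i : ℕ), padicDigit p (f z) i = F i (padicDigit p z) := by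
      intro z i
      have hz : f z = LS.ofD (fun j => F j (padicDigit p z)) := hfx z
      rw [hz, LS.digit_ofD]
    by_cases hxyeq : x = y
    · subst hxyeq; simp
    · have hsub : x - y ≠ 0 := sub_ne_zero_of_ne hxyeq
      set m := (x - y).valuation with hm
      have hvn := Nat.zero_le (x - y).valuation
      have hnorm : ‖x - y‖ = (p:ℝ) ^ (-(m:ℤ)) := by
        rw [PadicInt.norm_eq_zpow_neg_valuation hsub]
      have hkm : k ≤ m := by
        rw [hnorm] at hxy
        have := (zpow_le_zpow_iff_right₀ hp1).mp hxy
        omega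
      have hagree : ∀ i < m, padicDigit p x i = padicDigit p y i :=
        (LS.norm_le_iff_digits x y m).mp (le_of_eq hnorm)
      have hdiff : padicDigit p x m ≠ padicDigit p y m := by
        intro hd
        have hle2 : ‖x - y‖ ≤ (p:ℝ) ^ (-((m+1:ℕ):ℤ)) := by
          rw [LS.norm_le_iff_digits]
          intro i hi
          rcases Nat.lt_succ_iff_lt_or_eq.mp hi with h | rfl
          · exact hagree i h
          · exact hd
        rw [hnorm] at hle2
        have hlt : (p:ℝ) ^ (-((m+1:ℕ):ℤ)) < (p:ℝ) ^ (-(m:ℤ)) :=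
          zpow_lt_zpow_right₀ hp1 (by push_cast; omega)
        linarith
      set r := m - k with hr
      have hkr : k + r = m := by omega
      have hfagree : ∀ i < r, padicDigit p (f x) i = padicDigit p (f y) i := by
        intro i hi
        rw [hdig, hdig]
        exact (hF i).1 _ _ fun j hj => hagree j (by omega)
      have hfdiff : padicDigit p (f x) r ≠ padicDigit p (f y) r := by
        rw [hdig, hdig]
        intro hFeq
        apply hdiff
        have h1 : F r (padicDigit p x)
            = F r (Function.update (padicDigit p y) (k+r) (padicDigit p x m)) := by
          apply (hF r).1
          intro j hj
          rcases Nat.lt_succ_iff_lt_or_eq.mp (by omega : j < m + 1) with h | rfl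
          · rw [Function.update_of_ne (by omega)]
            exact hagree j h
          · rw [hkr, Function.update_self]
        have h2 : F r (padicDigit p y)
            = F r (Function.update (padicDigit p y) (k+r) (padicDigit p y m)) := by
          rw [hkr, Function.update_eq_self]
        rw [h1, h2] at hFeq
        exact ((hF r).2 (padicDigit p y)).injective hFeq
      have hres := LS.norm_sub_eq_of_digits (f x) (f y) r hfagree hfdiff
      rw [hres, hnorm, hnpow, ← zpow_add₀ hpne]
      congr 1
      omega
end

section
/- If f : ℤ_p → ℤ_p is (p^{-k}, p^{k-l}) locally scaling for integers 0 < l < k, then each iterate f^n satisfies: f^n is (p^{-(k + (n-1)(k-l))}, p^{n(k-l)}) locally scaling; in particular, ‖x − y‖_p ≤ p^{-(n-1)(k-l)-k} implies ‖f^n(x) − f^n(y)‖_p = p^{n(k-l)} ‖x − y‖_p. -/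
/-- If `f` is `(p^{-k}, p^{k-l})` locally scaling (`0 < l < k`), then `f^n` is
`(p^{-((n-1)(k-l)+k)}, p^{n(k-l)})` locally scaling. -/
theorem iterate_locallyScaling (p l k : ℕ) [Fact p.Prime]
    (hl : 0 < l) (hlk : l < k) (f : ℤ_[p] → ℤ_[p])
    (hf : ∀ x y : ℤ_[p], ‖x - y‖ ≤ (p : ℝ) ^ (-(k : ℤ)) →
      ‖f x - f y‖ = (p : ℝ) ^ (k - l) * ‖x - y‖) :
    ∀ n : ℕ, 1 ≤ n → ∀ x y : ℤ_[p],
      ‖x - y‖ ≤ (p : ℝ) ^ (-(((n - 1) * (k - l) + k : ℕ) : ℤ)) →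
      ‖f^[n] x - f^[n] y‖ = (p : ℝ) ^ (n * (k - l)) * ‖x - y‖ := by
  have hp1 : (1 : ℝ) ≤ (p : ℝ) := by
    exact_mod_cast (Fact.out : p.Prime).one_le
  have hp0 : (0 : ℝ) < (p : ℝ) := lt_of_lt_of_le one_pos hp1
  intro n hn
  induction n, hn using Nat.le_induction with
  | base =>
    intro x y h
    simpa using hf x y (by simpa using h)
  | succ n hn ih =>
    intro x y h
    have hexp : ((n + 1 - 1) * (k - l) + k : ℕ) = n * (k - l) + k := by simp
    rw [hexp] at h
    -- apply IH
    have hmono : ‖x - y‖ ≤ (p : ℝ) ^ (-(((n - 1) * (k - l) + k : ℕ) : ℤ)) := by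
      refine h.trans (zpow_le_zpow_right₀ hp1 ?_)
      simp only [neg_le_neg_iff, Nat.cast_le]
      have : (n - 1) * (k - l) ≤ n * (k - l) := Nat.mul_le_mul_right _ (by omega)
      omega
    have hIH := ih x y hmono
    -- show f^[n] x, f^[n] y are close
    have hclose : ‖f^[n] x - f^[n] y‖ ≤ (p : ℝ) ^ (-(k : ℤ)) := by
      rw [hIH]
      calc (p : ℝ) ^ (n * (k - l)) * ‖x - y‖
          ≤ (p : ℝ) ^ (n * (k - l)) * (p : ℝ) ^ (-(((n * (k - l) + k : ℕ)) : ℤ)) := by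
            exact mul_le_mul_of_nonneg_left h (by positivity)
        _ = (p : ℝ) ^ (-(k : ℤ)) := by
            rw [← zpow_natCast (p : ℝ) (n * (k - l)), ← zpow_add₀ (ne_of_gt hp0)]
            congr 1
            push_cast
            ring
    have := hf _ _ hclose
    rw [Function.iterate_succ_apply', Function.iterate_succ_apply', this, hIH]
    rw [← mul_assoc, ← pow_add]
    ring_nf
end

section
/- Let k ≥ 1 and let f, g : ℤ_p → ℤ_p both be p^{-k}-expansive shadowing maps. If sup_{x} ‖f(x) − g(x)‖_p < min(δ_f(p^{-k}), δ_g(p^{-k})), then f and g are topologically conjugate, i.e., there is a homeomorphism h : ℤ_p → ℤ_p with f ∘ h = h ∘ g. -/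
/-- `f` has the (positive) shadowing property on `ℤ_p`. -/
def PadicShadowing (p : ℕ) [Fact p.Prime] (f : ℤ_[p] → ℤ_[p]) : Prop :=
  ∀ ε : ℝ, 0 < ε → ∃ δ : ℝ, 0 < δ ∧ ∀ x : ℕ → ℤ_[p],
    (∀ n : ℕ, ‖f (x n) - x (n + 1)‖ ≤ δ) → ∃ y : ℤ_[p], ∀ n : ℕ, ‖x n - f^[n] y‖ ≤ ε

/-- The set of `δ > 0` such that every `δ`-pseudotrajectory is `ε`-shadowed. -/
def shadowingConsts (p : ℕ) [Fact p.Prime] (f : ℤ_[p] → ℤ_[p]) (ε : ℝ) : Set ℝ :=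
  {δ : ℝ | 0 < δ ∧ ∀ x : ℕ → ℤ_[p],
    (∀ n : ℕ, ‖f (x n) - x (n + 1)‖ ≤ δ) → ∃ y : ℤ_[p], ∀ n : ℕ, ‖x n - f^[n] y‖ ≤ ε}

/-- `δ_f(ε)`: the supremum of shadowing constants. -/
noncomputable def deltaF (p : ℕ) [Fact p.Prime] (f : ℤ_[p] → ℤ_[p]) (ε : ℝ) : ℝ :=
  sSup (shadowingConsts p f ε)

/-- If `f, g : ℤ_p → ℤ_p` are `p^{-k}`-expansive shadowing maps with
`sup_x ‖f x - g x‖ < min (δ_f(p^{-k}), δ_g(p^{-k}))`, then `f` and `g` are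
topologically conjugate. -/
theorem expansive_shadowing_conjugate (p k : ℕ) [Fact p.Prime] (hk : 1 ≤ k)
    (f g : ℤ_[p] → ℤ_[p]) (hfc : Continuous f) (hgc : Continuous g)
    (hfs : PadicShadowing p f) (hgs : PadicShadowing p g)
    (hfe : ∀ x y : ℤ_[p], x ≠ y → ∃ n : ℕ, (p : ℝ) ^ (-(k : ℤ)) < ‖f^[n] x - f^[n] y‖)
    (hge : ∀ x y : ℤ_[p], x ≠ y → ∃ n : ℕ, (p : ℝ) ^ (-(k : ℤ)) < ‖g^[n] x - g^[n] y‖)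
    (hclose : (⨆ x : ℤ_[p], ‖f x - g x‖) <
      min (deltaF p f ((p : ℝ) ^ (-(k : ℤ)))) (deltaF p g ((p : ℝ) ^ (-(k : ℤ))))) :
    ∃ h : ℤ_[p] ≃ₜ ℤ_[p], ∀ x : ℤ_[p], f (h x) = h (g x) := by
  set ε : ℝ := (p : ℝ) ^ (-(k : ℤ)) with hεdef
  have hppos : (0 : ℝ) < p := by exact_mod_cast (Fact.out : p.Prime).pos
  have εpos : 0 < ε := zpow_pos hppos _
  -- ultrametric triangle
  have u2 : ∀ a b c : ℤ_[p], ‖a - b‖ ≤ ε → ‖b - c‖ ≤ ε → ‖a - c‖ ≤ ε := by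
    intro a b c h1 h2
    have hac : a - c = (a - b) + (b - c) := by ring
    rw [hac]
    exact le_trans (PadicInt.nonarchimedean _ _) (max_le h1 h2)
  -- separation from expansiveness
  have sep_f : ∀ a b : ℤ_[p], (∀ n, ‖f^[n] a - f^[n] b‖ ≤ ε) → a = b := by
    intro a b hab
    by_contra hne
    obtain ⟨n, hn⟩ := hfe a b hne
    exact absurd (hab n) (not_le.2 hn)
  have sep_g : ∀ a b : ℤ_[p], (∀ n, ‖g^[n] a - g^[n] b‖ ≤ ε) → a = b := by
    intro a b hab
    by_contra hne
    obtain ⟨n, hn⟩ := hge a b hne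
    exact absurd (hab n) (not_le.2 hn)
  -- sup distance bound
  have bdd : BddAbove (Set.range fun x : ℤ_[p] => ‖f x - g x‖) := by
    refine ⟨2, ?_⟩
    rintro r ⟨x, rfl⟩
    calc ‖f x - g x‖ ≤ ‖f x‖ + ‖g x‖ := norm_sub_le _ _
      _ ≤ 1 + 1 := add_le_add (PadicInt.norm_le_one _) (PadicInt.norm_le_one _)
      _ = 2 := by norm_num
  have hsup : ∀ x : ℤ_[p], ‖f x - g x‖ ≤ ⨆ y : ℤ_[p], ‖f y - g y‖ :=
    fun x => le_ciSup bdd x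
  -- get a shadowing constant for f above the sup
  obtain ⟨δf, hδf_mem, hδf_gt⟩ :=
    exists_lt_of_lt_csSup (by exact hfs ε εpos) (lt_of_lt_of_le hclose (min_le_left _ _))
  obtain ⟨δg, hδg_mem, hδg_gt⟩ :=
    exists_lt_of_lt_csSup (by exact hgs ε εpos) (lt_of_lt_of_le hclose (min_le_right _ _))
  -- the conjugating map H
  have exH : ∀ x : ℤ_[p], ∃ y : ℤ_[p], ∀ n : ℕ, ‖g^[n] x - f^[n] y‖ ≤ ε := by
    intro x
    refine hδf_mem.2 (fun n => g^[n] x) ?_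
    intro n
    show ‖f (g^[n] x) - g^[n + 1] x‖ ≤ δf
    rw [Function.iterate_succ_apply']
    calc ‖f (g^[n] x) - g (g^[n] x)‖ ≤ ⨆ y : ℤ_[p], ‖f y - g y‖ := hsup _
      _ ≤ δf := le_of_lt hδf_gt
  choose H hH using exH
  have exH' : ∀ y : ℤ_[p], ∃ x : ℤ_[p], ∀ n : ℕ, ‖f^[n] y - g^[n] x‖ ≤ ε := by
    intro y
    refine hδg_mem.2 (fun n => f^[n] y) ?_
    intro n
    show ‖g (f^[n] y) - f^[n + 1] y‖ ≤ δg
    rw [Function.iterate_succ_apply']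
    calc ‖g (f^[n] y) - f (f^[n] y)‖ = ‖f (f^[n] y) - g (f^[n] y)‖ := norm_sub_rev _ _
      _ ≤ ⨆ z : ℤ_[p], ‖f z - g z‖ := hsup _
      _ ≤ δg := le_of_lt hδg_gt
  -- injectivity
  have hinj : Function.Injective H := by
    intro a b hab
    refine sep_g a b fun n => ?_
    refine u2 _ _ _ (hH a n) ?_
    rw [hab]
    calc ‖f^[n] (H b) - g^[n] b‖ = ‖g^[n] b - f^[n] (H b)‖ := norm_sub_rev _ _
      _ ≤ ε := hH b n
  -- surjectivity
  have hsurj : Function.Surjective H := by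
    intro y
    obtain ⟨x, hx⟩ := exH' y
    refine ⟨x, (sep_f y (H x) fun n => u2 _ _ _ (hx n) (hH x n)).symm⟩
  -- conjugacy
  have hconj : ∀ x : ℤ_[p], f (H x) = H (g x) := by
    intro x
    refine sep_f (f (H x)) (H (g x)) fun n => ?_
    have h1 : ‖g^[n] (g x) - f^[n] (f (H x))‖ ≤ ε := by
      rw [← Function.iterate_succ_apply, ← Function.iterate_succ_apply]
      exact hH x (n + 1)
    refine u2 _ _ _ ?_ (hH (g x) n)
    calc ‖f^[n] (f (H x)) - g^[n] (g x)‖ = ‖g^[n] (g x) - f^[n] (f (H x))‖ := norm_sub_rev _ _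
      _ ≤ ε := h1
  -- uniform expansiveness for f, via compactness
  have hunif : ∀ η : ℝ, 0 < η → ∃ N : ℕ, ∀ a b : ℤ_[p],
      (∀ n ≤ N, ‖f^[n] a - f^[n] b‖ ≤ ε) → ‖a - b‖ < η := by
    intro η hη
    set s : Set (ℤ_[p] × ℤ_[p]) := {q | η ≤ ‖q.1 - q.2‖} with hs
    have hs_closed : IsClosed s :=
      isClosed_le continuous_const ((continuous_fst.sub continuous_snd).norm)
    have hs_compact : IsCompact s := hs_closed.isCompact
    set Z : ℕ → Set (ℤ_[p] × ℤ_[p]) := fun n => {q | ‖f^[n] q.1 - f^[n] q.2‖ ≤ ε} with hZ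
    have hZ_closed : ∀ n, IsClosed (Z n) := by
      intro n
      exact isClosed_le (((hfc.iterate n).comp continuous_fst).sub
        ((hfc.iterate n).comp continuous_snd)).norm continuous_const
    have hempty : s ∩ ⋂ n, Z n = ∅ := by
      ext q
      simp only [Set.mem_inter_iff, Set.mem_iInter, Set.mem_empty_iff_false, iff_false,
        not_and]
      intro hqs hqZ
      have := sep_f q.1 q.2 fun n => hqZ n
      rw [hs] at hqs
      simp only [Set.mem_setOf_eq, this, sub_self, norm_zero] at hqs
      exact absurd hqs (not_le.2 hη)
    obtain ⟨u, hu⟩ := hs_compact.elim_finite_subfamily_closed Z hZ_closed hempty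
    refine ⟨u.sup id, fun a b hab => ?_⟩
    by_contra hge'
    have hmem : (a, b) ∈ s ∩ ⋂ n ∈ u, Z n := by
      refine ⟨not_lt.1 hge', ?_⟩
      simp only [Set.mem_iInter]
      intro n hn
      exact hab n (Finset.le_sup (f := id) hn)
    rw [hu] at hmem
    exact hmem
  -- continuity of H
  have hcont : Continuous H := by
    rw [Metric.continuous_iff]
    intro x η hη
    obtain ⟨N, hN⟩ := hunif η hη
    have hG : Continuous (fun z : ℤ_[p] => fun i : Fin (N + 1) => g^[(i : ℕ)] z) :=
      continuous_pi fun i => hgc.iterate _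
    rw [Metric.continuous_iff] at hG
    obtain ⟨δ, hδpos, hδ⟩ := hG x ε εpos
    refine ⟨δ, hδpos, fun a ha => ?_⟩
    have hnear : ∀ n ≤ N, ‖g^[n] a - g^[n] x‖ ≤ ε := by
      intro n hn
      have := (dist_pi_lt_iff εpos).1 (hδ a ha) ⟨n, Nat.lt_succ_of_le hn⟩
      rw [dist_eq_norm] at this
      exact le_of_lt this
    have key : ∀ n ≤ N, ‖f^[n] (H a) - f^[n] (H x)‖ ≤ ε := by
      intro n hn
      refine u2 _ _ _ ?_ (u2 _ _ _ (hnear n hn) (hH x n))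
      calc ‖f^[n] (H a) - g^[n] a‖ = ‖g^[n] a - f^[n] (H a)‖ := norm_sub_rev _ _
        _ ≤ ε := hH a n
    rw [dist_eq_norm]
    exact hN (H a) (H x) key
  -- assemble the homeomorphism
  let e : ℤ_[p] ≃ ℤ_[p] := Equiv.ofBijective H ⟨hinj, hsurj⟩
  have hce : Continuous e := hcont
  exact ⟨hce.homeoOfEquivCompactToT2, fun x => hconj x⟩
end

section
/- If f : ℤ_p → ℤ_p is (p^{-k}, p^{k-l}) locally scaling (1 ≤ l < k) and ψ : ℤ_p → ℤ_p is Lipschitz with constant δ < p^{k-l-1}(p−1), then g = f + ψ is again (p^{-k}, p^{k-l}) locally scaling; more specifically, ‖x − y‖_p ≤ p^{-k} implies ‖g(x) − g(y)‖_p = p^{k-l} ‖x − y‖_p. -/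
/-- If `f` is `(p^{-k}, p^{k-l})` locally scaling (`1 ≤ l < k`) and `ψ` is `δ`-Lipschitz
with `δ < p^{k-l-1}(p-1)`, then `g = f + ψ` is again `(p^{-k}, p^{k-l})` locally scaling. -/
theorem locallyScaling_perturbation (p l k : ℕ) [Fact p.Prime]
    (hl : 1 ≤ l) (hlk : l < k) (f ψ : ℤ_[p] → ℤ_[p]) (δ : NNReal)
    (hδ : (δ : ℝ) < (p : ℝ) ^ (k - l - 1) * ((p : ℝ) - 1))
    (hψ : LipschitzWith δ ψ)
    (hf : ∀ x y : ℤ_[p], ‖x - y‖ ≤ (p : ℝ) ^ (-(k : ℤ)) →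
      ‖f x - f y‖ = (p : ℝ) ^ (k - l) * ‖x - y‖) :
    ∀ x y : ℤ_[p], ‖x - y‖ ≤ (p : ℝ) ^ (-(k : ℤ)) →
      ‖(f x + ψ x) - (f y + ψ y)‖ = (p : ℝ) ^ (k - l) * ‖x - y‖ := by
  intro x y hxy
  rcases eq_or_ne x y with rfl | hne
  · simp
  · have hsub : x - y ≠ 0 := sub_ne_zero.mpr hne
    have hx : (0:ℝ) < ‖x - y‖ := norm_pos_iff.mpr hsub
    have hp1 : (1:ℝ) < (p:ℝ) := by
      exact_mod_cast (Fact.out : p.Prime).one_lt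
    have hp0 : (0:ℝ) < (p:ℝ) := by linarith
    have hkl : k - l - 1 + 1 = k - l := by omega
    have hδlt : (δ:ℝ) < (p:ℝ) ^ (k - l) := by
      calc (δ:ℝ) < (p:ℝ) ^ (k - l - 1) * ((p:ℝ) - 1) := hδ
        _ < (p:ℝ) ^ (k - l - 1) * (p:ℝ) := by
            have := pow_pos hp0 (k - l - 1)
            nlinarith
        _ = (p:ℝ) ^ (k - l) := by rw [← pow_succ, hkl]
    have hψlt : ‖ψ x - ψ y‖ < ‖f x - f y‖ := by
      have h1 : ‖ψ x - ψ y‖ ≤ (δ:ℝ) * ‖x - y‖ := by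
        have := hψ.dist_le_mul x y
        simpa [dist_eq_norm] using this
      have h2 : (δ:ℝ) * ‖x - y‖ < (p:ℝ) ^ (k - l) * ‖x - y‖ :=
        mul_lt_mul_of_pos_right hδlt hx
      rw [hf x y hxy]
      linarith
    have hrw : (f x + ψ x) - (f y + ψ y) = (f x - f y) + (ψ x - ψ y) := by ring
    rw [hrw, PadicInt.norm_add_eq_max_of_ne (ne_of_gt hψlt),
      max_eq_left hψlt.le, hf x y hxy]
end

section
/- A map f : ℤ_p → ℤ_p is (p^{-k}, p^k) locally scaling if and only if it is topologically conjugate to S^k by a conjugating homeomorphism h which is an isometry, where S is the shift map on ℤ_p. -/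
/-- The shift map `S` on `ℤ_p`: `S (Σ a_i p^i) = Σ a_{i+1} p^i`. -/
noncomputable def padicShift (p : ℕ) [Fact p.Prime] (x : ℤ_[p]) : ℤ_[p] :=
  ∑' i : ℕ, ((padicDigit p x (i + 1) : ℕ) : ℤ_[p]) * (p : ℤ_[p]) ^ i

namespace PadicShiftAux

open PadicInt Finset

variable {p : ℕ} [hp : Fact p.Prime]

lemma appr_unique (x : ℤ_[p]) (n c : ℕ) (hc : c < p ^ n)
    (h : x - (c : ℤ_[p]) ∈ Ideal.span {(p : ℤ_[p]) ^ n}) : x.appr n = c := by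
  haveI : NeZero (p ^ n) := ⟨(pow_pos hp.out.pos n).ne'⟩
  have h2 := PadicInt.appr_spec n x
  have h3 := PadicInt.zmod_congr_of_sub_mem_span n x (x.appr n) c h2 h
  have hv : ((x.appr n : ZMod (p ^ n))).val = ((c : ZMod (p ^ n))).val := by rw [h3]
  rwa [ZMod.val_cast_of_lt (PadicInt.appr_lt x n), ZMod.val_cast_of_lt hc] at hv

lemma appr_congr (x y : ℤ_[p]) (n : ℕ)
    (h : x - y ∈ Ideal.span {(p : ℤ_[p]) ^ n}) : x.appr n = y.appr n := by
  refine appr_unique x n (y.appr n) (PadicInt.appr_lt y n) ?_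
  have := PadicInt.appr_spec n y
  have : (x - y) + (y - (y.appr n : ℤ_[p])) ∈ Ideal.span {(p : ℤ_[p]) ^ n} :=
    Ideal.add_mem _ h this
  simpa using this

lemma digit_spec (x : ℤ_[p]) (i : ℕ) :
    x.appr (i + 1) = x.appr i + p ^ i * (padicDigit p x i : ℕ) := by
  obtain ⟨c, hc⟩ := PadicInt.dvd_appr_sub_appr x i (i + 1) (Nat.le_succ i)
  have hmono : x.appr i ≤ x.appr (i + 1) := PadicInt.appr_mono x (Nat.le_succ i)
  have hb : x.appr (i + 1) = x.appr i + p ^ i * c := by omega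
  have hclt : c < p := by
    have h1 : x.appr (i + 1) < p ^ (i + 1) := PadicInt.appr_lt x (i + 1)
    rw [hb, pow_succ] at h1
    by_contra hcp
    push_neg at hcp
    have : p ^ i * p ≤ p ^ i * c := Nat.mul_le_mul_left _ hcp
    omega
  have hdig : (padicDigit p x i : ℕ) = c := by
    show x.appr (i + 1) / p ^ i % p = c
    rw [hb, Nat.add_mul_div_left _ _ (pow_pos hp.out.pos i),
      Nat.div_eq_of_lt (PadicInt.appr_lt x i), Nat.zero_add, Nat.mod_eq_of_lt hclt]
  rw [hdig, hb]

lemma appr_zero (x : ℤ_[p]) : x.appr 0 = 0 := by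
  have := PadicInt.appr_lt x 0
  simpa using this

lemma appr_sum (x : ℤ_[p]) (n : ℕ) :
    x.appr n = ∑ i ∈ range n, (padicDigit p x i : ℕ) * p ^ i := by
  induction n with
  | zero => simp [appr_zero]
  | succ n ih =>
    rw [Finset.sum_range_succ, ← ih, digit_spec x n, mul_comm]

lemma summable_norm_bound (u : ℕ → ℤ_[p]) (hu : ∀ i, ‖u i‖ ≤ ((p : ℝ)⁻¹) ^ i) :
    Summable u := by
  have hp1 : (1 : ℝ) < p := by exact_mod_cast hp.out.one_lt
  refine Summable.of_norm_bounded (summable_geometric_of_lt_one (by positivity) ?_) hu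
  rw [inv_lt_one_iff₀]
  right; exact hp1

lemma norm_digit_term (c : ℕ) (i : ℕ) :
    ‖((c : ℤ_[p])) * (p : ℤ_[p]) ^ i‖ ≤ ((p : ℝ)⁻¹) ^ i := by
  rw [norm_mul, norm_pow, PadicInt.norm_p]
  calc ‖((c : ℕ) : ℤ_[p])‖ * ((p:ℝ)⁻¹) ^ i ≤ 1 * ((p:ℝ)⁻¹) ^ i := by
        apply mul_le_mul_of_nonneg_right (PadicInt.norm_le_one _) (by positivity)
    _ = ((p:ℝ)⁻¹) ^ i := one_mul _

lemma tendsto_appr (x : ℤ_[p]) :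
    Filter.Tendsto (fun n => ((x.appr n : ℕ) : ℤ_[p])) Filter.atTop (nhds x) := by
  have hp1 : (1 : ℝ) < p := by exact_mod_cast hp.out.one_lt
  rw [tendsto_iff_norm_sub_tendsto_zero]
  apply squeeze_zero (fun n => norm_nonneg _) (g := fun n => ((p:ℝ)⁻¹) ^ n)
  · intro n
    have := (PadicInt.norm_le_pow_iff_mem_span_pow (x - ((x.appr n : ℕ) : ℤ_[p])) n).mpr
      (PadicInt.appr_spec n x)
    rw [← norm_neg]
    simpa [zpow_neg, ← inv_zpow, zpow_natCast] using this
  · exact tendsto_pow_atTop_nhds_zero_of_lt_one (by positivity)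
      (by rw [inv_lt_one_iff₀]; right; exact hp1)

lemma hasSum_digit (x : ℤ_[p]) :
    HasSum (fun i => ((padicDigit p x i : ℕ) : ℤ_[p]) * (p : ℤ_[p]) ^ i) x := by
  have hs : Summable (fun i => ((padicDigit p x i : ℕ) : ℤ_[p]) * (p : ℤ_[p]) ^ i) :=
    summable_norm_bound _ (fun i => norm_digit_term _ i)
  have h1 := hs.hasSum
  have h2 := h1.tendsto_sum_nat
  have h3 : (fun n => ∑ i ∈ range n, ((padicDigit p x i : ℕ) : ℤ_[p]) * (p : ℤ_[p]) ^ i)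
      = fun n => ((x.appr n : ℕ) : ℤ_[p]) := by
    funext n
    rw [appr_sum x n]
    push_cast
    rfl
  rw [h3] at h2
  have h4 := tendsto_appr x
  rwa [tendsto_nhds_unique h2 h4] at h1

lemma digit_zero (x : ℤ_[p]) : (padicDigit p x 0 : ℕ) = x.appr 1 := by
  show x.appr 1 / p ^ 0 % p = x.appr 1
  have := PadicInt.appr_lt x 1
  rw [pow_one] at this
  simp [Nat.mod_eq_of_lt this]

lemma p_mul_shift (x : ℤ_[p]) :
    (p : ℤ_[p]) * padicShift p x = x - ((padicDigit p x 0 : ℕ) : ℤ_[p]) := by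
  set f : ℕ → ℤ_[p] := fun i => ((padicDigit p x i : ℕ) : ℤ_[p]) * (p : ℤ_[p]) ^ i with hf
  have h1 : HasSum (fun n => f (n + 1)) (x - f 0) := by
    rw [hasSum_nat_add_iff 1]
    simpa using hasSum_digit x
  have hg : Summable (fun n => ((padicDigit p x (n + 1) : ℕ) : ℤ_[p]) * (p : ℤ_[p]) ^ n) :=
    summable_norm_bound _ (fun i => norm_digit_term _ i)
  have h2 : HasSum (fun n => (p : ℤ_[p]) *
      (((padicDigit p x (n + 1) : ℕ) : ℤ_[p]) * (p : ℤ_[p]) ^ n)) ((p : ℤ_[p]) * padicShift p x) :=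
    hg.hasSum.mul_left _
  have h3 : (fun n => (p : ℤ_[p]) *
      (((padicDigit p x (n + 1) : ℕ) : ℤ_[p]) * (p : ℤ_[p]) ^ n)) = fun n => f (n + 1) := by
    funext n
    rw [hf]
    simp [pow_succ]
    ring
  rw [h3] at h2
  have := tendsto_nhds_unique h2.tendsto_sum_nat h1.tendsto_sum_nat
  rw [this, hf]
  simp

lemma p_ne_zero : ((p : ℤ_[p])) ≠ 0 := by
  intro h
  have := congrArg (fun z : ℤ_[p] => ‖z‖) h
  simp only [PadicInt.norm_p, norm_zero] at this
  have hp1 : (1 : ℝ) < p := by exact_mod_cast hp.out.one_lt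
  rw [inv_eq_zero] at this
  linarith

lemma shift_scaling {x y : ℤ_[p]} (hxy : ‖x - y‖ ≤ (p : ℝ) ^ (-1 : ℤ)) :
    ‖padicShift p x - padicShift p y‖ = p * ‖x - y‖ := by
  have hd : x.appr 1 = y.appr 1 := by
    apply appr_congr
    rw [← PadicInt.norm_le_pow_iff_mem_span_pow]
    exact_mod_cast hxy
  have key : (p : ℤ_[p]) * (padicShift p x - padicShift p y) = x - y := by
    rw [mul_sub, p_mul_shift, p_mul_shift, digit_zero, digit_zero, hd]
    ring
  have hn := congrArg (fun z : ℤ_[p] => ‖z‖) key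
  simp only [norm_mul, PadicInt.norm_p] at hn
  have hp0 : (0 : ℝ) < p := by exact_mod_cast hp.out.pos
  field_simp at hn ⊢
  linarith [hn]

lemma shift_iterate_scaling (k : ℕ) : ∀ x y : ℤ_[p], ‖x - y‖ ≤ (p : ℝ) ^ (-(k : ℤ)) →
    ‖(padicShift p)^[k] x - (padicShift p)^[k] y‖ = (p : ℝ) ^ k * ‖x - y‖ := by
  have hp1 : (1 : ℝ) < p := by exact_mod_cast hp.out.one_lt
  induction k with
  | zero => intro x y _; simp
  | succ k ih =>
    intro x y hxy
    have h1 : ‖x - y‖ ≤ (p : ℝ) ^ (-1 : ℤ) := by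
      refine hxy.trans (zpow_le_zpow_right₀ hp1.le ?_)
      omega
    have h2 : ‖padicShift p x - padicShift p y‖ = p * ‖x - y‖ := shift_scaling h1
    have h3 : ‖padicShift p x - padicShift p y‖ ≤ (p : ℝ) ^ (-(k : ℤ)) := by
      rw [h2]
      calc (p : ℝ) * ‖x - y‖ ≤ (p : ℝ) * (p : ℝ) ^ (-((k:ℕ)+1) : ℤ) := by
            apply mul_le_mul_of_nonneg_left _ (by positivity)
            exact_mod_cast hxy
        _ = (p : ℝ) ^ ((1 : ℤ) + (-((k:ℕ)+1) : ℤ)) := by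
            rw [zpow_add₀ (by positivity : (p:ℝ) ≠ 0), zpow_one]
        _ = (p : ℝ) ^ (-(k : ℤ)) := by norm_num
    rw [Function.iterate_succ_apply, Function.iterate_succ_apply, ih _ _ h3, h2, pow_succ]
    ring

lemma shift_iterate_add (k : ℕ) : ∀ (c : ℕ), c < p ^ k → ∀ z : ℤ_[p],
    (padicShift p)^[k] ((c : ℤ_[p]) + (p : ℤ_[p]) ^ k * z) = z := by
  induction k with
  | zero =>
    intro c hc z
    have hc0 : c = 0 := by simpa using hc
    subst hc0
    simp
  | succ k ih =>
    intro c hc z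
    set w : ℤ_[p] := (c : ℤ_[p]) + (p : ℤ_[p]) ^ (k + 1) * z with hw
    have hcast : (c : ℤ_[p]) = (p : ℤ_[p]) * ((c / p : ℕ) : ℤ_[p]) + ((c % p : ℕ) : ℤ_[p]) := by
      conv_lhs => rw [← Nat.div_add_mod c p]
      push_cast
      ring
    have happr : w.appr 1 = c % p := by
      apply appr_unique
      · rw [pow_one]; exact Nat.mod_lt _ hp.out.pos
      · rw [Ideal.mem_span_singleton, pow_one]
        refine ⟨((c / p : ℕ) : ℤ_[p]) + (p : ℤ_[p]) ^ k * z, ?_⟩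
        rw [hw, hcast]
        ring
    have key : padicShift p w = ((c / p : ℕ) : ℤ_[p]) + (p : ℤ_[p]) ^ k * z := by
      have h1 := p_mul_shift w
      rw [digit_zero, happr] at h1
      apply mul_left_cancel₀ (p_ne_zero (p := p))
      rw [h1, hw, hcast]
      ring
    rw [Function.iterate_succ_apply, key]
    exact ih (c / p) (Nat.div_lt_of_lt_mul (by rw [← pow_succ']; exact hc)) z

end PadicShiftAux

namespace PadicShiftAux

open PadicInt Finset

variable {p : ℕ} [hp : Fact p.Prime]

/-- The conjugating map: `h x = Σ_j (f^[j] x mod p^k) p^(k j)`. -/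
noncomputable def conjMap (p k : ℕ) [Fact p.Prime] (f : ℤ_[p] → ℤ_[p]) (x : ℤ_[p]) : ℤ_[p] :=
  ∑' j : ℕ, (((f^[j] x).appr k : ℕ) : ℤ_[p]) * (p : ℤ_[p]) ^ (k * j)

lemma norm_term_le (c : ℕ) (k i : ℕ) (hk : 1 ≤ k) :
    ‖((c : ℤ_[p])) * (p : ℤ_[p]) ^ (k * i)‖ ≤ ((p : ℝ)⁻¹) ^ i := by
  have hp1 : (1 : ℝ) < p := by exact_mod_cast hp.out.one_lt
  refine (norm_digit_term c (k * i)).trans ?_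
  apply pow_le_pow_of_le_one (by positivity) (by rw [inv_le_one_iff₀]; right; exact hp1.le)
  exact Nat.le_mul_of_pos_left i hk

lemma summable_conj (k : ℕ) (hk : 1 ≤ k) (f : ℤ_[p] → ℤ_[p]) (x : ℤ_[p]) :
    Summable (fun j : ℕ => (((f^[j] x).appr k : ℕ) : ℤ_[p]) * (p : ℤ_[p]) ^ (k * j)) :=
  summable_norm_bound _ (fun i => norm_term_le _ k i hk)

lemma conj_rec (k : ℕ) (hk : 1 ≤ k) (f : ℤ_[p] → ℤ_[p]) (x : ℤ_[p]) :
    conjMap p k f x = ((x.appr k : ℕ) : ℤ_[p]) + (p : ℤ_[p]) ^ k * conjMap p k f (f x) := by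
  set g : ℕ → ℤ_[p] := fun j => (((f^[j] x).appr k : ℕ) : ℤ_[p]) * (p : ℤ_[p]) ^ (k * j) with hg
  have h1 : HasSum (fun n => g (n + 1)) (conjMap p k f x - g 0) := by
    rw [hasSum_nat_add_iff 1]
    have := (summable_conj k hk f x).hasSum
    simpa [hg, conjMap] using this
  have h2 : (fun n => g (n + 1)) = fun n =>
      (p : ℤ_[p]) ^ k * ((((f^[n] (f x)).appr k : ℕ) : ℤ_[p]) * (p : ℤ_[p]) ^ (k * n)) := by
    funext n
    rw [hg]
    simp only [Function.iterate_succ_apply]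
    rw [Nat.mul_succ, pow_add]
    ring
  rw [h2] at h1
  have h3 : HasSum (fun n =>
      (p : ℤ_[p]) ^ k * ((((f^[n] (f x)).appr k : ℕ) : ℤ_[p]) * (p : ℤ_[p]) ^ (k * n)))
      ((p : ℤ_[p]) ^ k * conjMap p k f (f x)) := (summable_conj k hk f (f x)).hasSum.mul_left _
  have h4 := tendsto_nhds_unique h1.tendsto_sum_nat h3.tendsto_sum_nat
  have hg0 : g 0 = ((x.appr k : ℕ) : ℤ_[p]) := by simp [hg]
  rw [hg0] at h4
  linear_combination h4

lemma conj_conjugate (k : ℕ) (hk : 1 ≤ k) (f : ℤ_[p] → ℤ_[p]) (x : ℤ_[p]) :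
    (padicShift p)^[k] (conjMap p k f x) = conjMap p k f (f x) := by
  rw [conj_rec k hk f x]
  exact shift_iterate_add k (x.appr k) (PadicInt.appr_lt x k) _

end PadicShiftAux

namespace PadicShiftAux

open PadicInt Finset

variable {p : ℕ} [hp : Fact p.Prime]

lemma conj_isometry (k : ℕ) (hk : 1 ≤ k) (f : ℤ_[p] → ℤ_[p])
    (hf : ∀ x y : ℤ_[p], ‖x - y‖ ≤ (p : ℝ) ^ (-(k : ℤ)) →
      ‖f x - f y‖ = (p : ℝ) ^ k * ‖x - y‖)
    (x y : ℤ_[p]) : ‖conjMap p k f x - conjMap p k f y‖ = ‖x - y‖ := by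
  have hp1 : (1 : ℝ) < p := by exact_mod_cast hp.out.one_lt
  have hp0 : (0 : ℝ) < p := by positivity
  rcases eq_or_ne x y with rfl | hne
  · simp
  have hxy0 : x - y ≠ 0 := sub_ne_zero.mpr hne
  -- the valuation m of x - y
  obtain ⟨m, hm⟩ : ∃ m : ℕ, ‖x - y‖ = (p : ℝ) ^ (-(m : ℤ)) := by
    refine ⟨(x - y).valuation, ?_⟩
    rw [PadicInt.norm_eq_zpow_neg_valuation hxy0]
  obtain ⟨q, r, hr, hqr⟩ : ∃ q r : ℕ, r < k ∧ k * q + r = m :=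
    ⟨m / k, m % k, Nat.mod_lt _ hk, Nat.div_add_mod m k⟩
  -- Step A: iterated scaling
  have hA : ∀ j : ℕ, k * j ≤ m →
      ‖f^[j] x - f^[j] y‖ = (p : ℝ) ^ ((k * j : ℤ) - m) := by
    intro j
    induction j with
    | zero => intro _; simpa using hm
    | succ j ih =>
      intro hj
      have hj' : k * j ≤ m := le_trans (Nat.mul_le_mul_left _ (Nat.le_succ j)) hj
      have h1 := ih hj'
      have h2 : ‖f^[j] x - f^[j] y‖ ≤ (p : ℝ) ^ (-(k : ℤ)) := by
        rw [h1]
        apply zpow_le_zpow_right₀ hp1.le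
        have : (k : ℤ) * (j + 1) ≤ m := by exact_mod_cast hj
        push_cast
        linarith
      rw [Function.iterate_succ_apply', Function.iterate_succ_apply', hf _ _ h2, h1,
        ← zpow_natCast (p : ℝ) k, ← zpow_add₀ (ne_of_gt hp0)]
      congr 1
      push_cast
      ring
  -- Step B: the first q blocks agree
  have hB : ∀ j : ℕ, j < q → (f^[j] x).appr k = (f^[j] y).appr k := by
    intro j hj
    apply appr_congr
    rw [← PadicInt.norm_le_pow_iff_mem_span_pow]
    have hj1 : k * (j + 1) ≤ m := by
      calc k * (j + 1) ≤ k * q := Nat.mul_le_mul_left _ hj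
        _ ≤ m := by omega
    rw [hA j (by nlinarith [hj1] : k * j ≤ m)]
    apply zpow_le_zpow_right₀ hp1.le
    have : (k : ℤ) * (j + 1) ≤ m := by exact_mod_cast hj1
    push_cast
    linarith
  -- Step C: block q differs with norm p^(-r)
  have hq_le : k * q ≤ m := by omega
  have hCuv : ‖f^[q] x - f^[q] y‖ = (p : ℝ) ^ (-(r : ℤ)) := by
    rw [hA q hq_le]
    congr 1
    have : (k : ℤ) * q + r = m := by exact_mod_cast hqr
    push_cast
    linarith
  have hC : ‖(((f^[q] x).appr k : ℕ) : ℤ_[p]) - (((f^[q] y).appr k : ℕ) : ℤ_[p])‖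
      = (p : ℝ) ^ (-(r : ℤ)) := by
    set u := f^[q] x
    set v := f^[q] y
    set A : ℤ_[p] := ((u.appr k : ℕ) : ℤ_[p])
    set B : ℤ_[p] := ((v.appr k : ℕ) : ℤ_[p])
    have he : A - B = (u - v) + (-((u - A) - (v - B))) := by ring
    have hnorm_e : ‖-((u - A) - (v - B))‖ ≤ (p : ℝ) ^ (-(k : ℤ)) := by
      rw [norm_neg, sub_eq_add_neg]
      refine le_trans (PadicInt.nonarchimedean _ _) (max_le ?_ ?_)
      · exact (PadicInt.norm_le_pow_iff_mem_span_pow _ k).mpr (PadicInt.appr_spec k u)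
      · rw [norm_neg]
        exact (PadicInt.norm_le_pow_iff_mem_span_pow _ k).mpr (PadicInt.appr_spec k v)
    have hlt : ‖-((u - A) - (v - B))‖ < ‖u - v‖ := by
      rw [hCuv]
      refine lt_of_le_of_lt hnorm_e ?_
      apply zpow_lt_zpow_right₀ hp1
      omega
    rw [he, add_comm, PadicInt.norm_add_eq_max_of_ne (ne_of_lt hlt), max_eq_right hlt.le, hCuv]
  -- Step D: partial sums have norm p^(-m) eventually
  set gx : ℕ → ℤ_[p] := fun j => (((f^[j] x).appr k : ℕ) : ℤ_[p]) * (p : ℤ_[p]) ^ (k * j) with hgx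
  set gy : ℕ → ℤ_[p] := fun j => (((f^[j] y).appr k : ℕ) : ℤ_[p]) * (p : ℤ_[p]) ^ (k * j) with hgy
  have hterm_q : ‖gx q - gy q‖ = (p : ℝ) ^ (-(m : ℤ)) := by
    rw [hgx, hgy]
    simp only
    rw [← sub_mul, norm_mul, PadicInt.norm_p_pow, hC,
      ← zpow_add₀ (ne_of_gt hp0)]
    congr 1
    have : (k : ℤ) * q + r = m := by exact_mod_cast hqr
    push_cast
    linarith
  have hterm_small : ∀ n : ℕ, q < n → ‖gx n - gy n‖ < (p : ℝ) ^ (-(m : ℤ)) := by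
    intro n hn
    have h1 : ‖gx n - gy n‖ ≤ (p : ℝ) ^ (-(k * n : ℤ)) := by
      rw [sub_eq_add_neg]
      refine le_trans (PadicInt.nonarchimedean _ _) (max_le ?_ ?_)
      · rw [hgx]
        simp only
        rw [norm_mul, PadicInt.norm_p_pow]
        calc _ ≤ 1 * (p:ℝ) ^ (-(k * n : ℤ)) := by
              apply mul_le_mul_of_nonneg_right (PadicInt.norm_le_one _) (by positivity)
          _ = _ := one_mul _
      · rw [norm_neg, hgy]
        simp only
        rw [norm_mul, PadicInt.norm_p_pow]
        calc _ ≤ 1 * (p:ℝ) ^ (-(k * n : ℤ)) := by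
              apply mul_le_mul_of_nonneg_right (PadicInt.norm_le_one _) (by positivity)
          _ = _ := one_mul _
    have h4 : k * (q + 1) = k * q + k := by ring
    have h2 : k * (q + 1) ≤ k * n := Nat.mul_le_mul_left _ hn
    have h3 : m < k * n := by omega
    refine lt_of_le_of_lt h1 ?_
    apply zpow_lt_zpow_right₀ hp1
    have h5 : (m : ℤ) < (k : ℤ) * n := by exact_mod_cast h3
    linarith
  have hD : ∀ n : ℕ, q < n → ‖∑ j ∈ range n, (gx j - gy j)‖ = (p : ℝ) ^ (-(m : ℤ)) := by
    intro n
    induction n with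
    | zero => omega
    | succ n ih =>
      intro hn
      rcases Nat.lt_or_ge q n with h | h
      · -- n > q : add a small term
        have hmax := PadicInt.norm_add_eq_max_of_ne
          (q := ∑ j ∈ range n, (gx j - gy j)) (r := gx n - gy n)
          (by rw [ih h]; exact ne_of_gt (hterm_small n h))
        rw [Finset.sum_range_succ, hmax, ih h,
          max_eq_left (le_of_lt (hterm_small n h))]
      · -- n = q : first nonzero term
        have hnq : q = n := by omega
        subst hnq
        have hzero : ∑ j ∈ range q, (gx j - gy j) = 0 := by
          apply Finset.sum_eq_zero
          intro j hj
          rw [Finset.mem_range] at hj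
          rw [hgx, hgy]
          simp only
          rw [hB j hj]
          ring
        rw [Finset.sum_range_succ, hzero, zero_add, hterm_q]
  -- conclude
  have hsum : HasSum (fun j => gx j - gy j) (conjMap p k f x - conjMap p k f y) :=
    (summable_conj k hk f x).hasSum.sub (summable_conj k hk f y).hasSum
  have h5 := (continuous_norm.tendsto _).comp hsum.tendsto_sum_nat
  have h6 : Filter.Tendsto (fun n => ‖∑ j ∈ range n, (gx j - gy j)‖) Filter.atTop
      (nhds ((p : ℝ) ^ (-(m : ℤ)))) := by
    apply Filter.Tendsto.congr' _ tendsto_const_nhds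
    filter_upwards [Filter.eventually_ge_atTop (q + 1)] with n hn
    exact (hD n (by omega)).symm
  have := tendsto_nhds_unique h5 h6
  rw [this, hm]

end PadicShiftAux

namespace PadicShiftAux

lemma isometry_iterate {α : Type*} [MetricSpace α] {g : α → α} (hg : Isometry g) (n : ℕ) :
    Isometry (g^[n]) := by
  induction n with
  | zero => simpa using isometry_id
  | succ n ih => rw [Function.iterate_succ]; exact ih.comp hg

/-- An isometry of a compact metric space into itself is surjective. -/
lemma surjective_of_isometry {α : Type*} [MetricSpace α] [CompactSpace α]
    {g : α → α} (hg : Isometry g) : Function.Surjective g := by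
  intro z
  by_contra hz
  have hzK : z ∉ Set.range g := by
    rintro ⟨x, hx⟩
    exact hz ⟨x, hx⟩
  have hKc : IsClosed (Set.range g) := (isCompact_range hg.continuous).isClosed
  have hne : (Set.range g).Nonempty := ⟨g z, Set.mem_range_self z⟩
  have hpos : 0 < Metric.infDist z (Set.range g) := (hKc.notMem_iff_infDist_pos hne).1 hzK
  set ε := Metric.infDist z (Set.range g) with hε
  have hsep : ∀ m n : ℕ, m < n → ε ≤ dist (g^[m] z) (g^[n] z) := by
    intro m n hmn
    have h1 : g^[n] z = g^[m] (g^[n - m] z) := by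
      rw [← Function.iterate_add_apply]
      congr 1
      omega
    rw [h1, (isometry_iterate hg m).dist_eq]
    have hmem : g^[n - m] z ∈ Set.range g := by
      refine ⟨g^[n - m - 1] z, ?_⟩
      have h2 : (n - m - 1) + 1 = n - m := by omega
      calc g (g^[n - m - 1] z) = g^[(n - m - 1) + 1] z :=
            (Function.iterate_succ_apply' g _ z).symm
        _ = g^[n - m] z := by rw [h2]
    exact Metric.infDist_le_dist_of_mem hmem
  obtain ⟨t, htf, hcov⟩ := Metric.totallyBounded_iff.mp
    (isCompact_univ : IsCompact (Set.univ : Set α)).totallyBounded (ε / 2) (by positivity)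
  have hchoice : ∀ n : ℕ, ∃ y ∈ t, g^[n] z ∈ Metric.ball y (ε / 2) := by
    intro n
    have := hcov (Set.mem_univ (g^[n] z))
    simpa using this
  choose y hyt hball using hchoice
  haveI := htf.to_subtype
  obtain ⟨a, b, hab, heq⟩ :=
    Finite.exists_ne_map_eq_of_infinite (fun n : ℕ => (⟨y n, hyt n⟩ : t))
  have key : ∀ a b : ℕ, a < b → y a = y b → False := by
    intro a b hlt hy
    have h1 : dist (g^[a] z) (g^[b] z) ≤ dist (g^[a] z) (y a) + dist (y b) (g^[b] z) := by
      rw [hy]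
      exact dist_triangle _ _ _
    have h2 : dist (g^[a] z) (y a) < ε / 2 := Metric.mem_ball.mp (hball a)
    have h3 : dist (y b) (g^[b] z) < ε / 2 := by
      rw [dist_comm]
      exact Metric.mem_ball.mp (hball b)
    have := hsep a b hlt
    linarith
  have hyab : y a = y b := congrArg Subtype.val heq
  rcases hab.lt_or_gt with h | h
  · exact key a b h hyab
  · exact key b a h hyab.symm

end PadicShiftAux

open PadicShiftAux

/-- A map `f : ℤ_p → ℤ_p` is `(p^{-k}, p^k)` locally scaling iff it is topologically
conjugate to `S^k` through an isometric conjugating homeomorphism. -/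
theorem locallyScaling_iff_isometrically_conjugate_shift (p k : ℕ) [Fact p.Prime]
    (hk : 1 ≤ k) (f : ℤ_[p] → ℤ_[p]) :
    (∀ x y : ℤ_[p], ‖x - y‖ ≤ (p : ℝ) ^ (-(k : ℤ)) →
      ‖f x - f y‖ = (p : ℝ) ^ k * ‖x - y‖)
    ↔ ∃ h : ℤ_[p] → ℤ_[p], Isometry h ∧ Function.Bijective h ∧
        ∀ x : ℤ_[p], (padicShift p)^[k] (h x) = h (f x) := by
  constructor
  · intro hf
    refine ⟨conjMap p k f, ?_, ?_, ?_⟩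
    · apply Isometry.of_dist_eq
      intro x y
      rw [dist_eq_norm, dist_eq_norm]
      exact conj_isometry k hk f hf x y
    · have hiso : Isometry (conjMap p k f) := by
        apply Isometry.of_dist_eq
        intro x y
        rw [dist_eq_norm, dist_eq_norm]
        exact conj_isometry k hk f hf x y
      exact ⟨hiso.injective, surjective_of_isometry hiso⟩
    · exact conj_conjugate k hk f
  · rintro ⟨h, hiso, hbij, hconj⟩
    intro x y hxy
    have h1 : ‖h (f x) - h (f y)‖ = ‖f x - f y‖ := by
      rw [← dist_eq_norm, ← dist_eq_norm]
      exact hiso.dist_eq _ _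
    have h2 : ‖h x - h y‖ = ‖x - y‖ := by
      rw [← dist_eq_norm, ← dist_eq_norm]
      exact hiso.dist_eq _ _
    have h3 : ‖h x - h y‖ ≤ (p : ℝ) ^ (-(k : ℤ)) := by rw [h2]; exact hxy
    have h4 := shift_iterate_scaling k (h x) (h y) h3
    rw [hconj, hconj, h1, h2] at h4
    exact h4
end

section
/- The map h : ℤ_p → ℤ_p associated to a (p^{-k}, p^k) locally scaling map f, defined by letting the digits of h(x) be the concatenation of the first k digits of the successive iterates f^q(x) (the (qk+r)-th digit of h(x) equals the r-th digit of f^q(x), 0 ≤ r < k), is an isometry satisfying S^k ∘ h = h ∘ f. -/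
open PadicInt Finset
variable {p : ℕ} [hp : Fact p.Prime]

lemma mySummable (d : ℕ → Fin p) : Summable (fun i => ((d i : ℕ) : ℤ_[p]) * (p:ℤ_[p]) ^ i) := by
  apply NonarchimedeanAddGroup.summable_of_tendsto_cofinite_zero
  rw [Nat.cofinite_eq_atTop]
  have h1 : Filter.Tendsto (fun i : ℕ => (p:ℤ_[p]) ^ i) Filter.atTop (nhds 0) := by
    apply tendsto_pow_atTop_nhds_zero_of_norm_lt_one
    rw [PadicInt.norm_p]
    exact inv_lt_one_of_one_lt₀ (by exact_mod_cast hp.out.one_lt)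
  have h2 : Filter.Tendsto (fun i : ℕ => ‖((d i : ℕ) : ℤ_[p]) * (p:ℤ_[p]) ^ i‖) Filter.atTop (nhds 0) := by
    apply squeeze_zero (fun i => norm_nonneg _) (fun i => ?_) (norm_zero (E := ℤ_[p]) ▸ h1.norm)
    calc ‖((d i : ℕ) : ℤ_[p]) * (p:ℤ_[p]) ^ i‖ ≤ ‖((d i : ℕ) : ℤ_[p])‖ * ‖(p:ℤ_[p]) ^ i‖ := norm_mul_le _ _
    _ ≤ 1 * ‖(p:ℤ_[p]) ^ i‖ := mul_le_mul_of_nonneg_right (PadicInt.norm_le_one _) (norm_nonneg _)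
    _ = ‖(p:ℤ_[p]) ^ i‖ := one_mul _
  exact tendsto_zero_iff_norm_tendsto_zero.2 h2

lemma myApprUnique (x : ℤ_[p]) (n : ℕ) (a : ℕ) (ha : a < p ^ n)
    (hx : ‖x - a‖ ≤ (p:ℝ) ^ (-(n:ℤ))) : x.appr n = a := by
  have h1 : ‖x - x.appr n‖ ≤ (p:ℝ) ^ (-(n:ℤ)) :=
    (norm_le_pow_iff_mem_span_pow _ n).2 (appr_spec n x)
  have key : (((x.appr n : ℤ) - (a:ℤ) : ℤ) : ℤ_[p]) = (x - a) - (x - x.appr n) := by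
    push_cast; ring
  have h2 : ‖(((x.appr n : ℤ) - (a:ℤ) : ℤ) : ℤ_[p])‖ ≤ (p:ℝ) ^ (-(n:ℤ)) := by
    rw [key, sub_eq_add_neg]
    exact le_trans (PadicInt.nonarchimedean _ _)
      (max_le hx (le_trans (le_of_eq (norm_neg _)) h1))
  rw [norm_int_le_pow_iff_dvd] at h2
  have hB : (p:ℤ)^n = ((p^n : ℕ) : ℤ) := by push_cast; ring
  rw [hB] at h2
  have habs : |(x.appr n : ℤ) - a| < ((p^n : ℕ) : ℤ) := by
    have := appr_lt x n
    rw [abs_sub_lt_iff]; omega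
  have := Int.eq_zero_of_abs_lt_dvd h2 habs
  omega

lemma myApprZero (x : ℤ_[p]) : x.appr 0 = 0 := rfl

lemma myApprSucc (x : ℤ_[p]) (n : ℕ) :
    x.appr (n + 1) = x.appr n + (padicDigit p x n : ℕ) * p ^ n := by
  obtain ⟨c, hc⟩ := dvd_appr_sub_appr x n (n+1) (Nat.le_succ n)
  have hmono : x.appr n ≤ x.appr (n+1) := appr_mono x (Nat.le_succ n)
  have h1 : x.appr (n+1) = x.appr n + p ^ n * c := by omega
  have hlt : x.appr (n+1) < p ^ (n+1) := appr_lt x (n+1)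
  have hpn : 0 < p ^ n := pow_pos hp.out.pos n
  have hcp : c < p := by
    by_contra hcon
    push_neg at hcon
    have : p ^ n * p ≤ p ^ n * c := Nat.mul_le_mul_left _ hcon
    rw [← pow_succ] at this
    omega
  have hdig : (padicDigit p x n : ℕ) = c := by
    show x.appr (n+1) / p ^ n % p = c
    rw [h1, Nat.add_mul_div_left _ _ hpn, Nat.div_eq_of_lt (appr_lt x n), zero_add,
      Nat.mod_eq_of_lt hcp]
  rw [hdig, h1, Nat.mul_comm]

lemma myDigitEqOfNormLe {x y : ℤ_[p]} {n : ℕ} (hxy : ‖x - y‖ ≤ (p:ℝ) ^ (-(n:ℤ)))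
    {i : ℕ} (hi : i < n) : padicDigit p x i = padicDigit p y i := by
  have hp1 : (1:ℝ) < p := by exact_mod_cast hp.out.one_lt
  have h1 : ‖x - y‖ ≤ (p:ℝ) ^ (-((i+1:ℕ):ℤ)) :=
    le_trans hxy (zpow_le_zpow_right₀ hp1.le (by omega))
  have h2 : ‖y - y.appr (i+1)‖ ≤ (p:ℝ) ^ (-((i+1:ℕ):ℤ)) :=
    (norm_le_pow_iff_mem_span_pow _ _).2 (appr_spec _ y)
  have h3 : ‖x - y.appr (i+1)‖ ≤ (p:ℝ) ^ (-((i+1:ℕ):ℤ)) := by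
    have : x - y.appr (i+1) = (x - y) + (y - y.appr (i+1)) := by ring
    rw [this]
    exact le_trans (PadicInt.nonarchimedean _ _) (max_le h1 h2)
  have := myApprUnique x (i+1) (y.appr (i+1)) (appr_lt y (i+1)) h3
  show (⟨_, _⟩ : Fin p) = ⟨_, _⟩
  simp only [Fin.mk.injEq, this]

lemma myNormLeOfDigitEq {x y : ℤ_[p]} {n : ℕ}
    (hd : ∀ i < n, padicDigit p x i = padicDigit p y i) : ‖x - y‖ ≤ (p:ℝ) ^ (-(n:ℤ)) := by
  have happr : x.appr n = y.appr n := by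
    induction n with
    | zero => rfl
    | succ m ih =>
      rw [myApprSucc, myApprSucc, ih (fun i hi => hd i (by omega)), hd m (by omega)]
  have h1 : ‖x - x.appr n‖ ≤ (p:ℝ) ^ (-(n:ℤ)) :=
    (norm_le_pow_iff_mem_span_pow _ _).2 (appr_spec _ x)
  have h2 : ‖y - y.appr n‖ ≤ (p:ℝ) ^ (-(n:ℤ)) :=
    (norm_le_pow_iff_mem_span_pow _ _).2 (appr_spec _ y)
  have : x - y = (x - x.appr n) + -(y - y.appr n) := by rw [happr]; ring
  rw [this]
  exact le_trans (PadicInt.nonarchimedean _ _) (max_le h1 (le_trans (le_of_eq (norm_neg _)) h2))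

lemma myEqOfDigitEq {x y : ℤ_[p]} (hd : ∀ i, padicDigit p x i = padicDigit p y i) : x = y := by
  have hp1 : (1:ℝ) < p := by exact_mod_cast hp.out.one_lt
  have h0 : ‖x - y‖ ≤ 0 := by
    have htend : Filter.Tendsto (fun n : ℕ => (p:ℝ) ^ (-(n:ℤ))) Filter.atTop (nhds 0) := by
      have : ∀ n : ℕ, (p:ℝ) ^ (-(n:ℤ)) = ((p:ℝ)⁻¹) ^ n := fun n => by
        rw [zpow_neg, zpow_natCast, inv_pow]
      simp only [this]
      exact tendsto_pow_atTop_nhds_zero_of_lt_one (by positivity)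
        (inv_lt_one_of_one_lt₀ hp1)
    exact ge_of_tendsto' htend (fun n => myNormLeOfDigitEq (fun i _ => hd i))
  have := norm_nonneg (x - y)
  have : ‖x - y‖ = 0 := le_antisymm h0 this
  rwa [norm_eq_zero, sub_eq_zero] at this

lemma myDigitTsum (d : ℕ → Fin p) (j : ℕ) :
    padicDigit p (∑' i : ℕ, ((d i : ℕ) : ℤ_[p]) * (p:ℤ_[p]) ^ i) j = d j := by
  have hp1 : (1:ℝ) < p := by exact_mod_cast hp.out.one_lt
  set a : ℕ → ℤ_[p] := fun i => ((d i : ℕ) : ℤ_[p]) * (p:ℤ_[p]) ^ i with ha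
  set y : ℤ_[p] := ∑' i, a i with hy
  set N : ℕ → ℕ := fun n => ∑ i ∈ Finset.range n, (d i : ℕ) * p ^ i with hN
  have hNsucc : ∀ n, N (n+1) = N n + (d n : ℕ) * p ^ n := fun n => Finset.sum_range_succ _ n
  have hNlt : ∀ n, N n < p ^ n := by
    intro n
    induction n with
    | zero => simp [hN]
    | succ m ih =>
      have hd : (d m : ℕ) + 1 ≤ p := (d m).2
      have h2 : ((d m : ℕ) + 1) * p ^ m ≤ p * p ^ m := Nat.mul_le_mul_right _ hd
      rw [add_mul, one_mul] at h2
      have h3 : p ^ (m+1) = p * p ^ m := by rw [pow_succ, Nat.mul_comm]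
      rw [hNsucc]; omega
  have hNcast : ∀ n, ((N n : ℕ) : ℤ_[p]) = ∑ i ∈ Finset.range n, a i := by
    intro n; rw [hN]; push_cast; rfl
  have happr : ∀ n, y.appr n = N n := by
    intro n
    apply myApprUnique _ _ _ (hNlt n)
    have hs := mySummable d
    have hsum := Summable.sum_add_tsum_nat_add (f := a) n hs
    have hyN : y - N n = ∑' i, a (i + n) := by
      rw [hNcast, hy, ← hsum]; ring
    rw [hyN]
    apply IsUltrametricDist.norm_tsum_le_of_forall_le_of_nonneg (by positivity)
    intro i
    calc ‖a (i + n)‖ ≤ ‖((d (i+n) : ℕ) : ℤ_[p])‖ * ‖(p:ℤ_[p]) ^ (i+n)‖ := norm_mul_le _ _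
    _ ≤ 1 * ‖(p:ℤ_[p]) ^ (i+n)‖ := mul_le_mul_of_nonneg_right (PadicInt.norm_le_one _) (norm_nonneg _)
    _ = (p:ℝ) ^ (-((i+n:ℕ):ℤ)) := by rw [one_mul, PadicInt.norm_p_pow]
    _ ≤ (p:ℝ) ^ (-(n:ℤ)) := zpow_le_zpow_right₀ hp1.le (by omega)
  have hpj : 0 < p ^ j := pow_pos hp.out.pos j
  apply Fin.ext
  show y.appr (j+1) / p ^ j % p = (d j : ℕ)
  rw [happr, hNsucc, Nat.add_mul_div_right _ _ hpj, Nat.div_eq_of_lt (hNlt j), zero_add,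
    Nat.mod_eq_of_lt (d j).2]

lemma myShiftDigit (x : ℤ_[p]) (i : ℕ) :
    padicDigit p (padicShift p x) i = padicDigit p x (i + 1) :=
  myDigitTsum (fun i => padicDigit p x (i + 1)) i

lemma myShiftIterDigit (x : ℤ_[p]) (k i : ℕ) :
    padicDigit p ((padicShift p)^[k] x) i = padicDigit p x (i + k) := by
  induction k generalizing x with
  | zero => rfl
  | succ m ih =>
    rw [Function.iterate_succ_apply, ih, myShiftDigit, Nat.add_assoc]

lemma myNormEqOfDigits {x y : ℤ_[p]} {m : ℕ}
    (hlt : ∀ i < m, padicDigit p x i = padicDigit p y i)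
    (hne : padicDigit p x m ≠ padicDigit p y m) : ‖x - y‖ = (p:ℝ) ^ (-(m:ℤ)) := by
  have hp1 : (1:ℝ) < p := by exact_mod_cast hp.out.one_lt
  have hxy : x ≠ y := by rintro rfl; exact hne rfl
  have hne0 : x - y ≠ 0 := sub_ne_zero_of_ne hxy
  have hle : ‖x - y‖ ≤ (p:ℝ) ^ (-(m:ℤ)) := myNormLeOfDigitEq hlt
  have hval : ‖x - y‖ = (p:ℝ) ^ (-((x - y).valuation : ℤ)) := PadicInt.norm_eq_zpow_neg_valuation hne0
  set v : ℤ := ((x - y).valuation : ℤ) with hv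
  have hmv : (m:ℤ) ≤ v := by
    rw [hval] at hle
    have := (zpow_le_zpow_iff_right₀ hp1).1 hle
    omega
  have hvm : v ≤ m := by
    by_contra hcon
    push_neg at hcon
    have h2 : ‖x - y‖ ≤ (p:ℝ) ^ (-((m+1:ℕ):ℤ)) := by
      rw [hval]
      apply zpow_le_zpow_right₀ hp1.le
      push_cast; omega
    exact hne (myDigitEqOfNormLe h2 (by omega))
  rw [hval]; congr 1; omega

lemma myDigitsOfNormEq {x y : ℤ_[p]} {m : ℕ} (h : ‖x - y‖ = (p:ℝ) ^ (-(m:ℤ))) :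
    (∀ i < m, padicDigit p x i = padicDigit p y i) ∧ padicDigit p x m ≠ padicDigit p y m := by
  have hp1 : (1:ℝ) < p := by exact_mod_cast hp.out.one_lt
  refine ⟨fun i hi => myDigitEqOfNormLe h.le hi, fun hcon => ?_⟩
  have hall : ∀ i < m + 1, padicDigit p x i = padicDigit p y i := by
    intro i hi
    rcases Nat.lt_or_ge i m with h' | h'
    · exact myDigitEqOfNormLe h.le h'
    · have : i = m := by omega
      rwa [this]
  have := myNormLeOfDigitEq hall
  rw [h] at this
  have := (zpow_le_zpow_iff_right₀ hp1).1 this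
  omega

/-- If `f` is `(p^{-k}, p^k)` locally scaling and `h` is the map whose digit expansion
concatenates the first `k` digits of the successive iterates of `f` (the `(qk+r)`-th
digit of `h x` is the `r`-th digit of `f^[q] x`, `0 ≤ r < k`), then `h` is an isometry
with `S^k ∘ h = h ∘ f`. -/
theorem concatenation_map_isometry_conjugates (p k : ℕ) [Fact p.Prime] (hk : 1 ≤ k)
    (f : ℤ_[p] → ℤ_[p])
    (hf : ∀ x y : ℤ_[p], ‖x - y‖ ≤ (p : ℝ) ^ (-(k : ℤ)) →
      ‖f x - f y‖ = (p : ℝ) ^ k * ‖x - y‖)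
    (h : ℤ_[p] → ℤ_[p])
    (hdig : ∀ (x : ℤ_[p]) (q r : ℕ), r < k →
      padicDigit p (h x) (q * k + r) = padicDigit p (f^[q] x) r) :
    Isometry h ∧ ∀ x : ℤ_[p], (padicShift p)^[k] (h x) = h (f x) := by
  have hp1 : (1:ℝ) < p := by exact_mod_cast Fact.out (p := p.Prime) |>.one_lt
  constructor
  · apply Isometry.of_dist_eq
    intro x y
    rcases eq_or_ne x y with rfl | hxy
    · simp
    rw [dist_eq_norm, dist_eq_norm]
    have hne0 : x - y ≠ 0 := sub_ne_zero_of_ne hxy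
    set m : ℕ := (x - y).valuation with hm
    have hnorm : ‖x - y‖ = (p:ℝ) ^ (-(m:ℤ)) := by
      rw [PadicInt.norm_eq_zpow_neg_valuation hne0]
    have hiter : ∀ i, i * k ≤ m →
        ‖f^[i] x - f^[i] y‖ = (p:ℝ) ^ (((i * k : ℕ) : ℤ) - (m:ℤ)) := by
      intro i
      induction i with
      | zero =>
        intro _
        simp only [Function.iterate_zero_apply]
        rw [hnorm]
        norm_num
      | succ i ih =>
        intro hik
        have hik' : i * k ≤ m := le_trans (Nat.mul_le_mul_right k (Nat.le_succ i)) hik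
        have h1 := ih hik'
        have h2 : ‖f^[i] x - f^[i] y‖ ≤ (p:ℝ) ^ (-(k:ℤ)) := by
          rw [h1]
          apply zpow_le_zpow_right₀ hp1.le
          have h4 : (i+1) * k = i * k + k := by ring
          omega
        have h3 := hf _ _ h2
        rw [Function.iterate_succ_apply', Function.iterate_succ_apply', h3, h1,
          ← zpow_natCast (p:ℝ) k, ← zpow_add₀ (by positivity : (p:ℝ) ≠ 0)]
        congr 1
        push_cast
        ring
    have hagree : ∀ j, j < m → padicDigit p (h x) j = padicDigit p (h y) j := by
      intro j hj
      obtain ⟨q', r', hr', rfl⟩ : ∃ q' r', r' < k ∧ j = q' * k + r' :=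
        ⟨j / k, j % k, Nat.mod_lt _ (by omega), by
          rw [Nat.mul_comm]; exact (Nat.div_add_mod j k).symm⟩
      have hnormj : ‖f^[q'] x - f^[q'] y‖ = (p:ℝ) ^ (((q' * k : ℕ) : ℤ) - (m:ℤ)) :=
        hiter _ (by omega)
      have hle : ‖f^[q'] x - f^[q'] y‖ ≤ (p:ℝ) ^ (-((r'+1:ℕ):ℤ)) := by
        rw [hnormj]
        apply zpow_le_zpow_right₀ hp1.le
        omega
      have hdeq := myDigitEqOfNormLe hle (Nat.lt_succ_self r')
      rw [hdig x q' r' hr', hdig y q' r' hr']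
      exact hdeq
    have hdiffm : padicDigit p (h x) m ≠ padicDigit p (h y) m := by
      obtain ⟨q, r, hr, hqr⟩ : ∃ q r, r < k ∧ m = q * k + r :=
        ⟨m / k, m % k, Nat.mod_lt _ (by omega), by
          rw [Nat.mul_comm]; exact (Nat.div_add_mod m k).symm⟩
      have hnormq : ‖f^[q] x - f^[q] y‖ = (p:ℝ) ^ (-((r : ℕ):ℤ)) := by
        rw [hiter q (by omega)]
        congr 1
        omega
      obtain ⟨_, hne⟩ := myDigitsOfNormEq hnormq
      rw [hqr, hdig x q r hr, hdig y q r hr]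
      exact hne
    rw [myNormEqOfDigits hagree hdiffm, hnorm]
  · intro x
    apply myEqOfDigitEq
    intro j
    rw [myShiftIterDigit]
    obtain ⟨q', r', hr', rfl⟩ : ∃ q' r', r' < k ∧ j = q' * k + r' :=
      ⟨j / k, j % k, Nat.mod_lt _ (by omega), by
        rw [Nat.mul_comm]; exact (Nat.div_add_mod j k).symm⟩
    have h1 : (q' + 1) * k + r' = q' * k + r' + k := by ring
    rw [← h1, hdig x (q'+1) r' hr', Function.iterate_succ_apply, hdig (f x) q' r' hr']
end

section
/- For 1 ≤ m ≤ k integers, the number C(m,k) of topological conjugacy classes of (p^{-k}, p^m) locally scaling maps on ℤ_p is finite and satisfies C(m,k) ≥ k − m + 1; moreover C(m,k) = k − m + 1 if and only if m = k (in which case C(k,k) = 1). -/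
/-- `f : ℤ_p → ℤ_p` is `(p^{-k}, p^m)` locally scaling. -/
def IsLocScaling (p : ℕ) [Fact p.Prime] (k m : ℕ) (f : ℤ_[p] → ℤ_[p]) : Prop :=
  ∀ x y : ℤ_[p], ‖x - y‖ ≤ (p : ℝ) ^ (-(k : ℤ)) → ‖f x - f y‖ = (p : ℝ) ^ m * ‖x - y‖

/-- Topological conjugacy relation on `(p^{-k}, p^m)` locally scaling maps. -/
def TopConjRel (p : ℕ) [Fact p.Prime] (k m : ℕ)
    (f g : {f : ℤ_[p] → ℤ_[p] // IsLocScaling p k m f}) : Prop :=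
  ∃ h : ℤ_[p] ≃ₜ ℤ_[p], ∀ x : ℤ_[p], f.1 (h x) = h (g.1 x)

open PadicInt

namespace LocScale
variable {p : ℕ} [hp : Fact p.Prime]

lemma p1 : (1:ℝ) < p := by exact_mod_cast hp.1.one_lt
lemma pp : (0:ℝ) < p := lt_trans one_pos p1
lemma ppow_pos (n : ℤ) : (0:ℝ) < (p:ℝ) ^ n := zpow_pos pp n
lemma ppow_mono {a b : ℤ} (h : a ≤ b) : (p:ℝ) ^ a ≤ (p:ℝ) ^ b :=
  zpow_le_zpow_right₀ (le_of_lt p1) h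
lemma ppow_strict {a b : ℤ} (h : a < b) : (p:ℝ) ^ a < (p:ℝ) ^ b :=
  zpow_lt_zpow_right₀ p1 h

lemma norm_le_ppow_iff_dvd (z : ℤ_[p]) (n : ℕ) :
    ‖z‖ ≤ (p:ℝ) ^ (-(n:ℤ)) ↔ (p:ℤ_[p]) ^ n ∣ z := by
  rw [norm_le_pow_iff_mem_span_pow, Ideal.mem_span_singleton]

instance (n : ℕ) : NeZero (p ^ n) := ⟨pow_ne_zero n hp.1.ne_zero⟩

lemma toZModPow_eq_iff (n : ℕ) (x y : ℤ_[p]) :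
    toZModPow n x = toZModPow n y ↔ ‖x - y‖ ≤ (p:ℝ) ^ (-(n:ℤ)) := by
  rw [norm_le_ppow_iff_dvd, ← Ideal.mem_span_singleton, ← ker_toZModPow, RingHom.mem_ker,
    map_sub, sub_eq_zero]

/-- canonical representative of the ball of `x` at level `n` -/
noncomputable def resid (n : ℕ) (x : ℤ_[p]) : ℤ_[p] := ((toZModPow n x).val : ℤ_[p])

lemma toZModPow_resid (n : ℕ) (x : ℤ_[p]) : toZModPow n (resid n x) = toZModPow n x := by
  rw [resid, map_natCast, ZMod.natCast_zmod_val]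

lemma norm_sub_resid (n : ℕ) (x : ℤ_[p]) : ‖x - resid n x‖ ≤ (p:ℝ) ^ (-(n:ℤ)) := by
  rw [← toZModPow_eq_iff]; exact (toZModPow_resid n x).symm

lemma norm_ppow_mul (n : ℕ) (z : ℤ_[p]) :
    ‖(p:ℤ_[p]) ^ n * z‖ = (p:ℝ) ^ (-(n:ℤ)) * ‖z‖ := by
  rw [norm_mul, norm_p_pow]

lemma norm_triple {a b c : ℤ_[p]} {r : ℝ} (ha : ‖a‖ ≤ r) (hb : ‖b‖ ≤ r) (hc : ‖c‖ ≤ r) :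
    ‖a + b + c‖ ≤ r :=
  le_trans (nonarchimedean _ _) (max_le (le_trans (nonarchimedean _ _) (max_le ha hb)) hc)

/-- the `tail` of `x` at level `n` : `x = resid n x + p^n * tail n x`. -/
noncomputable def tail (n : ℕ) (x : ℤ_[p]) : ℤ_[p] :=
  ((norm_le_ppow_iff_dvd _ n).1 (norm_sub_resid n x)).choose

lemma tail_spec (n : ℕ) (x : ℤ_[p]) : x = resid n x + (p:ℤ_[p]) ^ n * tail n x := by
  have := ((norm_le_ppow_iff_dvd _ n).1 (norm_sub_resid n x)).choose_spec
  rw [tail, ← this]; ring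

lemma tail_spec' (n : ℕ) (x : ℤ_[p]) : x - resid n x = (p:ℤ_[p]) ^ n * tail n x :=
  ((norm_le_ppow_iff_dvd _ n).1 (norm_sub_resid n x)).choose_spec

lemma norm_tail_le (n : ℕ) (x : ℤ_[p]) : ‖tail n x‖ ≤ 1 := norm_le_one _


lemma isometry_surjective (φ : ℤ_[p] → ℤ_[p]) (hφ : ∀ a b, ‖φ a - φ b‖ = ‖a - b‖) :
    Function.Surjective φ := by
  have iso : Isometry φ := Isometry.of_dist_eq (by simp [dist_eq_norm, hφ])
  have hcl : IsClosed (Set.range φ) := iso.isClosedEmbedding.isClosed_range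
  have hd : DenseRange φ := by
    rw [Metric.denseRange_iff]
    intro w ε hε
    obtain ⟨n, hn⟩ := exists_pow_neg_lt p hε
    set ψ : ZMod (p ^ n) → ZMod (p ^ n) := fun a => toZModPow n (φ ((a.val : ℤ_[p]))) with hψ
    have hinj : Function.Injective ψ := by
      intro a b hab
      have h1 : toZModPow n (φ ((a.val : ℤ_[p]))) = toZModPow n (φ ((b.val : ℤ_[p]))) := hab
      rw [toZModPow_eq_iff, hφ, ← toZModPow_eq_iff] at h1
      rw [map_natCast, map_natCast, ZMod.natCast_zmod_val, ZMod.natCast_zmod_val] at h1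
      exact h1
    have hsurj : Function.Surjective ψ := Finite.injective_iff_surjective.mp hinj
    obtain ⟨a, ha⟩ := hsurj (toZModPow n w)
    refine ⟨(a.val : ℤ_[p]), ?_⟩
    have h2 : ‖φ ((a.val : ℤ_[p])) - w‖ ≤ (p:ℝ) ^ (-(n:ℤ)) := by
      rw [← toZModPow_eq_iff]; exact ha
    rw [dist_eq_norm, norm_sub_rev]
    exact lt_of_le_of_lt h2 hn
  rw [← Set.range_eq_univ, ← hcl.closure_eq]
  exact hd.closure_eq


section LS
variable {k m : ℕ} {f : ℤ_[p] → ℤ_[p]}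

lemma loc_inj (hf : IsLocScaling p k m f) {x y : ℤ_[p]}
    (hxy : ‖x - y‖ ≤ (p:ℝ) ^ (-(k:ℤ))) (hfx : f x = f y) : x = y := by
  have := hf x y hxy
  rw [hfx, sub_self, norm_zero] at this
  have h2 : ‖x - y‖ = 0 := by
    have hp0 : (p:ℝ) ^ m ≠ 0 := ne_of_gt (pow_pos pp m)
    have := mul_eq_zero.mp this.symm
    tauto
  rwa [norm_eq_zero, sub_eq_zero] at h2

lemma loc_cont (hf : IsLocScaling p k m f) : Continuous f := by
  rw [Metric.continuous_iff]
  intro x ε hε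
  refine ⟨min ((p:ℝ) ^ (-(k:ℤ))) (ε / (p:ℝ) ^ m), lt_min (ppow_pos _) (div_pos hε (pow_pos pp m)), ?_⟩
  intro z hz
  rw [dist_eq_norm] at hz ⊢
  have h1 : ‖z - x‖ ≤ (p:ℝ) ^ (-(k:ℤ)) := le_of_lt (lt_of_lt_of_le hz (min_le_left _ _))
  rw [hf z x h1]
  calc (p:ℝ) ^ m * ‖z - x‖ < (p:ℝ) ^ m * (ε / (p:ℝ) ^ m) := by
        exact mul_lt_mul_of_pos_left (lt_of_lt_of_le hz (min_le_right _ _)) (pow_pos pp m)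
    _ = ε := by rw [mul_comm, div_mul_cancel₀ _ (ne_of_gt (pow_pos pp m))]

lemma cast_km (hmk : m ≤ k) : -(((k - m : ℕ)):ℤ) = (m:ℤ) - k := by
  rw [Nat.cast_sub hmk]; ring

/-- local surjectivity: the image of a small ball is the corresponding big ball -/
lemma loc_surj (hm : 1 ≤ m) (hmk : m ≤ k) (hf : IsLocScaling p k m f) (x w : ℤ_[p])
    (hw : ‖w - f x‖ ≤ (p:ℝ) ^ ((m:ℤ) - k)) :
    ∃ z, ‖z - x‖ ≤ (p:ℝ) ^ (-(k:ℤ)) ∧ f z = w := by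
  have hsmall : ∀ t : ℤ_[p], ‖(x + (p:ℤ_[p])^k * t) - x‖ ≤ (p:ℝ) ^ (-(k:ℤ)) := by
    intro t
    rw [add_sub_cancel_left, norm_ppow_mul]
    calc (p:ℝ) ^ (-(k:ℤ)) * ‖t‖ ≤ (p:ℝ) ^ (-(k:ℤ)) * 1 :=
          mul_le_mul_of_nonneg_left (norm_le_one t) (le_of_lt (ppow_pos _))
      _ = (p:ℝ) ^ (-(k:ℤ)) := mul_one _
  have hnorm : ∀ t : ℤ_[p], ‖f (x + (p:ℤ_[p])^k * t) - f x‖ = (p:ℝ) ^ ((m:ℤ) - k) * ‖t‖ := by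
    intro t
    rw [hf _ _ (hsmall t), add_sub_cancel_left, norm_ppow_mul, ← mul_assoc,
      ← zpow_natCast (p:ℝ) m, ← zpow_add₀ (ne_of_gt pp)]
    ring_nf
  have hdvd : ∀ t : ℤ_[p], (p:ℤ_[p]) ^ (k - m) ∣ (f (x + (p:ℤ_[p])^k * t) - f x) := by
    intro t
    rw [← norm_le_ppow_iff_dvd, hnorm t, cast_km hmk]
    calc (p:ℝ) ^ ((m:ℤ)-k) * ‖t‖ ≤ (p:ℝ) ^ ((m:ℤ)-k) * 1 :=
          mul_le_mul_of_nonneg_left (norm_le_one t) (le_of_lt (ppow_pos _))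
      _ = (p:ℝ) ^ ((m:ℤ)-k) := mul_one _
  set ψ : ℤ_[p] → ℤ_[p] := fun t => (hdvd t).choose with hψdef
  have hψ : ∀ t, f (x + (p:ℤ_[p])^k * t) - f x = (p:ℤ_[p]) ^ (k - m) * ψ t :=
    fun t => (hdvd t).choose_spec
  have hψiso : ∀ t s, ‖ψ t - ψ s‖ = ‖t - s‖ := by
    intro t s
    have h1 : (p:ℤ_[p]) ^ (k-m) * (ψ t - ψ s)
        = f (x + (p:ℤ_[p])^k * t) - f (x + (p:ℤ_[p])^k * s) := by
      rw [mul_sub, ← hψ t, ← hψ s]; ring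
    have h2 : ‖f (x + (p:ℤ_[p])^k * t) - f (x + (p:ℤ_[p])^k * s)‖
        = (p:ℝ) ^ ((m:ℤ)-k) * ‖t - s‖ := by
      have hts : ‖(x + (p:ℤ_[p])^k * t) - (x + (p:ℤ_[p])^k * s)‖ ≤ (p:ℝ) ^ (-(k:ℤ)) := by
        have : (x + (p:ℤ_[p])^k * t) - (x + (p:ℤ_[p])^k * s) = (p:ℤ_[p])^k * (t - s) := by ring
        rw [this, norm_ppow_mul]
        calc (p:ℝ) ^ (-(k:ℤ)) * ‖t - s‖ ≤ (p:ℝ) ^ (-(k:ℤ)) * 1 :=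
              mul_le_mul_of_nonneg_left (norm_le_one _) (le_of_lt (ppow_pos _))
          _ = _ := mul_one _
      rw [hf _ _ hts]
      have : (x + (p:ℤ_[p])^k * t) - (x + (p:ℤ_[p])^k * s) = (p:ℤ_[p])^k * (t - s) := by ring
      rw [this, norm_ppow_mul, ← mul_assoc, ← zpow_natCast (p:ℝ) m, ← zpow_add₀ (ne_of_gt pp)]
      ring_nf
    have h3 : (p:ℝ) ^ (-((k-m:ℕ):ℤ)) * ‖ψ t - ψ s‖ = (p:ℝ) ^ ((m:ℤ)-k) * ‖t - s‖ := by
      rw [← norm_ppow_mul, h1, h2]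
    rw [cast_km hmk] at h3
    exact mul_left_cancel₀ (ne_of_gt (ppow_pos _)) h3
  obtain ⟨s, hs⟩ : ∃ s : ℤ_[p], w - f x = (p:ℤ_[p]) ^ (k - m) * s := by
    have := (norm_le_ppow_iff_dvd (w - f x) (k-m)).1 (by rwa [cast_km hmk])
    exact this
  obtain ⟨t, ht⟩ := isometry_surjective ψ hψiso s
  refine ⟨x + (p:ℤ_[p])^k * t, hsmall t, ?_⟩
  have h4 := hψ t
  rw [ht, ← hs] at h4
  exact sub_left_injective h4

end LS

section Conj
variable {k m : ℕ}

lemma npow_eq (m : ℕ) : ((p:ℝ))^m = (p:ℝ)^(m:ℤ) := (zpow_natCast _ m).symm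

lemma ppow_mul_ppow (a b : ℤ) : (p:ℝ)^a * (p:ℝ)^b = (p:ℝ)^(a+b) :=
  (zpow_add₀ (ne_of_gt pp) a b).symm

lemma inv_scale {f : ℤ_[p] → ℤ_[p]} (hf : IsLocScaling p k m f) {a b : ℤ_[p]}
    (hab : ‖a - b‖ ≤ (p:ℝ)^(-(k:ℤ))) :
    ‖a - b‖ = (p:ℝ)^(-(m:ℤ)) * ‖f a - f b‖ := by
  rw [hf a b hab, npow_eq, ← mul_assoc, ppow_mul_ppow, neg_add_cancel, zpow_zero, one_mul]

lemma norm_sub_le_max (a b x : ℤ_[p]) {r : ℝ} (ha : ‖a - x‖ ≤ r) (hb : ‖b - x‖ ≤ r) :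
    ‖a - b‖ ≤ r := by
  have : a - b = (a - x) + -(b - x) := by ring
  rw [this]
  exact le_trans (nonarchimedean _ _) (max_le ha (by rwa [norm_neg]))

open scoped Classical in
/-- total version of the local inverse -/
noncomputable def linv (f : ℤ_[p] → ℤ_[p]) (k : ℕ) (x w : ℤ_[p]) : ℤ_[p] :=
  if h : ∃ z, ‖z - x‖ ≤ (p:ℝ)^(-(k:ℤ)) ∧ f z = w then h.choose else x

lemma linv_spec {f : ℤ_[p] → ℤ_[p]} {x w : ℤ_[p]}
    (h : ∃ z, ‖z - x‖ ≤ (p:ℝ)^(-(k:ℤ)) ∧ f z = w) :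
    ‖linv f k x w - x‖ ≤ (p:ℝ)^(-(k:ℤ)) ∧ f (linv f k x w) = w := by
  rw [linv]
  rw [dif_pos h]
  exact h.choose_spec

/-- the approximating sequence to the conjugacy -/
noncomputable def useq (f g : ℤ_[p] → ℤ_[p]) (k : ℕ) : ℕ → ℤ_[p] → ℤ_[p]
  | 0 => id
  | n+1 => fun x => linv f k x (useq f g k n (g x))

variable {f g : ℤ_[p] → ℤ_[p]}

lemma useq_props (hm : 1 ≤ m) (hmk : m ≤ k) (hf : IsLocScaling p k m f)
    (H : ∀ x, ‖f x - g x‖ ≤ (p:ℝ)^((m:ℤ)-k)) :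
    ∀ n x, (‖useq f g k n x - x‖ ≤ (p:ℝ)^((m:ℤ)-k)) ∧
      (‖useq f g k (n+1) x - x‖ ≤ (p:ℝ)^(-(k:ℤ)) ∧
        f (useq f g k (n+1) x) = useq f g k n (g x)) := by
  have hle : (p:ℝ)^(-(k:ℤ)) ≤ (p:ℝ)^((m:ℤ)-k) := ppow_mono (by omega)
  intro n
  induction n with
  | zero =>
    intro x
    have hex : ∃ z, ‖z - x‖ ≤ (p:ℝ)^(-(k:ℤ)) ∧ f z = useq f g k 0 (g x) := by
      apply loc_surj hm hmk hf
      show ‖g x - f x‖ ≤ _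
      rw [norm_sub_rev]; exact H x
    have := linv_spec hex
    refine ⟨by simp only [useq, id_eq, sub_self, norm_zero]; positivity, this⟩
  | succ n ih =>
    intro x
    have key : ‖useq f g k (n+1) x - x‖ ≤ (p:ℝ)^((m:ℤ)-k) :=
      le_trans (ih x).2.1 hle
    have hex : ∃ z, ‖z - x‖ ≤ (p:ℝ)^(-(k:ℤ)) ∧ f z = useq f g k (n+1) (g x) := by
      apply loc_surj hm hmk hf
      have h1 : ‖useq f g k (n+1) (g x) - g x‖ ≤ (p:ℝ)^((m:ℤ)-k) :=
        le_trans (ih (g x)).2.1 hle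
      exact norm_sub_le_max _ _ (g x) h1 (H x)
    exact ⟨key, linv_spec hex⟩

lemma useq_dist (hm : 1 ≤ m) (hmk : m ≤ k) (hf : IsLocScaling p k m f)
    (H : ∀ x, ‖f x - g x‖ ≤ (p:ℝ)^((m:ℤ)-k)) :
    ∀ n x, ‖useq f g k (n+1) x - useq f g k n x‖ ≤
      (p:ℝ)^(-(k:ℤ)) * ((p:ℝ)^(-(m:ℤ)))^n := by
  intro n
  induction n with
  | zero =>
    intro x
    simpa [useq] using (useq_props hm hmk hf H 0 x).2.1
  | succ n ih =>
    intro x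
    have h1 := (useq_props hm hmk hf H (n+1) x).2.1
    have h2 := (useq_props hm hmk hf H n x).2.1
    have hd : ‖useq f g k (n+2) x - useq f g k (n+1) x‖ ≤ (p:ℝ)^(-(k:ℤ)) :=
      norm_sub_le_max _ _ x h1 h2
    have heq := inv_scale hf hd
    rw [(useq_props hm hmk hf H (n+1) x).2.2, (useq_props hm hmk hf H n x).2.2] at heq
    rw [heq]
    calc (p:ℝ)^(-(m:ℤ)) * ‖useq f g k (n+1) (g x) - useq f g k n (g x)‖
        ≤ (p:ℝ)^(-(m:ℤ)) * ((p:ℝ)^(-(k:ℤ)) * ((p:ℝ)^(-(m:ℤ)))^n) :=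
          mul_le_mul_of_nonneg_left (ih (g x)) (le_of_lt (ppow_pos _))
      _ = (p:ℝ)^(-(k:ℤ)) * ((p:ℝ)^(-(m:ℤ)))^(n+1) := by ring

lemma exists_conj_fun (hm : 1 ≤ m) (hmk : m ≤ k) (hf : IsLocScaling p k m f)
    (H : ∀ x, ‖f x - g x‖ ≤ (p:ℝ)^((m:ℤ)-k)) :
    ∃ h : ℤ_[p] → ℤ_[p], (∀ x, ‖h x - x‖ ≤ (p:ℝ)^(-(k:ℤ))) ∧
      (∀ x, f (h x) = h (g x)) := by
  have hr1 : (p:ℝ)^(-(m:ℤ)) < 1 := by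
    have := ppow_strict (p := p) (a := -(m:ℤ)) (b := 0) (by omega)
    rwa [zpow_zero] at this
  have hcauchy : ∀ x, CauchySeq (fun n => useq f g k n x) := by
    intro x
    apply cauchySeq_of_le_geometric ((p:ℝ)^(-(m:ℤ))) ((p:ℝ)^(-(k:ℤ))) hr1
    intro n
    rw [dist_eq_norm, norm_sub_rev]
    exact useq_dist hm hmk hf H n x
  have hlim : ∀ x, ∃ l, Filter.Tendsto (fun n => useq f g k n x) Filter.atTop (nhds l) :=
    fun x => cauchySeq_tendsto_of_complete (hcauchy x)
  choose hfun hft using hlim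
  refine ⟨hfun, ?_, ?_⟩
  · intro x
    have ht : Filter.Tendsto (fun n => ‖useq f g k n x - x‖) Filter.atTop
        (nhds ‖hfun x - x‖) := ((hft x).sub tendsto_const_nhds).norm
    apply le_of_tendsto ht
    rw [Filter.eventually_atTop]
    refine ⟨1, fun n hn => ?_⟩
    obtain ⟨j, rfl⟩ := Nat.exists_eq_add_of_le hn
    have := (useq_props hm hmk hf H j x).2.1
    rwa [Nat.add_comm j 1] at this
  · intro x
    have t1 : Filter.Tendsto (fun n => useq f g k (n+1) x) Filter.atTop (nhds (hfun x)) :=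
      (hft x).comp (Filter.tendsto_add_atTop_nat 1)
    have t2 : Filter.Tendsto (fun n => f (useq f g k (n+1) x)) Filter.atTop
        (nhds (f (hfun x))) := ((loc_cont hf).tendsto _).comp t1
    have t3 : Filter.Tendsto (fun n => useq f g k n (g x)) Filter.atTop
        (nhds (f (hfun x))) := by
      apply t2.congr
      intro n
      exact (useq_props hm hmk hf H n x).2.2
    exact tendsto_nhds_unique t3 (hft (g x))

lemma conj_unique (hm : 1 ≤ m) (hmk : m ≤ k) (hf : IsLocScaling p k m f)
    (g u v : ℤ_[p] → ℤ_[p])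
    (hu1 : ∀ x, ‖u x - x‖ ≤ (p:ℝ)^(-(k:ℤ))) (hu2 : ∀ x, f (u x) = u (g x))
    (hv1 : ∀ x, ‖v x - x‖ ≤ (p:ℝ)^(-(k:ℤ))) (hv2 : ∀ x, f (v x) = v (g x)) :
    ∀ x, u x = v x := by
  have key : ∀ n x, ‖u x - v x‖ ≤ (p:ℝ)^(-(k:ℤ)) * ((p:ℝ)^(-(m:ℤ)))^n := by
    intro n
    induction n with
    | zero => intro x; simpa using norm_sub_le_max _ _ x (hu1 x) (hv1 x)
    | succ n ih =>
      intro x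
      have hd : ‖u x - v x‖ ≤ (p:ℝ)^(-(k:ℤ)) := norm_sub_le_max _ _ x (hu1 x) (hv1 x)
      have heq := inv_scale hf hd
      rw [hu2 x, hv2 x] at heq
      rw [heq]
      calc (p:ℝ)^(-(m:ℤ)) * ‖u (g x) - v (g x)‖
          ≤ (p:ℝ)^(-(m:ℤ)) * ((p:ℝ)^(-(k:ℤ)) * ((p:ℝ)^(-(m:ℤ)))^n) :=
            mul_le_mul_of_nonneg_left (ih (g x)) (le_of_lt (ppow_pos _))
        _ = _ := by ring
  intro x
  have h0 : ‖u x - v x‖ ≤ 0 := by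
    have htz : Filter.Tendsto (fun n => (p:ℝ)^(-(k:ℤ)) * ((p:ℝ)^(-(m:ℤ)))^n)
        Filter.atTop (nhds 0) := by
      have : Filter.Tendsto (fun n => ((p:ℝ)^(-(m:ℤ)))^n) Filter.atTop (nhds 0) := by
        apply tendsto_pow_atTop_nhds_zero_of_lt_one (le_of_lt (ppow_pos _))
        have := ppow_strict (p := p) (a := -(m:ℤ)) (b := 0) (by omega)
        rwa [zpow_zero] at this
      simpa using this.const_mul ((p:ℝ)^(-(k:ℤ)))
    exact ge_of_tendsto htz (Filter.Eventually.of_forall (fun n => key n x))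
  rw [← sub_eq_zero]
  exact norm_le_zero_iff.mp h0

end Conj

section Homeo
variable {k m : ℕ} {f g : ℤ_[p] → ℤ_[p]}

lemma isom_of_conj (hm : 1 ≤ m) (hmk : m ≤ k) (hf : IsLocScaling p k m f)
    (hg : IsLocScaling p k m g) (h : ℤ_[p] → ℤ_[p])
    (h1 : ∀ x, ‖h x - x‖ ≤ (p:ℝ)^(-(k:ℤ))) (h2 : ∀ x, f (h x) = h (g x)) :
    ∀ x y, ‖h x - h y‖ = ‖x - y‖ := by
  have far : ∀ x y : ℤ_[p], (p:ℝ)^(-(k:ℤ)) < ‖x - y‖ → ‖h x - h y‖ = ‖x - y‖ := by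
    intro x y hxy
    have hBsmall : ‖(h x - x) + -(h y - y)‖ < ‖x - y‖ :=
      lt_of_le_of_lt (le_trans (nonarchimedean _ _)
        (max_le (h1 x) (by rw [norm_neg]; exact h1 y))) hxy
    have hsplit : h x - h y = (x - y) + ((h x - x) + -(h y - y)) := by ring
    rw [hsplit, add_comm, norm_add_eq_max_of_ne (ne_of_lt hBsmall), max_eq_right
      (le_of_lt hBsmall)]
  have near : ∀ x y : ℤ_[p], ‖x - y‖ ≤ (p:ℝ)^(-(k:ℤ)) → ‖h x - h y‖ ≤ (p:ℝ)^(-(k:ℤ)) := by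
    intro x y hxy
    have hsplit : h x - h y = (h x - x) + -(h y - y) + (x - y) := by ring
    rw [hsplit]
    exact norm_triple (h1 x) (by rw [norm_neg]; exact h1 y) hxy
  have cancel : ∀ x y : ℤ_[p], ‖x - y‖ ≤ (p:ℝ)^(-(k:ℤ)) →
      ‖h (g x) - h (g y)‖ = ‖g x - g y‖ → ‖h x - h y‖ = ‖x - y‖ := by
    intro x y hxy hgood
    have e1 := hf (h x) (h y) (near x y hxy)
    rw [h2 x, h2 y, hgood, hg x y hxy] at e1
    exact (mul_left_cancel₀ (ne_of_gt (pow_pos pp m)) e1).symm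
  have main : ∀ n : ℕ, ∀ x y : ℤ_[p], (p:ℝ)^(-(k:ℤ)-n) ≤ ‖x - y‖ →
      ‖h x - h y‖ = ‖x - y‖ := by
    intro n
    induction n with
    | zero =>
      intro x y hxy
      rcases lt_or_ge ((p:ℝ)^(-(k:ℤ))) ‖x - y‖ with hc | hc
      · exact far x y hc
      · have heq : ‖x - y‖ = (p:ℝ)^(-(k:ℤ)) := le_antisymm hc (by simpa using hxy)
        apply cancel x y hc
        apply far
        rw [hg x y hc, heq, npow_eq, ppow_mul_ppow]
        apply ppow_strict
        omega
    | succ n ih =>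
      intro x y hxy
      rcases le_or_gt ((p:ℝ)^(-(k:ℤ)-n)) ‖x - y‖ with hc | hc
      · exact ih x y hc
      · have hsm : ‖x - y‖ ≤ (p:ℝ)^(-(k:ℤ)) :=
          le_trans (le_of_lt hc) (ppow_mono (by omega))
        apply cancel x y hsm
        apply ih
        rw [hg x y hsm, npow_eq]
        calc (p:ℝ)^(-(k:ℤ)-n) = (p:ℝ)^((m:ℤ)) * (p:ℝ)^(-(k:ℤ)-n-m) := by
              rw [ppow_mul_ppow]; ring_nf
          _ ≤ (p:ℝ)^((m:ℤ)) * ‖x - y‖ := by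
              apply mul_le_mul_of_nonneg_left _ (le_of_lt (ppow_pos _))
              refine le_trans (ppow_mono ?_) hxy
              push_cast
              omega
  intro x y
  rcases eq_or_ne x y with rfl | hne
  · simp
  · have hpos : 0 < ‖x - y‖ := by
      rw [norm_pos_iff]
      exact sub_ne_zero_of_ne hne
    obtain ⟨n, hn⟩ := exists_pow_neg_lt p hpos
    exact main n x y (le_of_lt (lt_of_le_of_lt (ppow_mono (by omega)) hn))

lemma conj_of_close (hm : 1 ≤ m) (hmk : m ≤ k) (hf : IsLocScaling p k m f)
    (hg : IsLocScaling p k m g)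
    (H : ∀ x, ‖f x - g x‖ ≤ (p:ℝ)^((m:ℤ)-k)) :
    ∃ e : ℤ_[p] ≃ₜ ℤ_[p], ∀ x : ℤ_[p], f (e x) = e (g x) := by
  obtain ⟨h, hA, hB⟩ := exists_conj_fun hm hmk hf H
  have H' : ∀ x, ‖g x - f x‖ ≤ (p:ℝ)^((m:ℤ)-k) := fun x => by
    rw [norm_sub_rev]; exact H x
  obtain ⟨h', hA', hB'⟩ := exists_conj_fun hm hmk hg H'
  have hcompA : ∀ x, ‖h (h' x) - x‖ ≤ (p:ℝ)^(-(k:ℤ)) := fun x => by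
    have : h (h' x) - x = (h (h' x) - h' x) + (h' x - x) := by ring
    rw [this]
    exact le_trans (nonarchimedean _ _) (max_le (hA _) (hA' x))
  have hcompA' : ∀ x, ‖h' (h x) - x‖ ≤ (p:ℝ)^(-(k:ℤ)) := fun x => by
    have : h' (h x) - x = (h' (h x) - h x) + (h x - x) := by ring
    rw [this]
    exact le_trans (nonarchimedean _ _) (max_le (hA' _) (hA x))
  have hrid : ∀ x, h (h' x) = x := by
    apply conj_unique hm hmk hf f (fun x => h (h' x)) id hcompA
    · intro x
      rw [hB (h' x), hB' x]
    · intro x; simp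
    · intro x; simp
  have hlid : ∀ x, h' (h x) = x := by
    apply conj_unique hm hmk hg g (fun x => h' (h x)) id hcompA'
    · intro x
      rw [hB' (h x), hB x]
    · intro x; simp
    · intro x; simp
  have hiso := isom_of_conj hm hmk hf hg h hA hB
  have hiso' := isom_of_conj hm hmk hg hf h' hA' hB'
  refine ⟨⟨⟨h, h', hlid, hrid⟩, ?_, ?_⟩, ?_⟩
  · exact (Isometry.of_dist_eq (fun a b => by
      rw [dist_eq_norm, dist_eq_norm, hiso])).continuous
  · exact (Isometry.of_dist_eq (fun a b => by
      rw [dist_eq_norm, dist_eq_norm, hiso'])).continuous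
  · intro x
    exact hB x

end Homeo

section Model
variable {k m : ℕ}

lemma pZ_ne : ((p:ℤ_[p])) ≠ 0 := by exact_mod_cast hp.1.ne_zero

lemma pInt_pow_ne (n : ℕ) : ((p:ℤ_[p]))^n ≠ 0 := pow_ne_zero _ pZ_ne

lemma ppow_sub_one_ne (hm : 1 ≤ m) : ((p:ℤ_[p])^m - 1) ≠ 0 := by
  intro h
  have h2 : ((p:ℤ_[p]))^m = 1 := by rwa [sub_eq_zero] at h
  have h3 := congrArg (fun z : ℤ_[p] => ‖z‖) h2
  simp only [norm_one, norm_p_pow] at h3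
  have hlt : ((p:ℝ))^(-(m:ℤ)) < 1 := by
    have := ppow_strict (p := p) (a := -(m:ℤ)) (b := 0) (by omega)
    rwa [zpow_zero] at this
  rw [h3] at hlt
  exact lt_irrefl _ hlt

/-- model locally scaling maps -/
noncomputable def model (k m : ℕ) (c : ZMod (p^k) → ℤ_[p]) : ℤ_[p] → ℤ_[p] :=
  fun x => c (toZModPow k x) + (p:ℤ_[p])^(k-m) * tail k x

lemma sub_eq_pow_tail {x y : ℤ_[p]} (n : ℕ) (h : toZModPow n x = toZModPow n y) :
    x - y = (p:ℤ_[p])^n * (tail n x - tail n y) := by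
  have hres : resid n x = resid n y := by rw [resid, resid, h]
  have e1 := tail_spec' n x
  have e2 := tail_spec' n y
  calc x - y = (x - resid n x) - (y - resid n y) := by rw [hres]; ring
    _ = (p:ℤ_[p])^n * (tail n x - tail n y) := by rw [e1, e2]; ring

lemma model_isLocScaling (hmk : m ≤ k) (c : ZMod (p^k) → ℤ_[p]) :
    IsLocScaling p k m (model k m c) := by
  intro x y hxy
  have ha : toZModPow k x = toZModPow k y := (toZModPow_eq_iff k x y).2 hxy
  have hd : model k m c x - model k m c y
      = (p:ℤ_[p])^(k-m) * (tail k x - tail k y) := by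
    rw [model, model, ha]
    ring
  have hsub := sub_eq_pow_tail k ha
  rw [hd, norm_ppow_mul, hsub, norm_ppow_mul, npow_eq, ← mul_assoc, ppow_mul_ppow,
    cast_km hmk, Int.sub_eq_add_neg]

/-- the model coefficient functions used to prescribe fixed point counts -/
noncomputable def cfun (k m n : ℕ) : ZMod (p^k) → ℤ_[p] :=
  fun a => if a.val < n then ((a.val : ℕ) : ℤ_[p])
    else ((a.val : ℕ) : ℤ_[p]) + (p:ℤ_[p])^(k-m-1)

lemma fixed_iff (hmk : m ≤ k) (c : ZMod (p^k) → ℤ_[p]) (x : ℤ_[p]) :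
    model k m c x = x ↔
      c (toZModPow k x) - resid k x = (p:ℤ_[p])^(k-m) * ((p:ℤ_[p])^m - 1) * tail k x := by
  have e1 := tail_spec' k x
  have hpow : (p:ℤ_[p])^(k-m) * (p:ℤ_[p])^m = (p:ℤ_[p])^k := by
    rw [← pow_add, Nat.sub_add_cancel hmk]
  constructor
  · intro h
    have h2 : c (toZModPow k x) - resid k x
        = (x - resid k x) - (p:ℤ_[p])^(k-m) * tail k x := by
      rw [model] at h
      linear_combination h
    rw [e1] at h2
    rw [h2, ← hpow]
    ring
  · intro h
    rw [model]
    have h2 : c (toZModPow k x) = resid k x + (p:ℤ_[p])^k * tail k x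
        - (p:ℤ_[p])^(k-m) * tail k x := by
      rw [← hpow]
      linear_combination h
    rw [h2, ← e1]
    ring

lemma fix_model (hm : 1 ≤ m) (hmlt : m < k) {n : ℕ} (hn : n ≤ p^k) :
    {x : ℤ_[p] | model k m (cfun k m n) x = x}
      = (fun i : ℕ => (i : ℤ_[p])) '' (Set.Iio n) := by
  have hmk := le_of_lt hmlt
  ext x
  simp only [Set.mem_setOf_eq, Set.mem_image, Set.mem_Iio]
  constructor
  · intro hx
    rw [fixed_iff hmk] at hx
    by_cases hv : (toZModPow k x).val < n
    · rw [cfun] at hx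
      rw [if_pos hv] at hx
      have hz : ((toZModPow k x).val : ℤ_[p]) - resid k x = 0 := by
        rw [resid, sub_self]
      rw [hz] at hx
      have ht : tail k x = 0 := by
        rcases mul_eq_zero.mp hx.symm with h | h
        · exact absurd h (mul_ne_zero (pInt_pow_ne _) (ppow_sub_one_ne hm))
        · exact h
      have hxeq : x = resid k x := by
        have h5 := tail_spec' k x
        rw [ht, mul_zero] at h5
        exact (sub_eq_zero.mp h5)
      exact ⟨(toZModPow k x).val, hv, hxeq.symm⟩
    · exfalso
      rw [cfun, if_neg hv] at hx
      have hx' : (p:ℤ_[p])^(k-m-1) = (p:ℤ_[p])^(k-m) * ((p:ℤ_[p])^m - 1) * tail k x := by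
        rw [← hx, resid]
        ring
      have h1 : ‖((p:ℤ_[p]))^(k-m-1)‖ = (p:ℝ)^(-((k-m-1:ℕ):ℤ)) := norm_p_pow _
      have h2 : ‖(p:ℤ_[p])^(k-m) * ((p:ℤ_[p])^m - 1) * tail k x‖
          ≤ (p:ℝ)^(-((k-m:ℕ):ℤ)) := by
        rw [mul_assoc, norm_ppow_mul]
        calc (p:ℝ)^(-((k-m:ℕ):ℤ)) * ‖((p:ℤ_[p])^m - 1) * tail k x‖
            ≤ (p:ℝ)^(-((k-m:ℕ):ℤ)) * 1 :=
              mul_le_mul_of_nonneg_left (norm_le_one _) (le_of_lt (ppow_pos _))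
          _ = _ := mul_one _
      rw [← hx', h1] at h2
      have hcast : ((k-m-1:ℕ):ℤ) < ((k-m:ℕ):ℤ) := by
        exact_mod_cast (show k-m-1 < k-m by omega)
      exact not_le_of_gt (ppow_strict (by omega)) h2
  · rintro ⟨i, hi, rfl⟩
    have hilt : i < p^k := lt_of_lt_of_le hi hn
    have ha : toZModPow k ((i:ℤ_[p])) = ((i : ℕ) : ZMod (p^k)) := map_natCast _ i
    have hval : (((i:ℕ) : ZMod (p^k))).val = i := ZMod.val_cast_of_lt hilt
    have hres : resid k ((i:ℤ_[p])) = (i:ℤ_[p]) := by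
      rw [resid, ha, hval]
    have ht : tail k ((i:ℤ_[p])) = 0 := by
      have := tail_spec' k ((i:ℤ_[p]))
      rw [hres, sub_self] at this
      exact (mul_eq_zero.mp this.symm).resolve_left (pInt_pow_ne _)
    rw [fixed_iff (le_of_lt hmlt), ht, mul_zero, cfun, ha, hval, if_pos hi, hres, sub_self]

lemma card_fix_model (hm : 1 ≤ m) (hmlt : m < k) {n : ℕ} (hn : n ≤ p^k) :
    Nat.card {x : ℤ_[p] | model k m (cfun k m n) x = x} = n := by
  rw [Nat.card_coe_set_eq, fix_model hm hmlt hn,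
    Set.ncard_image_of_injective _ Nat.cast_injective, ← Finset.coe_range,
    Set.ncard_coe_finset, Finset.card_range]

end Model

section Final
variable {k m : ℕ}

lemma card_fix_of_conj {a b : {f : ℤ_[p] → ℤ_[p] // IsLocScaling p k m f}}
    (h : TopConjRel p k m a b) :
    Nat.card {x : ℤ_[p] | a.1 x = x} = Nat.card {x : ℤ_[p] | b.1 x = x} := by
  obtain ⟨e, he⟩ := h
  refine (Nat.card_congr (Equiv.subtypeEquiv e.toEquiv (fun x => ?_))).symm
  show b.1 x = x ↔ a.1 (e x) = e x
  constructor
  · intro hx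
    rw [he x, hx]
  · intro hx
    have h2 := he x
    rw [hx] at h2
    exact e.injective h2.symm

noncomputable def inv1 (p k m : ℕ) [Fact p.Prime] : Quot (TopConjRel p k m) → ℕ :=
  Quot.lift (fun s => Nat.card {x : ℤ_[p] | s.1 x = x}) (fun _ _ h => card_fix_of_conj h)

lemma model_close (hmk : m ≤ k) {f : ℤ_[p] → ℤ_[p]} (hf : IsLocScaling p k m f) :
    ∀ x, ‖model k m (fun a => resid (k-m) (f ((a.val : ℤ_[p])))) x - f x‖
      ≤ (p:ℝ)^((m:ℤ)-k) := by
  intro x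
  set c : ZMod (p^k) → ℤ_[p] := fun a => resid (k-m) (f ((a.val : ℤ_[p]))) with hc
  have hdecomp : model k m c x - f x =
      -(f (resid k x) - resid (k-m) (f (resid k x)))
      + (f (resid k x) - f x) + (p:ℤ_[p])^(k-m) * tail k x := by
    rw [model]
    have : c (toZModPow k x) = resid (k-m) (f (resid k x)) := rfl
    rw [this]
    ring
  rw [hdecomp]
  apply norm_triple
  · rw [norm_neg, ← cast_km hmk]
    exact norm_sub_resid (k-m) _
  · have hrx : ‖resid k x - x‖ ≤ (p:ℝ)^(-(k:ℤ)) := by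
      rw [norm_sub_rev]; exact norm_sub_resid k x
    rw [hf _ _ hrx]
    calc (p:ℝ)^m * ‖resid k x - x‖ ≤ (p:ℝ)^m * (p:ℝ)^(-(k:ℤ)) :=
          mul_le_mul_of_nonneg_left hrx (le_of_lt (pow_pos pp m))
      _ = (p:ℝ)^((m:ℤ)-k) := by rw [npow_eq, ppow_mul_ppow, Int.sub_eq_add_neg]
  · rw [norm_ppow_mul, ← cast_km hmk]
    calc (p:ℝ)^(-((k-m:ℕ):ℤ)) * ‖tail k x‖ ≤ (p:ℝ)^(-((k-m:ℕ):ℤ)) * 1 :=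
          mul_le_mul_of_nonneg_left (norm_le_one _) (le_of_lt (ppow_pos _))
      _ = _ := mul_one _

lemma finite_quot (hm : 1 ≤ m) (hmk : m ≤ k) : Finite (Quot (TopConjRel p k m)) := by
  have hsurj : Function.Surjective (fun φ : ZMod (p^k) → ZMod (p^(k-m)) =>
      Quot.mk (TopConjRel p k m)
        ⟨model k m (fun a => (((φ a).val : ℕ) : ℤ_[p])), model_isLocScaling hmk _⟩) := by
    intro q
    induction q using Quot.ind with
    | _ s =>
      refine ⟨fun a => toZModPow (k-m) (s.1 ((a.val : ℤ_[p]))), Quot.sound ?_⟩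
      exact conj_of_close hm hmk (model_isLocScaling hmk _) s.2 (model_close hmk s.2)
  exact Finite.of_surjective _ hsurj

lemma card_ge (hm : 1 ≤ m) (hmlt : m < k) :
    k - m + 2 ≤ Nat.card (Quot (TopConjRel p k m)) := by
  haveI : Finite (Quot (TopConjRel p k m)) := finite_quot hm (le_of_lt hmlt)
  set J : Fin (k - m + 2) → Quot (TopConjRel p k m) := fun i =>
    Quot.mk _ ⟨model k m (cfun k m i.val), model_isLocScaling (le_of_lt hmlt) _⟩ with hJ
  have hbound : ∀ i : Fin (k - m + 2), i.val ≤ p^k := by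
    intro i
    have h1 : i.val < k - m + 2 := i.2
    have h2 : k < 2^k := Nat.lt_two_pow_self
    have h3 : 2^k ≤ p^k := Nat.pow_le_pow_left hp.1.two_le k
    omega
  have hval : ∀ i : Fin (k - m + 2), inv1 p k m (J i) = i.val := fun i =>
    card_fix_model hm hmlt (hbound i)
  have hinj : Function.Injective J := by
    intro i j hij
    apply Fin.ext
    rw [← hval i, ← hval j, hij]
  have := Nat.card_le_card_of_injective J hinj
  rwa [Nat.card_eq_fintype_card, Fintype.card_fin] at this
end Final
end LocScale


open LocScale

/-- The number `C(m,k)` of topological conjugacy classes of `(p^{-k}, p^m)` locally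
scaling maps is finite, satisfies `C(m,k) ≥ k - m + 1`, and equals `k - m + 1` iff
`m = k`. -/
theorem card_conjugacy_classes_locallyScaling (p k m : ℕ) [Fact p.Prime]
    (hm : 1 ≤ m) (hmk : m ≤ k) :
    Finite (Quot (TopConjRel p k m)) ∧
    k - m + 1 ≤ Nat.card (Quot (TopConjRel p k m)) ∧
    (Nat.card (Quot (TopConjRel p k m)) = k - m + 1 ↔ m = k) := by
  haveI hfin : Finite (Quot (TopConjRel p k m)) := finite_quot hm hmk
  rcases eq_or_lt_of_le hmk with rfl | hlt
  · have hone : Nat.card (Quot (TopConjRel p m m)) = 1 := by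
      rw [Nat.card_eq_one_iff_unique]
      constructor
      · constructor
        intro a b
        induction a using Quot.ind with
        | _ s =>
          induction b using Quot.ind with
          | _ t =>
            apply Quot.sound
            apply conj_of_close hm le_rfl s.2 t.2
            intro x
            have h0 : ((m:ℤ) - m) = 0 := sub_self _
            rw [h0, zpow_zero]
            exact PadicInt.norm_le_one _
      · exact ⟨Quot.mk _ ⟨model m m (fun _ => 0), model_isLocScaling le_rfl _⟩⟩
    refine ⟨hfin, ?_, ?_⟩
    · omega
    · constructor
      · intro _; omega
      · intro _; omega
  · have h2 := card_ge (p := p) hm hlt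
    refine ⟨hfin, by omega, ?_⟩
    constructor
    · intro h; omega
    · intro h; omega
end

section
/- For 1 ≤ m < k and 1 ≤ j ≤ k − m, the map T_j : ℤ_p → ℤ_p which deletes the block of m digits in positions j through j+m−1 (i.e., sends digit sequence x_0 x_1 x_2 … to x_0 … x_{j−1} x_{m+j} x_{m+j+1} …) is a (p^{-(m+j)}, p^m) locally scaling map, hence (p^{-k}, p^m) locally scaling, and T_j has exactly p^{m+j} fixed points. -/
/-- The map `T_j` deleting the block of `m` digits in positions `j, …, j+m-1`:
the digit sequence `x_0 x_1 …` is sent to `x_0 … x_{j-1} x_{m+j} x_{m+j+1} …`. -/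
noncomputable def deleteBlock (p : ℕ) [Fact p.Prime] (j m : ℕ) (x : ℤ_[p]) : ℤ_[p] :=
  ∑' i : ℕ,
    ((if i < j then (padicDigit p x i : ℕ) else (padicDigit p x (i + m) : ℕ)) : ℤ_[p])
      * (p : ℤ_[p]) ^ i

open Finset Filter

section Aux

variable {p : ℕ} [hp : Fact p.Prime]

lemma padicDigit_appr_succ (x : ℤ_[p]) (n : ℕ) :
    x.appr (n + 1) = x.appr n + p ^ n * (padicDigit p x n : ℕ) := by
  obtain ⟨c, hc⟩ := PadicInt.dvd_appr_sub_appr x n (n + 1) (Nat.le_succ n)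
  have hab : x.appr n ≤ x.appr (n + 1) := x.appr_mono (Nat.le_succ n)
  have hpn : 0 < p ^ n := pow_pos hp.out.pos n
  have hb : x.appr (n + 1) = x.appr n + p ^ n * c := by omega
  have hclt : c < p := by
    have h1 : x.appr (n + 1) < p ^ (n + 1) := x.appr_lt (n + 1)
    rw [hb, pow_succ] at h1
    by_contra hcp
    push_neg at hcp
    have : p ^ n * p ≤ p ^ n * c := Nat.mul_le_mul_left _ hcp
    omega
  have hd : (padicDigit p x n : ℕ) = c := by
    show x.appr (n + 1) / p ^ n % p = c
    rw [hb, Nat.add_mul_div_left _ _ hpn, Nat.div_eq_of_lt (x.appr_lt n), Nat.zero_add,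
      Nat.mod_eq_of_lt hclt]
  rw [hd]; exact hb

lemma appr_eq_sum_digits (x : ℤ_[p]) (n : ℕ) :
    x.appr n = ∑ i ∈ range n, (padicDigit p x i : ℕ) * p ^ i := by
  induction n with
  | zero => simp [PadicInt.appr]
  | succ n ih =>
      rw [Finset.sum_range_succ, ← ih, padicDigit_appr_succ]
      ring

lemma appr_unique (x : ℤ_[p]) (n a : ℕ) (ha : a < p ^ n)
    (h : x - (a : ℤ_[p]) ∈ Ideal.span {(p : ℤ_[p]) ^ n}) : x.appr n = a := by
  have h2 := PadicInt.appr_spec n x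
  have h3 : ((x.appr n : ℤ_[p]) - (a : ℤ_[p])) ∈ Ideal.span {(p : ℤ_[p]) ^ n} := by
    have := Ideal.sub_mem _ h h2
    simpa using this
  have h5 : (p ^ n : ℤ) ∣ (x.appr n : ℤ) - a := by
    rw [← PadicInt.norm_int_le_pow_iff_dvd]
    rw [show (((x.appr n : ℤ) - a : ℤ) : ℤ_[p]) = (x.appr n : ℤ_[p]) - a by push_cast; ring]
    exact (PadicInt.norm_le_pow_iff_mem_span_pow _ n).mpr h3
  have hlt : x.appr n < p ^ n := x.appr_lt n
  have hlt' : (x.appr n : ℤ) < (p : ℤ) ^ n := by exact_mod_cast hlt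
  have ha' : (a : ℤ) < (p : ℤ) ^ n := by exact_mod_cast ha
  have := Int.eq_zero_of_abs_lt_dvd h5 (by
    rw [abs_sub_lt_iff]
    constructor <;> omega)
  omega

lemma appr_congr {x y : ℤ_[p]} (n : ℕ) (h : ‖x - y‖ ≤ (p : ℝ) ^ (-(n : ℤ))) :
    x.appr n = y.appr n := by
  apply appr_unique
  · exact y.appr_lt n
  · have h1 : x - y ∈ Ideal.span {(p : ℤ_[p]) ^ n} :=
      (PadicInt.norm_le_pow_iff_mem_span_pow _ n).mp h
    have h2 := PadicInt.appr_spec n y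
    have := Ideal.add_mem _ h1 h2
    simpa [sub_add_sub_cancel] using this

lemma appr_mod_pow (x : ℤ_[p]) {a b : ℕ} (h : a ≤ b) :
    x.appr a = x.appr b % p ^ a := by
  obtain ⟨c, hc⟩ := PadicInt.dvd_appr_sub_appr x a b h
  have hab := x.appr_mono h
  have hb : x.appr b = x.appr a + p ^ a * c := by omega
  rw [hb, Nat.add_mul_mod_self_left, Nat.mod_eq_of_lt (x.appr_lt a)]

lemma deleteBlock_eq (j m : ℕ) (x : ℤ_[p]) :
    ∃ z : ℤ_[p], (p : ℤ_[p]) ^ (m + j) * z = x - (x.appr (m + j) : ℤ_[p]) ∧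
      deleteBlock p j m x = (x.appr j : ℤ_[p]) + (p : ℤ_[p]) ^ j * z := by
  obtain ⟨z, hz⟩ := Ideal.mem_span_singleton'.mp (PadicInt.appr_spec (m + j) x)
  refine ⟨z, by rw [mul_comm]; exact hz, ?_⟩
  set f : ℕ → ℤ_[p] := fun i =>
    ((if i < j then (padicDigit p x i : ℕ) else (padicDigit p x (i + m) : ℕ)) : ℤ_[p])
      * (p : ℤ_[p]) ^ i with hf
  have hp1 : (1 : ℝ) < p := by exact_mod_cast hp.out.one_lt
  have hpinv_lt : (p : ℝ)⁻¹ < 1 := inv_lt_one_of_one_lt₀ hp1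
  have hpinv_nonneg : (0 : ℝ) ≤ (p : ℝ)⁻¹ := by positivity
  have hnormf : ∀ i, ‖f i‖ ≤ ((p : ℝ)⁻¹) ^ i := by
    intro i
    rw [hf]
    calc ‖((if i < j then (padicDigit p x i : ℕ) else (padicDigit p x (i + m) : ℕ)) : ℤ_[p])
          * (p : ℤ_[p]) ^ i‖
        = ‖((if i < j then (padicDigit p x i : ℕ) else (padicDigit p x (i + m) : ℕ)) : ℤ_[p])‖
            * ‖(p : ℤ_[p]) ^ i‖ := norm_mul _ _
      _ ≤ 1 * ‖(p : ℤ_[p]) ^ i‖ :=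
          mul_le_mul_of_nonneg_right (PadicInt.norm_le_one _) (norm_nonneg _)
      _ = ((p : ℝ)⁻¹) ^ i := by
          rw [one_mul, norm_pow, PadicInt.norm_p]
  have hsum : Summable f := by
    apply NonarchimedeanAddGroup.summable_of_tendsto_cofinite_zero
    rw [Nat.cofinite_eq_atTop, tendsto_zero_iff_norm_tendsto_zero]
    exact squeeze_zero (fun n => norm_nonneg _) hnormf
      (tendsto_pow_atTop_nhds_zero_of_lt_one hpinv_nonneg hpinv_lt)
  have happr_cast : ∀ s : ℕ, (x.appr s : ℤ_[p]) =
      ∑ i ∈ range s, ((padicDigit p x i : ℕ) : ℤ_[p]) * (p : ℤ_[p]) ^ i := by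
    intro s
    rw [appr_eq_sum_digits x s]
    push_cast
    rfl
  set T : ℤ_[p] := (x.appr j : ℤ_[p]) + (p : ℤ_[p]) ^ j * z with hT
  have hps : ∀ N, j ≤ N → ‖(∑ i ∈ range N, f i) - T‖ ≤ ((p : ℝ)⁻¹) ^ N := by
    intro N hN
    have hsplit : ∑ i ∈ range N, f i = (x.appr j : ℤ_[p]) +
        ∑ i ∈ Ico j N, ((padicDigit p x (i + m) : ℕ) : ℤ_[p]) * (p : ℤ_[p]) ^ i := by
      rw [← Finset.sum_range_add_sum_Ico f hN]
      congr 1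
      · rw [happr_cast j]
        refine Finset.sum_congr rfl fun i hi => ?_
        rw [hf]
        simp only [if_pos (Finset.mem_range.mp hi)]
      · refine Finset.sum_congr rfl fun i hi => ?_
        rw [hf]
        simp only [if_neg (not_lt.mpr (Finset.mem_Ico.mp hi).1)]
    have key : (p : ℤ_[p]) ^ m * ((∑ i ∈ range N, f i) - T) =
        (x.appr (N + m) : ℤ_[p]) - x := by
      have hre : (p : ℤ_[p]) ^ m *
          (∑ i ∈ Ico j N, ((padicDigit p x (i + m) : ℕ) : ℤ_[p]) * (p : ℤ_[p]) ^ i) =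
          ∑ t ∈ Ico (j + m) (N + m), ((padicDigit p x t : ℕ) : ℤ_[p]) * (p : ℤ_[p]) ^ t := by
        rw [← Finset.sum_Ico_add' (fun t => ((padicDigit p x t : ℕ) : ℤ_[p]) * (p : ℤ_[p]) ^ t)
          j N m, Finset.mul_sum]
        refine Finset.sum_congr rfl fun i _ => ?_
        rw [pow_add]
        ring
      have hIco : ∑ t ∈ Ico (j + m) (N + m), ((padicDigit p x t : ℕ) : ℤ_[p]) * (p : ℤ_[p]) ^ t =
          (x.appr (N + m) : ℤ_[p]) - (x.appr (j + m) : ℤ_[p]) := by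
        rw [happr_cast (N + m), happr_cast (j + m)]
        exact Finset.sum_Ico_eq_sub _ (by omega)
      have hz' : (p : ℤ_[p]) ^ m * ((p : ℤ_[p]) ^ j * z) = x - (x.appr (m + j) : ℤ_[p]) := by
        rw [← mul_assoc, ← pow_add]
        rw [mul_comm] at hz
        exact hz
      have hjmc : ((x.appr (j + m) : ℕ) : ℤ_[p]) = ((x.appr (m + j) : ℕ) : ℤ_[p]) := by
        rw [Nat.add_comm]
      rw [hT, hsplit]
      linear_combination hre + hIco - hz' - hjmc
    have hnorm_rhs : ‖(x.appr (N + m) : ℤ_[p]) - x‖ ≤ ((p : ℝ)⁻¹) ^ (N + m) := by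
      rw [norm_sub_rev]
      have := (PadicInt.norm_le_pow_iff_mem_span_pow (x - (x.appr (N + m) : ℤ_[p])) (N + m)).mpr
        (PadicInt.appr_spec (N + m) x)
      calc ‖x - (x.appr (N + m) : ℤ_[p])‖ ≤ (p : ℝ) ^ (-(N + m : ℕ) : ℤ) := this
        _ = ((p : ℝ)⁻¹) ^ (N + m) := by
            rw [zpow_neg, zpow_natCast, inv_pow]
    have hmulnorm : ‖(p : ℤ_[p]) ^ m * ((∑ i ∈ range N, f i) - T)‖ =
        ((p : ℝ)⁻¹) ^ m * ‖(∑ i ∈ range N, f i) - T‖ := by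
      rw [norm_mul, norm_pow, PadicInt.norm_p]
    have hfinal : ((p : ℝ)⁻¹) ^ m * ‖(∑ i ∈ range N, f i) - T‖ ≤
        ((p : ℝ)⁻¹) ^ m * ((p : ℝ)⁻¹) ^ N := by
      rw [← hmulnorm, key]
      calc ‖(x.appr (N + m) : ℤ_[p]) - x‖ ≤ ((p : ℝ)⁻¹) ^ (N + m) := hnorm_rhs
        _ = ((p : ℝ)⁻¹) ^ m * ((p : ℝ)⁻¹) ^ N := by rw [← pow_add, Nat.add_comm]
    have hppos : (0 : ℝ) < ((p : ℝ)⁻¹) ^ m := by positivity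
    exact le_of_mul_le_mul_left hfinal hppos
  have hlim1 : Tendsto (fun N => ∑ i ∈ range N, f i) atTop (nhds T) := by
    rw [tendsto_iff_norm_sub_tendsto_zero]
    apply squeeze_zero' (Eventually.of_forall fun n => norm_nonneg _)
      (eventually_atTop.mpr ⟨j, hps⟩)
      (tendsto_pow_atTop_nhds_zero_of_lt_one hpinv_nonneg hpinv_lt)
  have hlim2 : Tendsto (fun N => ∑ i ∈ range N, f i) atTop (nhds (∑' i, f i)) :=
    hsum.hasSum.tendsto_sum_nat
  have : deleteBlock p j m x = ∑' i, f i := rfl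
  rw [this, tendsto_nhds_unique hlim2 hlim1]

end Aux

/-- For `1 ≤ m < k` and `1 ≤ j ≤ k - m`, the block-deleting map `T_j` is
`(p^{-(m+j)}, p^m)` locally scaling, hence `(p^{-k}, p^m)` locally scaling, and it has
exactly `p^{m+j}` fixed points. -/
theorem deleteBlock_locallyScaling_fixed_points (p k m j : ℕ) [Fact p.Prime]
    (hm : 1 ≤ m) (hmk : m < k) (hj : 1 ≤ j) (hjk : j ≤ k - m) :
    (∀ x y : ℤ_[p], ‖x - y‖ ≤ (p : ℝ) ^ (-((m : ℤ) + j)) →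
      ‖deleteBlock p j m x - deleteBlock p j m y‖ = (p : ℝ) ^ m * ‖x - y‖) ∧
    (∀ x y : ℤ_[p], ‖x - y‖ ≤ (p : ℝ) ^ (-(k : ℤ)) →
      ‖deleteBlock p j m x - deleteBlock p j m y‖ = (p : ℝ) ^ m * ‖x - y‖) ∧
    Nat.card {x : ℤ_[p] // deleteBlock p j m x = x} = p ^ (m + j) := by
  have hp := ‹Fact p.Prime›
  have hp1 : (1 : ℝ) < p := by exact_mod_cast hp.out.one_lt
  have hp0 : (0 : ℝ) < p := lt_trans one_pos hp1
  have hmj_cast : (-((m : ℤ) + j)) = (-((m + j : ℕ) : ℤ)) := by push_cast; ring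
  -- part 1
  have main : ∀ x y : ℤ_[p], ‖x - y‖ ≤ (p : ℝ) ^ (-((m : ℤ) + j)) →
      ‖deleteBlock p j m x - deleteBlock p j m y‖ = (p : ℝ) ^ m * ‖x - y‖ := by
    intro x y h
    obtain ⟨zx, hzx1, hzx2⟩ := deleteBlock_eq j m x
    obtain ⟨zy, hzy1, hzy2⟩ := deleteBlock_eq j m y
    rw [hmj_cast] at h
    have h1 : x.appr (m + j) = y.appr (m + j) := appr_congr _ h
    have h2 : x.appr j = y.appr j := by
      refine appr_congr _ (le_trans h ?_)
      apply zpow_le_zpow_right₀ (le_of_lt hp1)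
      omega
    have hd : deleteBlock p j m x - deleteBlock p j m y = (p : ℤ_[p]) ^ j * (zx - zy) := by
      rw [hzx2, hzy2, h2]
      ring
    have hxy : (p : ℤ_[p]) ^ (m + j) * (zx - zy) = x - y := by
      rw [mul_sub, hzx1, hzy1, h1]
      ring
    have hnz : ‖x - y‖ = ((p : ℝ)⁻¹) ^ (m + j) * ‖zx - zy‖ := by
      rw [← hxy, norm_mul, norm_pow, PadicInt.norm_p]
    rw [hd, norm_mul, norm_pow, PadicInt.norm_p, hnz, pow_add]
    field_simp
    have hpm : (p : ℝ) ^ m * ((p : ℝ)⁻¹) ^ m = 1 := by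
      rw [← mul_pow, mul_inv_cancel₀ hp0.ne', one_pow]
    linear_combination (-‖zx - zy‖) * hpm
  refine ⟨main, fun x y h => main x y (le_trans h ?_), ?_⟩
  · rw [hmj_cast]
    apply zpow_le_zpow_right₀ (le_of_lt hp1)
    omega
  -- fixed points
  · have hpZ : ((p : ℤ_[p])) ≠ 0 := by
      exact_mod_cast Nat.cast_ne_zero.mpr hp.out.ne_zero
    have hfix : ∀ x : ℤ_[p], deleteBlock p j m x = x ↔
        (1 - (p : ℤ_[p]) ^ m) * x = (x.appr (m + j) : ℤ_[p]) - (p : ℤ_[p]) ^ m * (x.appr j : ℤ_[p]) := by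
      intro x
      obtain ⟨z, hz1, hz2⟩ := deleteBlock_eq j m x
      rw [pow_add] at hz1
      constructor
      · intro h
        have eqA : (x.appr j : ℤ_[p]) + (p : ℤ_[p]) ^ j * z = x := by rw [← hz2]; exact h
        linear_combination (-1 : ℤ_[p]) * hz1 + (p : ℤ_[p]) ^ m * eqA
      · intro h
        have hcan : (p : ℤ_[p]) ^ m * ((p : ℤ_[p]) ^ j * z) =
            (p : ℤ_[p]) ^ m * (x - (x.appr j : ℤ_[p])) := by
          linear_combination hz1 + h
        have := mul_left_cancel₀ (pow_ne_zero m hpZ) hcan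
        rw [hz2, this]
        ring
    have hu : IsUnit (1 - (p : ℤ_[p]) ^ m) := by
      rw [PadicInt.isUnit_iff]
      have h1 : ‖(p : ℤ_[p]) ^ m‖ < 1 := by
        rw [norm_pow, PadicInt.norm_p]
        exact pow_lt_one₀ (by positivity) (inv_lt_one_of_one_lt₀ hp1) (by omega)
      have h2 : ‖(1 : ℤ_[p]) - (p : ℤ_[p]) ^ m‖ ≤ 1 := PadicInt.norm_le_one _
      have h3 : (1 : ℝ) ≤ max ‖(1 : ℤ_[p]) - (p : ℤ_[p]) ^ m‖ ‖(p : ℤ_[p]) ^ m‖ := by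
        have := IsUltrametricDist.norm_add_le_max ((1 : ℤ_[p]) - (p : ℤ_[p]) ^ m) ((p : ℤ_[p]) ^ m)
        simpa using this
      rcases le_max_iff.mp h3 with h | h
      · linarith
      · linarith
    set F : {x : ℤ_[p] // deleteBlock p j m x = x} → Fin (p ^ (m + j)) :=
      fun x => ⟨(x : ℤ_[p]).appr (m + j), PadicInt.appr_lt _ _⟩ with hF
    have hinj : Function.Injective F := by
      rintro ⟨x, hx⟩ ⟨y, hy⟩ hFxy
      have h1 : x.appr (m + j) = y.appr (m + j) := by
        have := congrArg Fin.val hFxy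
        simpa [hF] using this
      have h2 : x.appr j = y.appr j := by
        rw [appr_mod_pow x (Nat.le_add_left j m), appr_mod_pow y (Nat.le_add_left j m), h1]
      have ex := (hfix x).mp hx
      have ey := (hfix y).mp hy
      have heq : (1 - (p : ℤ_[p]) ^ m) * x = (1 - (p : ℤ_[p]) ^ m) * y := by
        rw [ex, ey, h1, h2]
      exact Subtype.ext (mul_left_cancel₀ hu.ne_zero heq)
    have hsurj : Function.Surjective F := by
      intro c
      obtain ⟨v, hv⟩ := hu
      set n : ℕ := (c : ℕ) with hn
      set x : ℤ_[p] := (↑v⁻¹ : ℤ_[p]) *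
        ((n : ℤ_[p]) - (p : ℤ_[p]) ^ m * ((n % p ^ j : ℕ) : ℤ_[p])) with hxdef
      have hvx : (1 - (p : ℤ_[p]) ^ m) * x =
          (n : ℤ_[p]) - (p : ℤ_[p]) ^ m * ((n % p ^ j : ℕ) : ℤ_[p]) := by
        rw [hxdef, ← hv, ← mul_assoc, Units.mul_inv, one_mul]
      have hnd : (n : ℤ_[p]) - ((n % p ^ j : ℕ) : ℤ_[p]) =
          (p : ℤ_[p]) ^ j * ((n / p ^ j : ℕ) : ℤ_[p]) := by
        have h0 : p ^ j * (n / p ^ j) + n % p ^ j = n := Nat.div_add_mod n (p ^ j)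
        have : (n : ℤ_[p]) = ((p ^ j * (n / p ^ j) + n % p ^ j : ℕ) : ℤ_[p]) := by rw [h0]
        rw [this]
        push_cast
        ring
      have hxn : x - (n : ℤ_[p]) ∈ Ideal.span {(p : ℤ_[p]) ^ (m + j)} := by
        rw [Ideal.mem_span_singleton']
        refine ⟨(↑v⁻¹ : ℤ_[p]) * ((n / p ^ j : ℕ) : ℤ_[p]), ?_⟩
        have hkey : (1 - (p : ℤ_[p]) ^ m) * (x - (n : ℤ_[p])) =
            (p : ℤ_[p]) ^ (m + j) * ((n / p ^ j : ℕ) : ℤ_[p]) := by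
          rw [pow_add]
          linear_combination hvx + (p : ℤ_[p]) ^ m * hnd
        calc (↑v⁻¹ : ℤ_[p]) * ((n / p ^ j : ℕ) : ℤ_[p]) * (p : ℤ_[p]) ^ (m + j)
            = (↑v⁻¹ : ℤ_[p]) * ((1 - (p : ℤ_[p]) ^ m) * (x - (n : ℤ_[p]))) := by
              rw [hkey]; ring
          _ = x - (n : ℤ_[p]) := by rw [← hv, ← mul_assoc, Units.inv_mul, one_mul]
      have ha1 : x.appr (m + j) = n := appr_unique x (m + j) n c.isLt hxn
      have ha2 : x.appr j = n % p ^ j := by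
        apply appr_unique
        · exact Nat.mod_lt _ (pow_pos hp.out.pos j)
        · have hs1 : x - (n : ℤ_[p]) ∈ Ideal.span {(p : ℤ_[p]) ^ j} :=
            Ideal.span_singleton_le_span_singleton.mpr
              (pow_dvd_pow _ (Nat.le_add_left j m)) hxn
          have hs2 : (n : ℤ_[p]) - ((n % p ^ j : ℕ) : ℤ_[p]) ∈ Ideal.span {(p : ℤ_[p]) ^ j} := by
            rw [Ideal.mem_span_singleton']
            exact ⟨((n / p ^ j : ℕ) : ℤ_[p]), by rw [hnd]; ring⟩
          have := Ideal.add_mem _ hs1 hs2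
          simpa [sub_add_sub_cancel] using this
      have hxfix : deleteBlock p j m x = x := by
        rw [hfix x, ha1, ha2]
        exact hvx
      exact ⟨⟨x, hxfix⟩, by rw [hF]; exact Fin.ext ha1⟩
    rw [Nat.card_eq_of_bijective F ⟨hinj, hsurj⟩, Nat.card_eq_fintype_card, Fintype.card_fin]
end

section
/- Let f(z) = az with ‖a‖_p = p^k, k ≥ 1, on ℚ_p, and let g = f + ψ where ψ : ℚ_p → ℚ_p is δ-Lipschitz with 0 < δ < ‖a‖_p − ‖a‖_p/p and ‖ψ‖_∞ < δ. Then g is a homeomorphism of ℚ_p and satisfies ‖g(x) − g(y)‖_p = ‖a‖_p · ‖x − y‖_p for all x, y ∈ ℚ_p. -/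
/-- If `f z = a z` with `‖a‖ = p^k` (`k ≥ 1`) on `ℚ_p` and `g = f + ψ` where `ψ` is
`δ`-Lipschitz with `0 < δ < ‖a‖ - ‖a‖/p` and `‖ψ‖_∞ < δ`, then `g` is a homeomorphism
(a bijection) satisfying `‖g x - g y‖ = ‖a‖ ‖x - y‖` for all `x, y`. -/
theorem perturbed_dilation_scaling (p : ℕ) [Fact p.Prime]
    (a : ℚ_[p]) (k : ℕ) (hk : 1 ≤ k) (ha : ‖a‖ = (p : ℝ) ^ k)
    (ψ : ℚ_[p] → ℚ_[p]) (δ : NNReal) (hδ0 : 0 < (δ : ℝ))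
    (hδ : (δ : ℝ) < ‖a‖ - ‖a‖ / p) (hψ : LipschitzWith δ ψ)
    (hb : ∀ z : ℚ_[p], ‖ψ z‖ < δ) :
    Function.Bijective (fun z : ℚ_[p] => a * z + ψ z) ∧
    ∀ x y : ℚ_[p], ‖(a * x + ψ x) - (a * y + ψ y)‖ = ‖a‖ * ‖x - y‖ := by
  have hp : (0:ℝ) < p := by exact_mod_cast (Fact.out : p.Prime).pos
  have ha_pos : (0:ℝ) < ‖a‖ := by rw [ha]; positivity
  have ha0 : a ≠ 0 := by simpa [norm_pos_iff] using ha_pos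
  have hδa : (δ:ℝ) < ‖a‖ := by
    have : (0:ℝ) ≤ ‖a‖ / p := by positivity
    linarith
  have key : ∀ x y : ℚ_[p], ‖(a * x + ψ x) - (a * y + ψ y)‖ = ‖a‖ * ‖x - y‖ := by
    intro x y
    by_cases hxy : x = y
    · simp [hxy]
    have hne : (0:ℝ) < ‖x - y‖ := by
      simpa [norm_pos_iff, sub_ne_zero] using hxy
    have h1 : ‖ψ x - ψ y‖ ≤ (δ:ℝ) * ‖x - y‖ := by
      simpa [dist_eq_norm] using hψ.dist_le_mul x y
    have h2 : ‖ψ x - ψ y‖ < ‖a * (x - y)‖ := by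
      rw [norm_mul]
      calc ‖ψ x - ψ y‖ ≤ (δ:ℝ) * ‖x - y‖ := h1
        _ < ‖a‖ * ‖x - y‖ := by exact mul_lt_mul_of_pos_right hδa hne
    have heq : (a * x + ψ x) - (a * y + ψ y) = a * (x - y) + (ψ x - ψ y) := by ring
    rw [heq, Padic.add_eq_max_of_ne (ne_of_gt h2),
      max_eq_left (le_of_lt h2), norm_mul]
  refine ⟨⟨?_, ?_⟩, key⟩
  · intro x y hxy
    have h := key x y
    simp only at hxy
    rw [hxy, sub_self, norm_zero] at h
    have : ‖x - y‖ = 0 := by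
      rcases mul_eq_zero.1 h.symm with h' | h'
      · exact absurd h' (ne_of_gt ha_pos)
      · exact h'
    rwa [norm_eq_zero, sub_eq_zero] at this
  · intro z
    set F : ℚ_[p] → ℚ_[p] := fun x => (z - ψ x) / a with hF
    set K : NNReal := δ * ‖a‖₊⁻¹ with hKdef
    have hKc : (K:ℝ) = (δ:ℝ) * ‖a‖⁻¹ := by
      simp [hKdef, NNReal.coe_mul, coe_nnnorm]
    have hK1 : K < 1 := by
      rw [← NNReal.coe_lt_one, hKc]
      rw [← div_eq_mul_inv, div_lt_one ha_pos]
      exact hδa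
    have hLip : LipschitzWith K F := by
      apply LipschitzWith.of_dist_le_mul
      intro x y
      have hre : F x - F y = (ψ y - ψ x) / a := by
        simp only [hF]
        field_simp
        ring
      rw [dist_eq_norm, dist_eq_norm, hre, norm_div, hKc, div_eq_mul_inv]
      have h1 : ‖ψ y - ψ x‖ ≤ (δ:ℝ) * ‖x - y‖ := by
        simpa [dist_eq_norm, norm_sub_rev] using hψ.dist_le_mul y x
      have hinv : (0:ℝ) ≤ ‖a‖⁻¹ := by positivity
      calc ‖ψ y - ψ x‖ * ‖a‖⁻¹ ≤ ((δ:ℝ) * ‖x - y‖) * ‖a‖⁻¹ :=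
            mul_le_mul_of_nonneg_right h1 hinv
        _ = (δ:ℝ) * ‖a‖⁻¹ * ‖x - y‖ := by ring
    have hC : ContractingWith K F := ⟨hK1, hLip⟩
    obtain ⟨x, hx⟩ := hC.exists_fixedPoint 0 (by
      simp [edist_ne_top])
    obtain ⟨hfix, -⟩ := hx
    refine ⟨x, ?_⟩
    have : (z - ψ x) / a = x := hfix
    have h2 : z - ψ x = a * x := by
      field_simp at this
      linear_combination this
    simp only
    linear_combination -h2
end

section
/- Let g : ℚ_p → ℚ_p be a map satisfying ‖g(x) − g(y)‖_p = p‖x − y‖_p for all x, y ∈ ℚ_p. Then g^{−1} is a contraction with a unique fixed point z*, and for every x ∈ ℚ_p, g^{−n}(x) → z* as n → ∞; moreover, if ‖g − f‖_∞ < 1 where f(z) = z/p, then the digits of z* in positions ≤ 0 are all zero, i.e. z*_i = 0 for all i ≤ 0. -/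
open Filter

/-- If `g : ℚ_p → ℚ_p` is a bijection with `‖g x - g y‖ = p ‖x - y‖`, then `g⁻¹` is a
contraction with a unique fixed point `z*`, the backward iterates of every point converge
to `z*`, and if `‖g - f‖_∞ < 1` where `f z = z/p`, then the digits of `z*` in positions
`≤ 0` all vanish, i.e. `‖z*‖ < 1`. -/
theorem expanding_map_backward_fixed_point (p : ℕ) [Fact p.Prime]
    (g : ℚ_[p] → ℚ_[p]) (hbij : Function.Bijective g)
    (hg : ∀ x y : ℚ_[p], ‖g x - g y‖ = (p : ℝ) * ‖x - y‖) :
    ∃ z : ℚ_[p], g z = z ∧ (∀ w : ℚ_[p], g w = w → w = z) ∧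
      (∀ x y : ℚ_[p],
        ‖Function.invFun g x - Function.invFun g y‖ ≤ (p : ℝ)⁻¹ * ‖x - y‖) ∧
      (∀ x : ℚ_[p],
        Tendsto (fun n : ℕ => (Function.invFun g)^[n] x) atTop (nhds z)) ∧
      ((∀ x : ℚ_[p], ‖g x - x / (p : ℚ_[p])‖ < 1) → ‖z‖ < 1) := by
  have hp : (1:ℝ) < p := by exact_mod_cast (Fact.out : p.Prime).one_lt
  have hp0 : (0:ℝ) < p := lt_trans one_pos hp
  set h := Function.invFun g with hh
  have hright : ∀ x, g (h x) = x := fun x =>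
    Function.rightInverse_invFun hbij.2 x
  have hleft : ∀ x, h (g x) = x := fun x =>
    Function.leftInverse_invFun hbij.1 x
  have hinv : ∀ x y : ℚ_[p], ‖h x - h y‖ = (p : ℝ)⁻¹ * ‖x - y‖ := by
    intro x y
    have := hg (h x) (h y)
    rw [hright, hright] at this
    rw [this]; field_simp
  have hK : (⟨(p:ℝ)⁻¹, by positivity⟩ : NNReal) < 1 := by
    refine NNReal.coe_lt_coe.mp (show ((p:ℝ)⁻¹) < ((1:NNReal):ℝ) from ?_)
    push_cast
    rw [inv_lt_one_iff₀]; right; exact hp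
  have hlip : LipschitzWith ⟨(p:ℝ)⁻¹, by positivity⟩ h := by
    apply LipschitzWith.of_dist_le_mul
    intro x y
    rw [dist_eq_norm, dist_eq_norm, hinv] <;> exact le_rfl
  have hc : ContractingWith ⟨(p:ℝ)⁻¹, by positivity⟩ h := ⟨hK, hlip⟩
  set z := hc.fixedPoint h with hz
  have hfix : h z = z := hc.fixedPoint_isFixedPt
  refine ⟨z, ?_, ?_, ?_, ?_, ?_⟩
  · conv_lhs => rw [← hfix]
    rw [hright]
  · intro w hw
    have : h w = w := by conv_lhs => rw [← hw, hleft]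
    exact hc.fixedPoint_unique this
  · intro x y; rw [hinv]
  · exact hc.tendsto_iterate_fixedPoint
  · intro hclose
    have hgz : g z = z := by conv_lhs => rw [← hfix]; rw [hright]
    have h1 : ‖z - z / (p:ℚ_[p])‖ < 1 := by
      have := hclose z; rwa [hgz] at this
    by_contra hge
    push_neg at hge
    have hzp : ‖z / (p:ℚ_[p])‖ = p * ‖z‖ := by
      rw [norm_div, Padic.norm_p]
      field_simp
    have : ‖z / (p:ℚ_[p])‖ ≤ max ‖z - z / (p:ℚ_[p])‖ ‖z‖ := by
      have h4 : z / (p:ℚ_[p]) = -(z - z / (p:ℚ_[p])) + z := by ring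
      conv_lhs => rw [h4]
      refine le_trans (Padic.nonarchimedean _ _) ?_
      rw [norm_neg]
    rw [hzp] at this
    have hmax : max ‖z - z / (p:ℚ_[p])‖ ‖z‖ = ‖z‖ :=
      max_eq_right (le_trans h1.le hge)
    rw [hmax] at this
    nlinarith
end

section
/- Let f : ℚ_p → ℚ_p be a homeomorphism which is a dilatation, i.e., ‖f(x) − f(y)‖_p ≥ p^k ‖x − y‖_p for all x, y with some integer k ≥ 1. Then f has the two-sided shadowing property: for every ε > 0, every sequence (x_n)_{n∈ℤ} with ‖f(x_n) − x_{n+1}‖_p ≤ ε for all n ∈ ℤ is ε-shadowed by a real orbit of f. -/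
open Filter Topology

/-- A dilatation homeomorphism `f` of `ℚ_p` (`‖f x - f y‖ ≥ p^k ‖x - y‖`, `k ≥ 1`) has
the two-sided shadowing property. -/
theorem dilation_two_sided_shadowing (p k : ℕ) [Fact p.Prime] (hk : 1 ≤ k)
    (f : Equiv.Perm ℚ_[p]) (hfc : Continuous f) (hfc' : Continuous f.symm)
    (hdil : ∀ x y : ℚ_[p], (p : ℝ) ^ k * ‖x - y‖ ≤ ‖f x - f y‖) :
    ∀ ε : ℝ, 0 < ε → ∀ x : ℤ → ℚ_[p],
      (∀ n : ℤ, ‖f (x n) - x (n + 1)‖ ≤ ε) →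
      ∃ y : ℚ_[p], ∀ n : ℤ, ‖x n - (f ^ n) y‖ ≤ ε := by
  intro ε hε x hx
  set G : ℚ_[p] → ℚ_[p] := ⇑f.symm with hGdef
  have hp2 : (2:ℝ) ≤ (p:ℝ) := by exact_mod_cast (Fact.out : p.Prime).two_le
  set r : ℝ := ((p:ℝ)^k)⁻¹ with hrdef
  have hpk : (2:ℝ) ≤ (p:ℝ)^k := le_trans hp2 (le_self_pow₀ (by linarith) (by omega))
  have hr0 : 0 < r := by positivity
  have hr1 : r ≤ 1/2 := by
    rw [hrdef]
    rw [inv_le_comm₀ (by linarith) (by norm_num)]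
    linarith
  have hrlt : r < 1 := by linarith
  have hr1' : r ≤ 1 := by linarith
  -- contraction of G
  have hG : ∀ a b, ‖G a - G b‖ ≤ r * ‖a - b‖ := by
    intro a b
    have h := hdil (G a) (G b)
    rw [show f (G a) = a from f.apply_symm_apply a,
        show f (G b) = b from f.apply_symm_apply b] at h
    rw [hrdef, inv_mul_eq_div, le_div_iff₀ (by linarith), mul_comm]
    exact h
  have hGit : ∀ (j : ℕ) (a b : ℚ_[p]), ‖G^[j] a - G^[j] b‖ ≤ r^j * ‖a - b‖ := by
    intro j
    induction j with
    | zero => intro a b; simp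
    | succ j ih =>
      intro a b
      rw [Function.iterate_succ_apply, Function.iterate_succ_apply]
      calc ‖G^[j] (G a) - G^[j] (G b)‖ ≤ r^j * ‖G a - G b‖ := ih _ _
        _ ≤ r^j * (r * ‖a - b‖) := by
            exact mul_le_mul_of_nonneg_left (hG a b) (by positivity)
        _ = r^(j+1) * ‖a - b‖ := by ring
  -- the Cauchy sequence
  set ys : ℕ → ℚ_[p] := fun m => G^[m] (x m) with hysdef
  have hstep : ∀ (m : ℕ), ys m = G^[m+1] (f (x m)) := by
    intro m
    rw [Function.iterate_succ_apply, show G (f (x m)) = x m from f.symm_apply_apply _]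
  have hdiff : ∀ m : ℕ, dist (ys m) (ys (m+1)) ≤ ε * r ^ m := by
    intro m
    rw [dist_eq_norm, hstep m]
    calc ‖G^[m+1] (f (x m)) - G^[m+1] (x (m+1))‖
        ≤ r^(m+1) * ‖f (x m) - x ((m:ℤ)+1)‖ := by
          have := hGit (m+1) (f (x m)) (x ((m:ℤ)+1))
          simpa using this
      _ ≤ r^(m+1) * ε := mul_le_mul_of_nonneg_left (hx m) (by positivity)
      _ ≤ ε * r^m := by
          have : r^(m+1) ≤ r^m := pow_le_pow_of_le_one (le_of_lt hr0) hr1' (by omega)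
          nlinarith [pow_nonneg (le_of_lt hr0) m]
  have hc : CauchySeq ys := cauchySeq_of_le_geometric r ε hrlt hdiff
  obtain ⟨y, hy⟩ := cauchySeq_tendsto_of_complete hc
  refine ⟨y, fun n => ?_⟩
  -- the auxiliary sequence
  set b : ℕ → ℚ_[p] := fun j => G^[j] (x (n + j)) with hbdef
  have hb : ∀ j : ℕ, ‖x n - b j‖ ≤ ε := by
    intro j
    induction j with
    | zero => simpa [hbdef] using le_of_lt hε
    | succ j ih =>
      have hbj : b j = G^[j+1] (f (x (n + j))) := by
        rw [hbdef]
        rw [Function.iterate_succ_apply, show G (f (x (n+j))) = x (n+j) from f.symm_apply_apply _]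
      have hbj' : b (j+1) = G^[j+1] (x (n + j + 1)) := by
        rw [hbdef]
        norm_num
        congr 2
        push_cast; ring
      have h2 : ‖b j - b (j+1)‖ ≤ ε := by
        rw [hbj, hbj']
        calc ‖G^[j+1] (f (x (n + j))) - G^[j+1] (x (n + j + 1))‖
            ≤ r^(j+1) * ‖f (x (n + j)) - x (n + j + 1)‖ := by
              have := hGit (j+1) (f (x (n+j))) (x (n+j+1))
              simpa [hbdef, show (n : ℤ) + (j+1 : ℕ) = n + j + 1 by push_cast; ring] using this
          _ ≤ r^(j+1) * ε := mul_le_mul_of_nonneg_left (hx (n+j)) (by positivity)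
          _ ≤ ε := by
              nlinarith [pow_le_one₀ (le_of_lt hr0) hr1' (n := j+1)]
      calc ‖x n - b (j+1)‖ = ‖(x n - b j) + (b j - b (j+1))‖ := by ring_nf
        _ ≤ max ‖x n - b j‖ ‖b j - b (j+1)‖ := Padic.nonarchimedean _ _
        _ ≤ ε := max_le ih h2
  -- continuity of f ^ n
  have hcont : ∀ m : ℤ, Continuous ⇑(f ^ m) := by
    intro m
    obtain ⟨m, rfl | rfl⟩ := Int.eq_nat_or_neg m
    · rw [zpow_natCast, Equiv.Perm.coe_pow]
      exact Continuous.iterate hfc m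
    · rw [zpow_neg, zpow_natCast, ← inv_pow, Equiv.Perm.coe_pow, Equiv.Perm.inv_def]
      exact Continuous.iterate hfc' m
  -- b tends to (f ^ n) y
  have htoNat : Tendsto (fun j : ℕ => (n + j).toNat) atTop atTop := by
    apply tendsto_atTop.mpr
    intro N
    filter_upwards [eventually_ge_atTop ((N : ℤ) - n).toNat] with j hj
    omega
  have hbl : Tendsto b atTop (𝓝 ((f ^ n) y)) := by
    have h1 : Tendsto (fun j : ℕ => (f ^ n) (ys ((n + j).toNat))) atTop (𝓝 ((f ^ n) y)) :=
      ((hcont n).tendsto y).comp (hy.comp htoNat)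
    apply h1.congr'
    filter_upwards [eventually_ge_atTop (-n).toNat] with j hj
    have hnj : (0:ℤ) ≤ n + j := by omega
    set m : ℕ := (n + j).toNat with hm
    have hmz : (m : ℤ) = n + j := Int.toNat_of_nonneg hnj
    have hperm : (f ^ n) * (f⁻¹) ^ m = (f⁻¹) ^ j := by
      rw [← zpow_natCast f⁻¹ m, ← zpow_natCast f⁻¹ j, inv_zpow, inv_zpow, ← zpow_neg, ← zpow_neg,
        ← zpow_add, hmz]
      ring_nf
    have hcoe : ∀ jj : ℕ, ⇑(f⁻¹ ^ jj) = G^[jj] := fun jj => by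
      rw [Equiv.Perm.coe_pow]; rfl
    calc (f ^ n) (ys m) = (f ^ n * f⁻¹ ^ m) (x m) := by
          rw [Equiv.Perm.mul_apply, hcoe]
      _ = (f⁻¹ ^ j) (x (n + j)) := by rw [hperm, hmz]
      _ = b j := by rw [hcoe]
  have hfin : Tendsto (fun j => ‖x n - b j‖) atTop (𝓝 ‖x n - (f ^ n) y‖) :=
    ((tendsto_const_nhds.sub hbl).norm)
  exact le_of_tendsto hfin (Eventually.of_forall hb)
end

section
/- Let f : ℚ_p → ℚ_p be a dilatation homeomorphism (‖f(x) − f(y)‖_p ≥ p^k‖x − y‖_p for some k ≥ 1) and let g = f + ψ with ψ bounded and δ-Lipschitz, 0 < δ < p^k − p^{k−1}, ‖ψ‖_∞ < δ. Then g is also a dilatation homeomorphism: it is bijective and ‖g(x) − g(y)‖_p ≥ p^k‖x − y‖_p for all x, y ∈ ℚ_p. -/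
/-- If `f` is a dilatation homeomorphism of `ℚ_p` (`‖f x - f y‖ ≥ p^k ‖x - y‖`, `k ≥ 1`)
and `g = f + ψ` with `ψ` bounded (`‖ψ‖_∞ < δ`) and `δ`-Lipschitz where
`0 < δ < p^k - p^{k-1}`, then `g` is also a dilatation homeomorphism: it is bijective and
`‖g x - g y‖ ≥ p^k ‖x - y‖`. -/
theorem perturbed_dilation_homeomorphism (p k : ℕ) [Fact p.Prime] (hk : 1 ≤ k)
    (f : ℚ_[p] → ℚ_[p]) (hbij : Function.Bijective f) (hfc : Continuous f)
    (hdil : ∀ x y : ℚ_[p], (p : ℝ) ^ k * ‖x - y‖ ≤ ‖f x - f y‖)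
    (ψ : ℚ_[p] → ℚ_[p]) (δ : NNReal) (hδ0 : 0 < (δ : ℝ))
    (hδ : (δ : ℝ) < (p : ℝ) ^ k - (p : ℝ) ^ (k - 1))
    (hψ : LipschitzWith δ ψ) (hb : ∀ z : ℚ_[p], ‖ψ z‖ < δ) :
    Function.Bijective (fun z : ℚ_[p] => f z + ψ z) ∧
    ∀ x y : ℚ_[p], (p : ℝ) ^ k * ‖x - y‖ ≤ ‖(f x + ψ x) - (f y + ψ y)‖ := by
  have hp1 : (1 : ℝ) < p := by exact_mod_cast (Fact.out : p.Prime).one_lt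
  have hpk_pos : (0 : ℝ) < (p : ℝ) ^ k := by positivity
  have hδpk : (δ : ℝ) < (p : ℝ) ^ k := by
    have : (0 : ℝ) < (p : ℝ) ^ (k - 1) := by positivity
    linarith
  -- key: dilation estimate for g
  have hgdil : ∀ x y : ℚ_[p], (p : ℝ) ^ k * ‖x - y‖ ≤ ‖(f x + ψ x) - (f y + ψ y)‖ := by
    intro x y
    rcases eq_or_ne x y with rfl | hxy
    · simp
    have hxy0 : (0 : ℝ) < ‖x - y‖ := by
      rw [norm_pos_iff]; exact sub_ne_zero_of_ne hxy
    have h1 : ‖ψ x - ψ y‖ ≤ (δ : ℝ) * ‖x - y‖ := by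
      have := hψ.dist_le_mul x y
      rwa [dist_eq_norm, dist_eq_norm] at this
    have hψlt : ‖ψ x - ψ y‖ < ‖f x - f y‖ :=
      lt_of_le_of_lt h1 (lt_of_lt_of_le (mul_lt_mul_of_pos_right hδpk hxy0) (hdil x y))
    have heq : ‖(f x + ψ x) - (f y + ψ y)‖ = ‖f x - f y‖ := by
      have : (f x + ψ x) - (f y + ψ y) = (f x - f y) + (ψ x - ψ y) := by ring
      rw [this, Padic.add_eq_max_of_ne (by exact fun h => absurd h (ne_of_gt hψlt)),
        max_eq_left hψlt.le]
    rw [heq]; exact hdil x y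
  refine ⟨⟨?_, ?_⟩, hgdil⟩
  · intro x y hxy
    simp only at hxy
    have h := hgdil x y
    rw [hxy, sub_self, norm_zero] at h
    have h0 : ‖x - y‖ = 0 := le_antisymm (by nlinarith [norm_nonneg (x - y)]) (norm_nonneg _)
    exact sub_eq_zero.mp (norm_eq_zero.mp h0)
  · -- surjectivity via Banach fixed point
    intro z
    set e := Equiv.ofBijective f hbij with he
    have hFinv : ∀ a b : ℚ_[p], ‖e.symm a - e.symm b‖ ≤ ‖a - b‖ / (p : ℝ) ^ k := by
      intro a b
      rw [le_div_iff₀ hpk_pos, mul_comm]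
      calc (p : ℝ) ^ k * ‖e.symm a - e.symm b‖ ≤ ‖f (e.symm a) - f (e.symm b)‖ :=
            hdil (e.symm a) (e.symm b)
        _ = ‖a - b‖ := by
            have ha : f (e.symm a) = a := e.apply_symm_apply a
            have hb' : f (e.symm b) = b := e.apply_symm_apply b
            rw [ha, hb']
    set K : NNReal := δ * ((p : NNReal) ^ k)⁻¹ with hKdef
    have hKcoe : (K : ℝ) = (δ : ℝ) / (p : ℝ) ^ k := by
      rw [hKdef]; push_cast; rw [div_eq_mul_inv]
    set s : ℚ_[p] → ℚ_[p] := fun x => e.symm (z - ψ x) with hs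
    have hlip : LipschitzWith K s := by
      apply LipschitzWith.of_dist_le_mul
      intro x y
      rw [dist_eq_norm, dist_eq_norm, hKcoe]
      calc ‖s x - s y‖ ≤ ‖(z - ψ x) - (z - ψ y)‖ / (p : ℝ) ^ k := hFinv _ _
        _ = ‖ψ x - ψ y‖ / (p : ℝ) ^ k := by rw [show (z - ψ x) - (z - ψ y) = -(ψ x - ψ y) by ring, norm_neg]
        _ ≤ (δ : ℝ) * ‖x - y‖ / (p : ℝ) ^ k := by
            apply div_le_div_of_nonneg_right ?_ hpk_pos.le |>.trans_eq rfl
            have := hψ.dist_le_mul x y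
            rwa [dist_eq_norm, dist_eq_norm] at this
        _ = (δ : ℝ) / (p : ℝ) ^ k * ‖x - y‖ := by ring
    have hK1 : K < 1 := by
      rw [← NNReal.coe_lt_one, hKcoe, div_lt_one hpk_pos]
      exact hδpk
    have hc : ContractingWith K s := ⟨hK1, hlip⟩
    have hfix := hc.fixedPoint_isFixedPt
    set x := ContractingWith.fixedPoint s hc with hx
    refine ⟨x, ?_⟩
    have hsx : e.symm (z - ψ x) = x := hfix
    have : f x = z - ψ x := by
      have := congrArg e hsx
      rw [e.apply_symm_apply] at this
      exact this.symm
    simp only [this]; ring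
end
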